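/- arXiv:2406.03076 — 5 statements merged into one kernel-verified Lean document; each statement's English description precedes it below -/
import Mathlib

section
/- Let φ ∈ Φ² satisfy the SND condition. Then there is a constant C, depending only on n, λ and finitely many of the seminorm constants B_{N,M} of φ, such that for every unit vector ξ ∈ S^{n−1}, every measurable set E ⊂ ℝ^n and every nonnegative measurable function g on ℝ^n, ∫_{{x : ∇_ξφ(x,ξ) ∈ E}} g(∇_ξφ(x,ξ)) dx ≤ C ∫_E g(y) dy. -/
set_option maxHeartbeats 1000000


open MeasureTheory Complex Real Set
open scoped ENNReal RealInnerProductSpace NNReal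

noncomputable section

abbrev En (n : ℕ) := EuclideanSpace ℝ (Fin n)

/-- `|∇_ξ^N ∇_x^M a(x,ξ)|` : norm of the mixed iterated derivatives. -/
def mixedDerivNorm {n : ℕ} {F : Type*} [NormedAddCommGroup F] [NormedSpace ℝ F]
    (a : En n → En n → F) (N M : ℕ) (x ξ : En n) : ℝ :=
  ‖iteratedFDeriv ℝ M (fun y => iteratedFDeriv ℝ N (fun η => a y η) ξ) x‖

/-- Hörmander class `S^m_{ρ,δ}` with seminorm constants `A`. -/
def HormanderClass {n : ℕ} (m ρ δ : ℝ) (a : En n → En n → ℂ) (A : ℕ → ℕ → ℝ) : Prop :=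
  ContDiff ℝ (⊤ : ℕ∞) (Function.uncurry a) ∧
  ∀ N M : ℕ, ∀ x ξ : En n,
    mixedDerivNorm a N M x ξ ≤ A N M * (1 + ‖ξ‖) ^ (m - ρ * N + δ * M)

/-- Rough Hörmander class `L^∞ S^m_ρ` with seminorm constants `A`. -/
def RoughHormander {n : ℕ} (m ρ : ℝ) (a : En n → En n → ℂ) (A : ℕ → ℝ) : Prop :=
  (∀ ξ : En n, Measurable fun x => a x ξ) ∧
  (∀ x : En n, ContDiff ℝ (⊤ : ℕ∞) (a x)) ∧
  ∀ N : ℕ, ∀ x ξ : En n,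
    ‖iteratedFDeriv ℝ N (a x) ξ‖ ≤ A N * (1 + ‖ξ‖) ^ (m - ρ * N)

/-- The phase class `Φ²` with seminorm constants `B`. -/
def PhiTwo {n : ℕ} (φ : En n → En n → ℝ) (B : ℕ → ℕ → ℝ) : Prop :=
  (∀ (x ξ : En n) (t : ℝ), 0 < t → φ x (t • ξ) = t * φ x ξ) ∧
  ContDiffOn ℝ (⊤ : ℕ∞) (Function.uncurry φ) {q : En n × En n | q.2 ≠ 0} ∧
  ∀ N M : ℕ, 2 ≤ N + M → ∀ (x ξ : En n), ξ ≠ 0 →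
    mixedDerivNorm φ N M x ξ ≤ B N M * ‖ξ‖ ^ (1 - (N : ℝ))

/-- `∇_ξ φ(x, ξ)`, the gradient in the frequency variable. -/
def gradXi {n : ℕ} (φ : En n → En n → ℝ) (x ξ : En n) : En n :=
  gradient (fun η => φ x η) ξ

/-- The mixed Hessian matrix `(∂²φ/∂x_j∂ξ_k)`. -/
def sndMatrix {n : ℕ} (φ : En n → En n → ℝ) (x ξ : En n) : Matrix (Fin n) (Fin n) ℝ :=
  Matrix.of fun j k =>
    fderiv ℝ (fun y => fderiv ℝ (fun η => φ y η) ξ (EuclideanSpace.single k 1)) x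
      (EuclideanSpace.single j 1)

/-- The strong non-degeneracy condition with constant `lam`. -/
def SNDCondition {n : ℕ} (φ : En n → En n → ℝ) (lam : ℝ) : Prop :=
  0 < lam ∧ ∀ (x ξ : En n), ξ ≠ 0 → lam ≤ (sndMatrix φ x ξ).det

/-- The Fourier transform `f̂(ξ) = ∫ e^{-i y·ξ} f(y) dy`. -/
def ftrans {n : ℕ} (f : En n → ℂ) (ξ : En n) : ℂ :=
  ∫ y : En n, Complex.exp (-(Complex.I * (⟪y, ξ⟫ : ℂ))) * f y

/-- The Fourier integral operator `T_{φ,a}`. -/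
def FIO {n : ℕ} (φ : En n → En n → ℝ) (a : En n → En n → ℂ) (f : En n → ℂ) (x : En n) : ℂ :=
  ∫ ξ : En n, Complex.exp (Complex.I * ((φ x ξ : ℝ) : ℂ)) * a x ξ * ftrans f ξ

/-- The dilation `Φ_t(x) = t^{-n} Φ(x/t)`. -/
def dilate {n : ℕ} (Φ : En n → ℂ) (t : ℝ) (x : En n) : ℂ :=
  (((t ^ n : ℝ) : ℂ))⁻¹ * Φ (t⁻¹ • x)

/-- The local maximal function `sup_{0<t<1} |f ∗ Φ_t|(x)`. -/
def hMaximal {n : ℕ} (Φ : En n → ℂ) (f : En n → ℂ) (x : En n) : ℝ :=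
  ⨆ t ∈ Set.Ioo (0:ℝ) 1, ‖∫ y : En n, f y * dilate Φ t (x - y)‖

/-- The local Hardy space quasi-norm `‖f‖_{h^p}`. -/
def hNorm {n : ℕ} (Φ : En n → ℂ) (p : ℝ) (f : En n → ℂ) : ℝ≥0∞ :=
  eLpNorm (hMaximal Φ f) (ENNReal.ofReal p) volume

/-- The global maximal function `sup_{t>0} |f ∗ Φ_t|(x)`. -/
def HMaximal {n : ℕ} (Φ : En n → ℂ) (f : En n → ℂ) (x : En n) : ℝ :=
  ⨆ t ∈ Set.Ioi (0:ℝ), ‖∫ y : En n, f y * dilate Φ t (x - y)‖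

/-- The Hardy space quasi-norm `‖f‖_{H^p}`. -/
def HNorm {n : ℕ} (Φ : En n → ℂ) (p : ℝ) (f : En n → ℂ) : ℝ≥0∞ :=
  eLpNorm (HMaximal Φ f) (ENNReal.ofReal p) volume

/-- `|∂_η^N ∇_ξ^M g(ξ)|`: the N-th directional derivative along `η` of the
M-th iterated derivative. -/
def dirDerivNorm {n : ℕ} {F : Type*} [NormedAddCommGroup F] [NormedSpace ℝ F]
    (g : En n → F) (η : En n) (N M : ℕ) (ξ : En n) : ℝ :=
  ‖iteratedFDeriv ℝ N (fun ζ => iteratedFDeriv ℝ M g ζ) ξ (fun _ => η)‖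

/-- `λ_ρ` : equals `1` for `ρ ≤ 1/2` and `1/(2ρ)` for `ρ > 1/2`. -/
def lamRho (ρ : ℝ) : ℝ := if ρ ≤ 1/2 then 1 else 1/(2*ρ)


/-! ### Auxiliary machinery for Statement 6 -/

section Statement6Aux

/-- The (real-linear) isometric identification of the dual of Euclidean space with itself. -/
def dualIsoR (n : ℕ) : (StrongDual ℝ (En n)) ≃ₗᵢ[ℝ] En n where
  toFun := fun ℓ => (InnerProductSpace.toDual ℝ (En n)).symm ℓ
  invFun := fun y => InnerProductSpace.toDual ℝ (En n) y
  map_add' := by intros; simp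
  map_smul' := by intros; simp
  left_inv := fun ℓ => by simp
  right_inv := fun y => by simp
  norm_map' := fun ℓ => by simp

lemma dualIsoR_comp_norm {n : ℕ} (T : En n →L[ℝ] (En n →L[ℝ] ℝ)) :
    ‖(((dualIsoR n).toContinuousLinearEquiv :
      (StrongDual ℝ (En n)) →L[ℝ] En n)).comp T‖ = ‖T‖ := by
  set cE := (((dualIsoR n).toContinuousLinearEquiv :
      (StrongDual ℝ (En n)) →L[ℝ] En n)) with hcE
  apply le_antisymm
  · apply ContinuousLinearMap.opNorm_le_bound _ (norm_nonneg T)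
    intro v
    calc ‖cE.comp T v‖ = ‖T v‖ := by
          simp only [ContinuousLinearMap.coe_comp', Function.comp_apply, hcE,
            ContinuousLinearEquiv.coe_coe, LinearIsometryEquiv.coe_toContinuousLinearEquiv,
            LinearIsometryEquiv.norm_map]
      _ ≤ ‖T‖ * ‖v‖ := T.le_opNorm v
  · apply ContinuousLinearMap.opNorm_le_bound _ (norm_nonneg _)
    intro v
    calc ‖T v‖ = ‖cE.comp T v‖ := by
          simp only [ContinuousLinearMap.coe_comp', Function.comp_apply, hcE,
            ContinuousLinearEquiv.coe_coe, LinearIsometryEquiv.coe_toContinuousLinearEquiv,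
            LinearIsometryEquiv.norm_map]
      _ ≤ ‖cE.comp T‖ * ‖v‖ := ContinuousLinearMap.le_opNorm _ v

lemma exists_inv_bound (n : ℕ) (β lam : ℝ) (hlam : 0 < lam) :
    ∃ K : ℝ, 1 ≤ K ∧ ∀ T : En n →L[ℝ] En n, ‖T‖ ≤ β → lam ≤ T.det →
      ‖Ring.inverse T‖ ≤ K := by
  set S : Set (En n →L[ℝ] En n) := {T | ‖T‖ ≤ β ∧ lam ≤ T.det} with hS
  have hclosed : IsClosed S :=
    (isClosed_le continuous_norm continuous_const).inter
      (isClosed_le continuous_const ContinuousLinearMap.continuous_det)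
  have hbdd : Bornology.IsBounded S := by
    have : S ⊆ Metric.closedBall 0 β := by
      intro T hT
      rw [Metric.mem_closedBall, dist_zero_right]
      exact hT.1
    exact Bornology.IsBounded.subset (Metric.isBounded_closedBall) this
  have hcompact : IsCompact S := Metric.isCompact_of_isClosed_isBounded hclosed hbdd
  have hcont : ContinuousOn (fun T : En n →L[ℝ] En n => ‖Ring.inverse T‖) S := by
    intro T hT
    have hdetne : T.det ≠ 0 := ne_of_gt (lt_of_lt_of_le hlam hT.2)
    have hu : IsUnit T :=
      ⟨(ContinuousLinearEquiv.unitsEquiv ℝ (En n)).symm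
        (T.toContinuousLinearEquivOfDetNeZero hdetne), rfl⟩
    obtain ⟨u, hu⟩ := hu
    subst hu
    exact ((NormedRing.inverse_continuousAt u).continuousWithinAt).norm
  obtain ⟨M, hM⟩ := ((hcompact.image_of_continuousOn hcont).isBounded).bddAbove
  refine ⟨max M 1, le_max_right _ _, fun T h1 h2 => ?_⟩
  exact le_trans (hM ⟨T, ⟨h1, h2⟩, rfl⟩) (le_max_left _ _)

lemma exists_global_flow {n : ℕ} (W : En n → En n) (Cw : ℝ) (Lw : NNReal)
    (hb : ∀ z, ‖W z‖ ≤ Cw) (hl : LipschitzWith Lw W) (x : En n) :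
    ∃ α : ℝ → En n, α 0 = x ∧
      ∀ t ∈ Icc (0:ℝ) 1, HasDerivWithinAt α (W (α t)) (Icc (0:ℝ) 1) t := by
  have hCw : 0 ≤ Cw := le_trans (norm_nonneg _) (hb x)
  have hpl : IsPicardLindelof (fun _ : ℝ => W) (tmin := 0) (tmax := 1) ⟨0, by simp⟩ x
      (Real.toNNReal Cw) 0 (Real.toNNReal Cw) Lw :=
    { lipschitzOnWith := fun t _ => hl.lipschitzOnWith
      continuousOn := fun z _ => continuousOn_const
      norm_le := fun t _ z _ => (hb z).trans (Real.le_coe_toNNReal Cw)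
      mul_max_le := by simp }
  obtain ⟨α, hα0, hα⟩ := hpl.exists_eq_forall_mem_Icc_hasDerivWithinAt₀
  exact ⟨α, hα0, hα⟩

lemma flow_transport {n : ℕ} {f : En n → En n} {A : En n → (En n →L[ℝ] En n)}
    (hf : ∀ z, HasFDerivAt f (A z) z) {W : En n → En n} {α : ℝ → En n} {v : En n}
    (hAW : ∀ z, A z (W z) = v)
    (hα : ∀ t ∈ Icc (0:ℝ) 1, HasDerivWithinAt α (W (α t)) (Icc (0:ℝ) 1) t) :
    f (α 1) = f (α 0) + v := by
  set F : ℝ → En n := fun t => f (α t) - t • v with hF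
  have hαc : ContinuousOn α (Icc 0 1) := fun t ht => (hα t ht).continuousWithinAt
  have hfc : Continuous f := by
    apply continuous_iff_continuousAt.2
    exact fun z => (hf z).continuousAt
  have hFc : ContinuousOn F (Icc 0 1) :=
    ((hfc.comp_continuousOn hαc).sub ((continuous_id.smul continuous_const).continuousOn))
  have hFd : ∀ t ∈ Ico (0:ℝ) 1, HasDerivWithinAt F 0 (Ici t) t := by
    intro t ht
    have h1 : HasDerivWithinAt α (W (α t)) (Ici t) t :=
      (hα t (Ico_subset_Icc_self ht)).mono_of_mem_nhdsWithin (Icc_mem_nhdsGE_of_mem ht)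
    have h2 : HasDerivWithinAt (fun s => f (α s)) (A (α t) (W (α t))) (Ici t) t :=
      (hf (α t)).comp_hasDerivWithinAt t h1
    have h3 : HasDerivWithinAt (fun s : ℝ => s • v) ((1:ℝ) • v) (Ici t) t :=
      ((hasDerivAt_id t).smul_const v).hasDerivWithinAt
    have h4 := h2.sub h3
    rw [hAW, one_smul, sub_self] at h4
    exact h4
  have hc := constant_of_has_deriv_right_zero hFc hFd 1 (by norm_num)
  have : f (α 1) - (1:ℝ) • v = f (α 0) - (0:ℝ) • v := hc
  rw [one_smul, zero_smul, sub_zero] at this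
  linear_combination (norm := module) this

lemma gronwallBound_le_one (δ Kc ε : ℝ) (hδ : 0 ≤ δ) (hK : 0 ≤ Kc) (hε : 0 ≤ ε) :
    gronwallBound δ Kc ε 1 ≤ (δ + ε) * Real.exp Kc := by
  rcases eq_or_ne Kc 0 with h | h
  · subst h
    rw [gronwallBound_K0]
    simp
  · have hKpos : 0 < Kc := lt_of_le_of_ne hK (Ne.symm h)
    rw [gronwallBound_of_K_ne_0 h]
    simp only [mul_one]
    have h1 : 1 - Kc ≤ Real.exp (-Kc) := by
      have := Real.add_one_le_exp (-Kc); linarith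
    have h2 : Real.exp Kc * (1 - Kc) ≤ Real.exp Kc * Real.exp (-Kc) :=
      mul_le_mul_of_nonneg_left h1 (Real.exp_pos Kc).le
    have h3 : Real.exp Kc * Real.exp (-Kc) = 1 := by
      rw [← Real.exp_add]; simp
    have h4 : (Real.exp Kc - 1) / Kc ≤ Real.exp Kc := by
      rw [div_le_iff₀ hKpos]; nlinarith
    have h5 : ε / Kc * (Real.exp Kc - 1) ≤ ε * Real.exp Kc := by
      have heq : ε / Kc * (Real.exp Kc - 1) = (Real.exp Kc - 1) / Kc * ε := by ring
      rw [heq]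
      calc (Real.exp Kc - 1) / Kc * ε ≤ Real.exp Kc * ε := mul_le_mul_of_nonneg_right h4 hε
        _ = ε * Real.exp Kc := by ring
    have h6 : δ * Real.exp Kc + ε / Kc * (Real.exp Kc - 1) ≤ δ * Real.exp Kc + ε * Real.exp Kc :=
      by linarith [h5]
    linarith [h6]

lemma injective_of_flow {n : ℕ} (f : En n → En n) (A : En n → (En n →L[ℝ] En n))
    (hfA : ∀ z, HasFDerivAt f (A z) z)
    (hstrict : ∀ z, HasStrictFDerivAt f (A z) z)
    (hunit : ∀ z, IsUnit (A z))
    (K : ℝ) (hK1 : 1 ≤ K) (hinv : ∀ z, ‖Ring.inverse (A z)‖ ≤ K)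
    (LA : NNReal) (hlipA : LipschitzWith LA A)
    (β : NNReal) (hlipf : LipschitzWith β f) :
    Function.Injective f := by
  have hK0 : (0:ℝ) < K := lt_of_lt_of_le one_pos hK1
  intro a b hab
  set c := f b with hc
  set I : En n → (En n →L[ℝ] En n) := fun z => Ring.inverse (A z) with hI
  have hAI : ∀ z w, A z (I z w) = w := by
    intro z w
    have h := Ring.mul_inverse_cancel (A z) (hunit z)
    calc A z (I z w) = ((A z) * I z) w := rfl
      _ = w := by rw [h]; rfl
  have hI_lip : ∀ z w, ‖I z - I w‖ ≤ K * K * LA * ‖z - w‖ := by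
    intro z w
    obtain ⟨u, hu⟩ := hunit z
    obtain ⟨v, hv⟩ := hunit w
    have hIz : I z = (↑u⁻¹ : En n →L[ℝ] En n) := by rw [hI]; simp only [← hu, Ring.inverse_unit]
    have hIw : I w = (↑v⁻¹ : En n →L[ℝ] En n) := by rw [hI]; simp only [← hv, Ring.inverse_unit]
    have hdiff : (↑u⁻¹ : En n →L[ℝ] En n) - ↑v⁻¹ = ↑u⁻¹ * (↑v - ↑u) * ↑v⁻¹ := by
      rw [mul_sub, sub_mul, mul_assoc]
      simp
    have hAd : ‖A w - A z‖ ≤ (LA : ℝ) * ‖z - w‖ := by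
      have := hlipA.dist_le_mul w z
      rw [dist_eq_norm] at this
      rw [norm_sub_rev z w]
      exact this.trans (by rw [dist_eq_norm])
    calc ‖I z - I w‖ = ‖(↑u⁻¹ : En n →L[ℝ] En n) * (↑v - ↑u) * ↑v⁻¹‖ := by rw [hIz, hIw, hdiff]
      _ ≤ ‖(↑u⁻¹ : En n →L[ℝ] En n) * (↑v - ↑u)‖ * ‖(↑v⁻¹ : En n →L[ℝ] En n)‖ := norm_mul_le _ _
      _ ≤ ‖(↑u⁻¹ : En n →L[ℝ] En n)‖ * ‖(↑v : En n →L[ℝ] En n) - ↑u‖ * ‖(↑v⁻¹ : En n →L[ℝ] En n)‖ :=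
          mul_le_mul_of_nonneg_right (norm_mul_le _ _) (norm_nonneg _)
      _ ≤ K * ((LA : ℝ) * ‖z - w‖) * K := by
          apply mul_le_mul
          · apply mul_le_mul
            · rw [← hIz]; exact hinv z
            · rw [hv, hu]; exact hAd
            · exact norm_nonneg _
            · exact hK0.le
          · rw [← hIw]; exact hinv w
          · exact norm_nonneg _
          · positivity
      _ = K * K * LA * ‖z - w‖ := by ring
  have main : ∀ x : En n, ∃ α : ℝ → En n, α 0 = x ∧
      ∀ t ∈ Icc (0:ℝ) 1, HasDerivWithinAt α (I (α t) (c - f x)) (Icc (0:ℝ) 1) t := by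
    intro x
    apply exists_global_flow (fun z => I z (c - f x)) (K * ‖c - f x‖)
      (Real.toNNReal (K * K * LA * ‖c - f x‖))
    · intro z
      calc ‖I z (c - f x)‖ ≤ ‖I z‖ * ‖c - f x‖ := (I z).le_opNorm _
        _ ≤ K * ‖c - f x‖ := mul_le_mul_of_nonneg_right (hinv z) (norm_nonneg _)
    · apply LipschitzWith.of_dist_le_mul
      intro z w
      rw [dist_eq_norm, dist_eq_norm, Real.coe_toNNReal _ (by positivity)]
      calc ‖I z (c - f x) - I w (c - f x)‖ = ‖(I z - I w) (c - f x)‖ := by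
            rw [ContinuousLinearMap.sub_apply]
        _ ≤ ‖I z - I w‖ * ‖c - f x‖ := (I z - I w).le_opNorm _
        _ ≤ K * K * LA * ‖z - w‖ * ‖c - f x‖ :=
            mul_le_mul_of_nonneg_right (hI_lip z w) (norm_nonneg _)
        _ = K * K * ↑LA * ‖c - f x‖ * ‖z - w‖ := by ring
  choose α hα0 hαd using main
  set h : En n → En n := fun x => α x 1 with hh
  have hfh : ∀ x, f (h x) = c := by
    intro x
    have := flow_transport hfA (fun z => hAI z (c - f x)) (hαd x)
    rw [hα0 x] at this
    show f (α x 1) = c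
    rw [this]
    abel
  have hconstfix : ∀ x, f x = c → h x = x := by
    intro x hx
    have hzero : ∀ t ∈ Icc (0:ℝ) 1, HasDerivWithinAt (α x) 0 (Icc (0:ℝ) 1) t := by
      intro t ht
      have := hαd x t ht
      rwa [hx, sub_self, map_zero] at this
    have hαc : ContinuousOn (α x) (Icc 0 1) := fun t ht => (hzero t ht).continuousWithinAt
    have := constant_of_has_deriv_right_zero hαc (fun t ht =>
      (hzero t (Ico_subset_Icc_self ht)).mono_of_mem_nhdsWithin (Icc_mem_nhdsGE_of_mem ht))
      1 (by norm_num)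
    show α x 1 = x
    rw [this, hα0 x]
  have key : ∀ x₀ : En n, ∀ᶠ x in nhds x₀, h x = h x₀ := by
    intro x₀
    set z₀ := h x₀ with hz₀
    obtain ⟨u₀, hu₀⟩ := hunit z₀
    have hsf : HasStrictFDerivAt f
        ((ContinuousLinearEquiv.unitsEquiv ℝ (En n) u₀ :
          En n ≃L[ℝ] En n) : En n →L[ℝ] En n) z₀ := by
      have : ((ContinuousLinearEquiv.unitsEquiv ℝ (En n) u₀ :
          En n ≃L[ℝ] En n) : En n →L[ℝ] En n) = A z₀ := by rw [← hu₀]; rfl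
      rw [this]
      exact hstrict z₀
    set ph := hsf.toOpenPartialHomeomorph f with hph
    have hmem : z₀ ∈ ph.source := hsf.mem_toOpenPartialHomeomorph_source
    obtain ⟨r, hr, hball⟩ := Metric.isOpen_iff.1 ph.open_source z₀ hmem
    set Lw₀ : NNReal := Real.toNNReal (K * K * LA * ‖c - f x₀‖) with hLw₀
    set CH : ℝ := (1 + K * β) * Real.exp Lw₀ with hCH
    have hCH0 : 0 ≤ CH := by positivity
    have grid : ∀ x, dist (h x) z₀ ≤ CH * dist x x₀ := by
      intro x
      have hvlip : ∀ t : ℝ, LipschitzWith Lw₀ (fun z => I z (c - f x₀)) := by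
        intro t
        apply LipschitzWith.of_dist_le_mul
        intro z w
        rw [dist_eq_norm, dist_eq_norm, hLw₀, Real.coe_toNNReal _ (by positivity)]
        calc ‖I z (c - f x₀) - I w (c - f x₀)‖ = ‖(I z - I w) (c - f x₀)‖ := by
              rw [ContinuousLinearMap.sub_apply]
          _ ≤ ‖I z - I w‖ * ‖c - f x₀‖ := (I z - I w).le_opNorm _
          _ ≤ K * K * LA * ‖z - w‖ * ‖c - f x₀‖ :=
              mul_le_mul_of_nonneg_right (hI_lip z w) (norm_nonneg _)
          _ = K * K * ↑LA * ‖c - f x₀‖ * ‖z - w‖ := by ring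
      have hxc : ContinuousOn (α x) (Icc 0 1) := fun t ht => (hαd x t ht).continuousWithinAt
      have hx₀c : ContinuousOn (α x₀) (Icc 0 1) := fun t ht => (hαd x₀ t ht).continuousWithinAt
      have hxd : ∀ t ∈ Ico (0:ℝ) 1,
          HasDerivWithinAt (α x) (I (α x t) (c - f x)) (Ici t) t := fun t ht =>
        (hαd x t (Ico_subset_Icc_self ht)).mono_of_mem_nhdsWithin (Icc_mem_nhdsGE_of_mem ht)
      have hx₀d : ∀ t ∈ Ico (0:ℝ) 1,
          HasDerivWithinAt (α x₀) (I (α x₀ t) (c - f x₀)) (Ici t) t := fun t ht =>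
        (hαd x₀ t (Ico_subset_Icc_self ht)).mono_of_mem_nhdsWithin (Icc_mem_nhdsGE_of_mem ht)
      have fbound : ∀ t ∈ Ico (0:ℝ) 1,
          dist (I (α x t) (c - f x)) (I (α x t) (c - f x₀)) ≤ K * β * dist x x₀ := by
        intro t _
        rw [dist_eq_norm, ← map_sub]
        have heq : (c - f x) - (c - f x₀) = f x₀ - f x := by abel
        rw [heq]
        calc ‖I (α x t) (f x₀ - f x)‖ ≤ ‖I (α x t)‖ * ‖f x₀ - f x‖ := (I _).le_opNorm _
          _ ≤ K * ‖f x₀ - f x‖ := mul_le_mul_of_nonneg_right (hinv _) (norm_nonneg _)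
          _ ≤ K * (β * dist x₀ x) := by
              apply mul_le_mul_of_nonneg_left _ hK0.le
              have := hlipf.dist_le_mul x₀ x
              rwa [dist_eq_norm] at this
          _ = K * β * dist x x₀ := by rw [dist_comm]; ring
      have gbound : ∀ t ∈ Ico (0:ℝ) 1,
          dist (I (α x₀ t) (c - f x₀)) (I (α x₀ t) (c - f x₀)) ≤ 0 := by
        intro t _; rw [dist_self]
      have hstart : dist (α x 0) (α x₀ 0) ≤ dist x x₀ := by rw [hα0, hα0]
      have := dist_le_of_approx_trajectories_ODE (v := fun _ z => I z (c - f x₀))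
        (K := Lw₀) hvlip hxc hxd fbound hx₀c hx₀d gbound hstart 1 (by constructor <;> norm_num)
      rw [sub_zero, add_zero] at this
      calc dist (h x) z₀ ≤ gronwallBound (dist x x₀) Lw₀ (K * β * dist x x₀) 1 := this
        _ ≤ (dist x x₀ + K * β * dist x x₀) * Real.exp Lw₀ :=
            gronwallBound_le_one _ _ _ dist_nonneg (NNReal.coe_nonneg _) (by positivity)
        _ = CH * dist x x₀ := by rw [hCH]; ring
    have hrpos : 0 < r / (CH + 1) := by positivity
    filter_upwards [Metric.ball_mem_nhds x₀ hrpos] with x hx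
    have hdx : dist x x₀ < r / (CH + 1) := hx
    have hin : h x ∈ ph.source := by
      apply hball
      have h1 : dist (h x) z₀ ≤ CH * dist x x₀ := grid x
      have h2 : CH * dist x x₀ ≤ CH * (r / (CH + 1)) :=
        mul_le_mul_of_nonneg_left hdx.le hCH0
      have h3 : CH * (r / (CH + 1)) < r := by
        rw [mul_div_assoc'] at *
        rw [div_lt_iff₀ (by positivity)]
        nlinarith
      exact Metric.mem_ball.2 (lt_of_le_of_lt (h1.trans h2) h3)
    have hcoe : ∀ y, ph y = f y := by
      intro y
      rw [hph, hsf.toOpenPartialHomeomorph_coe]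
    apply ph.injOn hin hmem
    show ph (h x) = ph z₀
    rw [hcoe, hcoe, hfh x, hz₀, hfh x₀]
  have hlocconst : IsLocallyConstant h := (IsLocallyConstant.iff_eventually_eq h).2 key
  have heq : h a = h b := hlocconst.apply_eq_of_preconnectedSpace a b
  have ha' : h a = a := hconstfix a hab
  have hb' : h b = b := hconstfix b rfl
  rw [← ha', heq, hb']

lemma snd_det_eq {n : ℕ} (φ : En n → En n → ℝ) (ξ : En n)
    (G' : En n → (En n →L[ℝ] (En n →L[ℝ] ℝ))) (x : En n)
    (hG : HasFDerivAt (fun x => fderiv ℝ (fun η => φ x η) ξ) (G' x) x) :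
    ((((dualIsoR n).toContinuousLinearEquiv :
        (StrongDual ℝ (En n)) →L[ℝ] En n)).comp (G' x)).det
      = (sndMatrix φ x ξ).det := by
  set b := (EuclideanSpace.basisFun (Fin n) ℝ).toBasis with hb
  set A := ((((dualIsoR n).toContinuousLinearEquiv :
        (StrongDual ℝ (En n)) →L[ℝ] En n)).comp (G' x)) with hA
  have h1 : A.det = LinearMap.det (A : En n →ₗ[ℝ] En n) := rfl
  rw [h1, ← LinearMap.det_toMatrix b]
  rw [← Matrix.det_transpose]
  congr 1
  ext j k
  rw [Matrix.transpose_apply]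
  rw [LinearMap.toMatrix_apply]
  have hbj : b j = EuclideanSpace.single j 1 := by
    rw [hb, OrthonormalBasis.coe_toBasis, EuclideanSpace.basisFun_apply]
  have hrepr : ∀ (y : En n) (i : Fin n), b.repr y i = y i := by
    intro y i
    rw [hb, OrthonormalBasis.coe_toBasis_repr_apply, EuclideanSpace.basisFun_repr]
  rw [hrepr, hbj]
  have hAv : A (EuclideanSpace.single j 1)
      = (InnerProductSpace.toDual ℝ (En n)).symm (G' x (EuclideanSpace.single j 1)) := rfl
  rw [show ((A : En n →ₗ[ℝ] En n) (EuclideanSpace.single j 1)) = A (EuclideanSpace.single j 1)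
    from rfl, hAv]
  have hcoord : ∀ (ℓ : StrongDual ℝ (En n)) (i : Fin n),
      ((InnerProductSpace.toDual ℝ (En n)).symm ℓ) i = ℓ (EuclideanSpace.single i 1) := by
    intro ℓ i
    have h2 : ⟪(InnerProductSpace.toDual ℝ (En n)).symm ℓ, EuclideanSpace.single i 1⟫
        = ℓ (EuclideanSpace.single i 1) := InnerProductSpace.toDual_symm_apply
    rw [← h2]
    rw [EuclideanSpace.inner_single_right]
    simp
  rw [hcoord]
  show G' x (EuclideanSpace.single j 1) (EuclideanSpace.single k 1) = sndMatrix φ x ξ j k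
  have hev : HasFDerivAt (fun y => fderiv ℝ (fun η => φ y η) ξ (EuclideanSpace.single k 1))
      (((ContinuousLinearMap.apply ℝ ℝ (EuclideanSpace.single k 1)).comp (G' x))) x := by
    exact (ContinuousLinearMap.apply ℝ ℝ (EuclideanSpace.single k 1)).hasFDerivAt.comp x hG
  show _ = fderiv ℝ (fun y => fderiv ℝ (fun η => φ y η) ξ (EuclideanSpace.single k 1)) x
      (EuclideanSpace.single j 1)
  rw [hev.fderiv]
  rfl

lemma cov_lemma {n : ℕ} (f : En n → En n) (A : En n → (En n →L[ℝ] En n)) (lam : ℝ)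
    (hlam : 0 < lam)
    (hfA : ∀ x, HasFDerivAt f (A x) x) (hdet : ∀ x, lam ≤ (A x).det)
    (hinj : Function.Injective f)
    (E : Set (En n)) (hE : MeasurableSet E) (g : En n → ℝ) :
    ∫⁻ x in f ⁻¹' E, ENNReal.ofReal (g (f x)) ∂volume
      ≤ ENNReal.ofReal lam⁻¹ * ∫⁻ y in E, ENNReal.ofReal (g y) ∂volume := by
  have hfc : Continuous f := continuous_iff_continuousAt.2 fun x => (hfA x).continuousAt
  have hs : MeasurableSet (f ⁻¹' E) := hE.preimage hfc.measurable
  have hchg := lintegral_image_eq_lintegral_abs_det_fderiv_mul (μ := volume) hs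
    (fun x _ => (hfA x).hasFDerivWithinAt) (hinj.injOn) (fun y => ENNReal.ofReal (g y))
  have hlower : ∀ x : En n,
      ENNReal.ofReal lam * ENNReal.ofReal (g (f x))
        ≤ ENNReal.ofReal |(A x).det| * ENNReal.ofReal (g (f x)) := by
    intro x
    apply mul_le_mul_left
    apply ENNReal.ofReal_le_ofReal
    exact (hdet x).trans (le_abs_self _)
  have step1 : ENNReal.ofReal lam * ∫⁻ x in f ⁻¹' E, ENNReal.ofReal (g (f x)) ∂volume
      ≤ ∫⁻ y in E, ENNReal.ofReal (g y) ∂volume := by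
    rw [← lintegral_const_mul' _ _ ENNReal.ofReal_ne_top]
    calc ∫⁻ x in f ⁻¹' E, ENNReal.ofReal lam * ENNReal.ofReal (g (f x)) ∂volume
        ≤ ∫⁻ x in f ⁻¹' E, ENNReal.ofReal |(A x).det| * ENNReal.ofReal (g (f x)) ∂volume :=
          lintegral_mono fun x => hlower x
      _ = ∫⁻ y in f '' (f ⁻¹' E), ENNReal.ofReal (g y) ∂volume := hchg.symm
      _ ≤ ∫⁻ y in E, ENNReal.ofReal (g y) ∂volume :=
          lintegral_mono_set (image_preimage_subset f E)
  calc ∫⁻ x in f ⁻¹' E, ENNReal.ofReal (g (f x)) ∂volume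
      = ENNReal.ofReal lam⁻¹ * (ENNReal.ofReal lam
          * ∫⁻ x in f ⁻¹' E, ENNReal.ofReal (g (f x)) ∂volume) := by
        rw [← mul_assoc, ← ENNReal.ofReal_mul (by positivity), inv_mul_cancel₀ hlam.ne',
          ENNReal.ofReal_one, one_mul]
    _ ≤ ENNReal.ofReal lam⁻¹ * ∫⁻ y in E, ENNReal.ofReal (g y) ∂volume :=
        mul_le_mul_right step1 _

end Statement6Aux

/-- Change-of-variables inequality coming from the SND condition:
for a unit vector `ξ`, `∫_{∇_ξφ(x,ξ) ∈ E} g(∇_ξφ(x,ξ)) dx ≤ C ∫_E g`. -/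
theorem statement6 (n : ℕ)
    (φ : En n → En n → ℝ) (B : ℕ → ℕ → ℝ) (hφ : PhiTwo φ B)
    (lam : ℝ) (hsnd : SNDCondition φ lam) :
    ∃ C : ℝ, 0 < C ∧ ∀ ξ : En n, ‖ξ‖ = 1 → ∀ E : Set (En n), MeasurableSet E →
      ∀ g : En n → ℝ, Measurable g → (∀ y, 0 ≤ g y) →
      ∫⁻ x in {x : En n | gradXi φ x ξ ∈ E}, ENNReal.ofReal (g (gradXi φ x ξ)) ∂volume
        ≤ ENNReal.ofReal C * ∫⁻ y in E, ENNReal.ofReal (g y) ∂volume := by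
  obtain ⟨hlam, hdet⟩ := hsnd
  obtain ⟨hhom, hsm, hbound⟩ := hφ
  refine ⟨lam⁻¹, by positivity, ?_⟩
  intro ξ hξ E hE g hgm hg0
  have hξ0 : ξ ≠ 0 := by
    intro h
    rw [h, norm_zero] at hξ
    norm_num at hξ
  have hU : IsOpen {q : En n × En n | q.2 ≠ 0} :=
    isOpen_compl_iff.2 (isClosed_eq continuous_snd continuous_const)
  -- the first-order frequency derivative, as a function of x
  set G : En n → (En n →L[ℝ] ℝ) := fun x => fderiv ℝ (fun η => φ x η) ξ with hGdef
  have hGsm : ContDiff ℝ (⊤:ℕ∞) G := by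
    apply contDiff_iff_contDiffAt.2
    intro x
    have hjoint : ContDiffAt ℝ (⊤ : ℕ∞) (Function.uncurry φ) (x, ξ) :=
      hsm.contDiffAt (hU.mem_nhds hξ0)
    exact ContDiffAt.fderiv (f := fun x η => φ x η) (g := fun _ => ξ)
      hjoint contDiffAt_const (by simp)
  have hGd : Differentiable ℝ G := hGsm.differentiable (by simp)
  set G' : En n → (En n →L[ℝ] (En n →L[ℝ] ℝ)) := fun x => fderiv ℝ G x with hG'def
  have hGfd : ∀ x, HasFDerivAt G (G' x) x := fun x => (hGd x).hasFDerivAt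
  -- identification of mixed derivative norms
  have hmix : ∀ (M : ℕ) (x : En n), mixedDerivNorm φ 1 M x ξ = ‖iteratedFDeriv ℝ M G x‖ := by
    intro M x
    have hfun : (fun y => iteratedFDeriv ℝ 1 (fun η => φ y η) ξ)
        = fun y => (continuousMultilinearCurryFin1 ℝ (En n) ℝ).symm (G y) := by
      funext y
      ext m
      simp [iteratedFDeriv_one_apply, hGdef]
    show ‖iteratedFDeriv ℝ M (fun y => iteratedFDeriv ℝ 1 (fun η => φ y η) ξ) x‖
        = ‖iteratedFDeriv ℝ M G x‖
    rw [hfun]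
    exact LinearIsometryEquiv.norm_iteratedFDeriv_comp_left _ _ _ _
  have hmixbound : ∀ M : ℕ, 2 ≤ 1 + M → ∀ x : En n,
      ‖iteratedFDeriv ℝ M G x‖ ≤ B 1 M := by
    intro M hM x
    have := hbound 1 M hM x ξ hξ0
    rw [hmix M x] at this
    calc ‖iteratedFDeriv ℝ M G x‖ ≤ B 1 M * ‖ξ‖ ^ (1 - (1:ℕ):ℝ) := this
      _ = B 1 M := by
        rw [hξ]
        norm_num
  have hB11 : ∀ x, ‖G' x‖ ≤ B 1 1 := by
    intro x
    have h1 : ‖G' x‖ = ‖iteratedFDeriv ℝ 1 G x‖ := by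
      rw [hG'def, ← norm_iteratedFDeriv_fderiv, norm_iteratedFDeriv_zero]
    rw [h1]
    exact hmixbound 1 (by norm_num) x
  have hB12 : ∀ x, ‖iteratedFDeriv ℝ 2 G x‖ ≤ B 1 2 := by
    intro x
    exact hmixbound 2 (by norm_num) x
  -- the map f and its derivative A
  set cE : (StrongDual ℝ (En n)) →L[ℝ] En n :=
    ((dualIsoR n).toContinuousLinearEquiv : (StrongDual ℝ (En n)) →L[ℝ] En n) with hcE
  set f : En n → En n := fun x => gradXi φ x ξ with hfdef
  set A : En n → (En n →L[ℝ] En n) := fun x => cE.comp (G' x) with hAdef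
  have hfA : ∀ x, HasFDerivAt f (A x) x := by
    intro x
    exact cE.hasFDerivAt.comp x (hGfd x)
  have hnormA : ∀ x, ‖A x‖ = ‖G' x‖ := fun x => dualIsoR_comp_norm (G' x)
  have hdetA : ∀ x, lam ≤ (A x).det := by
    intro x
    rw [hAdef]
    rw [snd_det_eq φ ξ G' x (hGfd x)]
    exact hdet x ξ hξ0
  -- uniform bound on the inverse
  obtain ⟨K, hK1, hKb⟩ := exists_inv_bound n (B 1 1) lam hlam
  have hinvA : ∀ x, ‖Ring.inverse (A x)‖ ≤ K := by
    intro x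
    apply hKb
    · rw [hnormA]; exact hB11 x
    · exact hdetA x
  have hunitA : ∀ x, IsUnit (A x) := by
    intro x
    have hne : (A x).det ≠ 0 := ne_of_gt (lt_of_lt_of_le hlam (hdetA x))
    exact ⟨(ContinuousLinearEquiv.unitsEquiv ℝ (En n)).symm
      ((A x).toContinuousLinearEquivOfDetNeZero hne), rfl⟩
  -- Lipschitz bounds
  have hGsm2 : ContDiff ℝ 2 G := hGsm.of_le (by exact WithTop.coe_le_coe.mpr le_top)
  have hG'd : Differentiable ℝ G' := by
    have : ContDiff ℝ 1 (fderiv ℝ G) := hGsm2.fderiv_right (by norm_num)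
    exact this.differentiable one_ne_zero
  have hlipG' : LipschitzWith (Real.toNNReal (B 1 2)) G' := by
    set H := fun x => iteratedFDeriv ℝ 1 G x with hH
    have hHd : Differentiable ℝ H := hGsm2.differentiable_iteratedFDeriv (by norm_num)
    have hlipH : LipschitzWith (Real.toNNReal (B 1 2)) H := by
      apply lipschitzWith_of_nnnorm_fderiv_le hHd
      intro x
      rw [← NNReal.coe_le_coe, coe_nnnorm, Real.coe_toNNReal', hH, norm_fderiv_iteratedFDeriv]
      exact (hB12 x).trans (le_max_left _ _)
    apply LipschitzWith.of_dist_le_mul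
    intro x y
    have hcurry : ∀ z, G' z = continuousMultilinearCurryFin1 ℝ (En n) (En n →L[ℝ] ℝ) (H z) := by
      intro z; rw [hG'def]; ext m; simp [hH, iteratedFDeriv_one_apply]
    rw [hcurry x, hcurry y, LinearIsometryEquiv.dist_map]
    exact hlipH.dist_le_mul x y
  have hlipA : LipschitzWith (Real.toNNReal (B 1 2)) A := by
    apply LipschitzWith.of_dist_le_mul
    intro x y
    have hsub : A x - A y = cE.comp (G' x - G' y) := by
      rw [hAdef, ContinuousLinearMap.comp_sub]
    have hd : dist (A x) (A y) = dist (G' x) (G' y) := by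
      rw [dist_eq_norm (A x) (A y), dist_eq_norm (G' x) (G' y), hsub, dualIsoR_comp_norm]
    rw [hd]
    exact hlipG'.dist_le_mul x y
  have hlipf : LipschitzWith (Real.toNNReal (B 1 1)) f := by
    apply lipschitzWith_of_nnnorm_fderiv_le (fun x => (hfA x).differentiableAt)
    intro x
    rw [← NNReal.coe_le_coe, coe_nnnorm, Real.coe_toNNReal', (hfA x).fderiv]
    exact ((hnormA x).le.trans (hB11 x)).trans (le_max_left _ _)
  -- strict differentiability
  have hstrict : ∀ z, HasStrictFDerivAt f (A z) z := by
    intro z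
    have hfsm : ContDiff ℝ 1 f := by
      have : ContDiff ℝ 1 (fun x => cE (G x)) :=
        cE.contDiff.comp (hGsm.of_le (by exact WithTop.coe_le_coe.mpr le_top))
      exact this
    have h1 : HasStrictFDerivAt f (fderiv ℝ f z) z :=
      hfsm.contDiffAt.hasStrictFDerivAt one_ne_zero
    rwa [(hfA z).fderiv] at h1
  -- injectivity
  have hinj : Function.Injective f :=
    injective_of_flow f A hfA hstrict hunitA K hK1 hinvA _ hlipA _ hlipf
  -- change of variables
  show ∫⁻ x in f ⁻¹' E, ENNReal.ofReal (g (f x)) ∂volume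
      ≤ ENNReal.ofReal lam⁻¹ * ∫⁻ y in E, ENNReal.ofReal (g y) ∂volume
  exact cov_lemma f A lam hlam hfA hdetA hinj E hE g

end
end

section
/- Let φ ∈ Φ² satisfy the SND condition and let r ≥ 1. Define B̃_r = ⋃_{ξ ∈ S^{n−1}} { x ∈ ℝ^n : |∇_ξφ(x,ξ)| ≤ 3r }. Then the Lebesgue measure of B̃_r satisfies |B̃_r| ≤ C r^n, where C depends only on n, λ and finitely many of the seminorm constants B_{N,M} of φ. -/
open MeasureTheory Complex Real Set
open scoped ENNReal RealInnerProductSpace NNReal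

noncomputable section

open Metric

set_option maxHeartbeats 1000000

namespace S7aux



variable {E : Type*} [NormedAddCommGroup E] [NormedSpace ℝ E] [CompleteSpace E]

lemma mem_nhdsWithin_Ici_Icc {t : ℝ} (ht : t ∈ Ico (0:ℝ) 1) :
    Icc (0:ℝ) 1 ∈ nhdsWithin t (Ici t) :=
  mem_nhdsWithin.2 ⟨Iio 1, isOpen_Iio, ht.2, fun y hy => ⟨ht.1.trans hy.2, hy.1.le⟩⟩

lemma gronwallBound_le_simple (δ K ε : ℝ) (hδ : 0 ≤ δ) (hK : 0 ≤ K) (hε : 0 ≤ ε) :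
    gronwallBound δ K ε 1 ≤ (δ + ε) * Real.exp K := by
  rcases eq_or_ne K 0 with h | h
  · subst h
    rw [gronwallBound_K0]
    simp only [Real.exp_zero, mul_one]
    linarith
  · rw [gronwallBound_of_K_ne_0 h]
    simp only [mul_one]
    have hKpos : 0 < K := lt_of_le_of_ne hK (Ne.symm h)
    have h0 : (1 - K) * Real.exp K ≤ 1 := by
      have h1 : 1 - K ≤ Real.exp (-K) := by
        have := Real.add_one_le_exp (-K); linarith
      have h2 := mul_le_mul_of_nonneg_right h1 (Real.exp_pos K).le
      rwa [← Real.exp_add, neg_add_cancel, Real.exp_zero] at h2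
    have h3 : Real.exp K - 1 ≤ K * Real.exp K := by nlinarith
    have h4 : ε / K * (Real.exp K - 1) ≤ ε / K * (K * Real.exp K) :=
      mul_le_mul_of_nonneg_left h3 (div_nonneg hε hK)
    have h5 : ε / K * (K * Real.exp K) = ε * Real.exp K := by
      field_simp
    nlinarith [mul_le_mul_of_nonneg_left (le_refl (Real.exp K)) hδ]

/-- Existence of a lift: solves `γ' = G(γ) v` on `[0,1]` starting at `x`. -/
lemma exists_lift (G : E → E →L[ℝ] E) (c ℓ : ℝ) (hc : 0 < c)
    (hGb : ∀ x, ‖G x‖ ≤ c) (hGlip : ∀ x y, ‖G x - G y‖ ≤ ℓ * ‖x - y‖) (hℓ : 0 ≤ ℓ)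
    (v : E) (x : E) :
    ∃ γ : ℝ → E, γ 0 = x ∧ ∀ t ∈ Icc (0:ℝ) 1,
      HasDerivWithinAt γ ((G (γ t)) v) (Icc 0 1) t := by
  have hlip : ∀ a b : E, dist (G a v) (G b v) ≤ (ℓ * ‖v‖) * dist a b := by
    intro a b
    rw [dist_eq_norm, dist_eq_norm]
    have h1 : G a v - G b v = (G a - G b) v := by
      simp [ContinuousLinearMap.sub_apply]
    rw [h1]
    calc ‖(G a - G b) v‖ ≤ ‖G a - G b‖ * ‖v‖ := (G a - G b).le_opNorm v
    _ ≤ (ℓ * ‖a - b‖) * ‖v‖ :=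
        mul_le_mul_of_nonneg_right (hGlip a b) (norm_nonneg v)
    _ = (ℓ * ‖v‖) * ‖a - b‖ := by ring
  have hpl : IsPicardLindelof (fun _ z => G z v) (tmin := 0) (tmax := 1)
      ⟨0, left_mem_Icc.2 zero_le_one⟩ x (Real.toNNReal (c * ‖v‖)) 0
      (Real.toNNReal (c * ‖v‖)) (Real.toNNReal (ℓ * ‖v‖)) := by
    constructor
    · intro t _
      apply LipschitzWith.lipschitzOnWith
      apply LipschitzWith.of_dist_le_mul
      intro a b
      refine le_trans (hlip a b) ?_
      gcongr
      exact (Real.coe_toNNReal _ (by positivity)).ge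
    · intro z _
      exact continuousOn_const
    · intro t _ z _
      calc ‖G z v‖ ≤ ‖G z‖ * ‖v‖ := (G z).le_opNorm v
      _ ≤ c * ‖v‖ := mul_le_mul_of_nonneg_right (hGb z) (norm_nonneg v)
      _ ≤ _ := Real.le_coe_toNNReal _
    · norm_num
  obtain ⟨γ, h0, hd⟩ := hpl.exists_eq_forall_mem_Icc_hasDerivWithinAt₀
  exact ⟨γ, h0, hd⟩

/-- Quantitative Hadamard–Lévy type bound: if `F` has a uniformly bounded inverse
derivative and a Lipschitz derivative, then `‖x‖ ≤ c ‖F x - F 0‖`. -/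
theorem hadamard_bound (F : E → E) (G : E → E →L[ℝ] E) (c L : ℝ)
    (hc : 0 < c) (hL : 0 < L)
    (hFd : Differentiable ℝ F)
    (hGF : ∀ x, (G x).comp (fderiv ℝ F x) = ContinuousLinearMap.id ℝ E)
    (hFG : ∀ x, (fderiv ℝ F x).comp (G x) = ContinuousLinearMap.id ℝ E)
    (hGb : ∀ x, ‖G x‖ ≤ c)
    (hDL : ∀ x y, ‖fderiv ℝ F x - fderiv ℝ F y‖ ≤ L * ‖x - y‖) :
    ∀ x : E, ‖x‖ ≤ c * ‖F x - F 0‖ := by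
  -- G is Lipschitz
  have hGlip : ∀ x y, ‖G x - G y‖ ≤ (c * c * L) * ‖x - y‖ := by
    intro x y
    have e1 : (G x).comp ((fderiv ℝ F y).comp (G y)) = G x := by
      rw [hFG y, ContinuousLinearMap.comp_id]
    have e2 : (G x).comp ((fderiv ℝ F x).comp (G y)) = G y := by
      rw [← ContinuousLinearMap.comp_assoc, hGF x, ContinuousLinearMap.id_comp]
    have h1 : G x - G y = (G x).comp (((fderiv ℝ F y) - (fderiv ℝ F x)).comp (G y)) := by
      rw [ContinuousLinearMap.sub_comp, ContinuousLinearMap.comp_sub, e1, e2]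
    rw [h1]
    calc ‖(G x).comp (((fderiv ℝ F y) - (fderiv ℝ F x)).comp (G y))‖
        ≤ ‖G x‖ * ‖((fderiv ℝ F y) - (fderiv ℝ F x)).comp (G y)‖ :=
          ContinuousLinearMap.opNorm_comp_le _ _
    _ ≤ ‖G x‖ * (‖(fderiv ℝ F y) - (fderiv ℝ F x)‖ * ‖G y‖) := by
        gcongr
        exact ContinuousLinearMap.opNorm_comp_le _ _
    _ ≤ c * ((L * ‖y - x‖) * c) := by
        refine mul_le_mul (hGb x) ?_ (by positivity) hc.le
        exact mul_le_mul (hDL y x) (hGb y) (norm_nonneg _) (by positivity)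
    _ = (c * c * L) * ‖y - x‖ := by ring
    _ = (c * c * L) * ‖x - y‖ := by rw [norm_sub_rev]
  -- lower bound for the derivative
  have hlow : ∀ x (v : E), ‖v‖ ≤ c * ‖fderiv ℝ F x v‖ := by
    intro x v
    have h1 : (G x) ((fderiv ℝ F x) v) = v := by
      have := ContinuousLinearMap.ext_iff.1 (hGF x) v
      simpa using this
    calc ‖v‖ = ‖(G x) ((fderiv ℝ F x) v)‖ := by rw [h1]
    _ ≤ ‖G x‖ * ‖(fderiv ℝ F x) v‖ := (G x).le_opNorm _
    _ ≤ c * ‖(fderiv ℝ F x) v‖ :=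
        mul_le_mul_of_nonneg_right (hGb x) (norm_nonneg _)
  -- Taylor estimate
  have taylor : ∀ z w : E, ‖F w - F z - (fderiv ℝ F z) (w - z)‖ ≤ L * ‖w - z‖ * ‖w - z‖ := by
    intro z w
    set g : E → E := fun u => F u - (fderiv ℝ F z) u with hg
    have hgd : ∀ u, DifferentiableAt ℝ g u := fun u =>
      (hFd u).sub ((fderiv ℝ F z).differentiable.differentiableAt)
    have hgder : ∀ u, fderiv ℝ g u = fderiv ℝ F u - fderiv ℝ F z := by
      intro u
      rw [hg]
      rw [fderiv_fun_sub (hFd u) ((fderiv ℝ F z).differentiable.differentiableAt)]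
      rw [ContinuousLinearMap.fderiv]
    have hbound : ∀ u ∈ segment ℝ z w, ‖fderiv ℝ g u‖ ≤ L * ‖w - z‖ := by
      rintro u hu
      rw [hgder]
      refine (hDL u z).trans ?_
      gcongr
      obtain ⟨a, b, ha, hb, hab, rfl⟩ := hu
      have h' : a • z + b • w - z = b • (w - z) := by
        have ha' : a = 1 - b := by linarith
        subst ha'
        module
      rw [h', norm_smul, Real.norm_eq_abs, _root_.abs_of_nonneg hb]
      nlinarith [norm_nonneg (w - z)]
    have := Convex.norm_image_sub_le_of_norm_fderiv_le
      (fun u _ => hgd u) hbound (convex_segment z w)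
      (left_mem_segment ℝ z w) (right_mem_segment ℝ z w)
    have hrw : g w - g z = F w - F z - (fderiv ℝ F z) (w - z) := by
      simp only [hg, map_sub]
      abel
    rw [hrw] at this
    exact this
  -- separation of fibers
  set ρ := (1:ℝ) / (c * L) with hρdef
  have hρ : 0 < ρ := by positivity
  have hsep : ∀ z w : E, F z = F w → ‖w - z‖ < ρ → w = z := by
    intro z w hF hlt
    by_contra hne
    have hpos : 0 < ‖w - z‖ := norm_pos_iff.2 (sub_ne_zero.2 hne)
    have h1 : ‖w - z‖ ≤ c * ‖(fderiv ℝ F z) (w - z)‖ := hlow z (w - z)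
    have h2 : ‖(fderiv ℝ F z) (w - z)‖ = ‖F w - F z - (fderiv ℝ F z) (w - z)‖ := by
      rw [hF, sub_self, zero_sub, norm_neg]
    have h3 := taylor z w
    rw [h2] at h1
    have h4 : ‖w - z‖ ≤ c * (L * ‖w - z‖ * ‖w - z‖) :=
      h1.trans (mul_le_mul_of_nonneg_left h3 hc.le)
    have h5 : 1 ≤ c * L * ‖w - z‖ := by
      have := (div_le_div_iff_of_pos_right hpos).2 h4
      nlinarith
    rw [hρdef, lt_div_iff₀ (by positivity)] at hlt
    nlinarith

  -- lifted curves
  have hex : ∀ x : E, ∃ γ : ℝ → E, γ 0 = x ∧ ∀ t ∈ Icc (0:ℝ) 1,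
      HasDerivWithinAt γ ((G (γ t)) (F 0 - F x)) (Icc 0 1) t :=
    fun x => exists_lift G c (c*c*L) hc hGb hGlip (by positivity) (F 0 - F x) x
  choose γ hγ0 hγd using hex
  have hcont : ∀ x, ContinuousOn (γ x) (Icc 0 1) :=
    fun x t ht => (hγd x t ht).continuousWithinAt
  have hγd' : ∀ x : E, ∀ t ∈ Ico (0:ℝ) 1,
      HasDerivWithinAt (γ x) ((G (γ x t)) (F 0 - F x)) (Ici t) t :=
    fun x t ht => (hγd x t (Ico_subset_Icc_self ht)).mono_of_mem_nhdsWithin (mem_nhdsWithin_Ici_Icc ht)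
  -- image of the curve is a straight segment
  have himg : ∀ x : E, ∀ t ∈ Icc (0:ℝ) 1, F (γ x t) = F x + t • (F 0 - F x) := by
    intro x
    have hucont : ContinuousOn (fun t => F (γ x t) - t • (F 0 - F x)) (Icc 0 1) :=
      ((hFd.continuous.comp_continuousOn (hcont x)).sub
        ((continuous_id.smul continuous_const).continuousOn))
    have huderiv : ∀ t ∈ Ico (0:ℝ) 1,
        HasDerivWithinAt (fun t => F (γ x t) - t • (F 0 - F x)) 0 (Ici t) t := by
      intro t ht
      have h2 : HasDerivWithinAt (fun s => F (γ x s))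
          ((fderiv ℝ F (γ x t)) ((G (γ x t)) (F 0 - F x))) (Ici t) t :=
        (hFd (γ x t)).hasFDerivAt.comp_hasDerivWithinAt t (hγd' x t ht)
      have h3 : (fderiv ℝ F (γ x t)) ((G (γ x t)) (F 0 - F x)) = F 0 - F x := by
        have := ContinuousLinearMap.ext_iff.1 (hFG (γ x t)) (F 0 - F x)
        simpa using this
      rw [h3] at h2
      have h4 : HasDerivWithinAt (fun s : ℝ => s • (F 0 - F x)) (F 0 - F x) (Ici t) t := by
        simpa using ((hasDerivAt_id t).smul_const (F 0 - F x)).hasDerivWithinAt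
      simpa using h2.fun_sub h4
    intro t ht
    have hcst := constant_of_has_deriv_right_zero hucont huderiv t ht
    simp only [hγ0 x, zero_smul, sub_zero] at hcst
    have := sub_eq_iff_eq_add.1 hcst
    rw [this]
  have hfib : ∀ x : E, F (γ x 1) = F 0 := by
    intro x
    have h := himg x 1 (right_mem_Icc.2 zero_le_one)
    rw [h, one_smul]
    abel
  have hdist : ∀ x : E, ‖γ x 1 - x‖ ≤ c * ‖F 0 - F x‖ := by
    intro x
    have hb : ∀ t ∈ Icc (0:ℝ) 1, ‖(G (γ x t)) (F 0 - F x)‖ ≤ c * ‖F 0 - F x‖ := by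
      intro t _
      exact le_trans ((G (γ x t)).le_opNorm _)
        (mul_le_mul_of_nonneg_right (hGb _) (norm_nonneg _))
    have := Convex.norm_image_sub_le_of_norm_hasDerivWithin_le (hγd x) hb (convex_Icc 0 1)
      (left_mem_Icc.2 zero_le_one) (right_mem_Icc.2 zero_le_one)
    rw [hγ0 x] at this
    have h10 : ‖(1:ℝ) - 0‖ = 1 := by norm_num
    rw [h10, mul_one] at this
    exact this
  -- Grönwall comparison of two lifted curves
  have hcomp : ∀ x y : E, dist (γ x 1) (γ y 1) ≤
      gronwallBound (dist x y) (c*c*L*‖F 0 - F y‖) (c * ‖F y - F x‖ + 0) 1 := by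
    intro x y
    set K := Real.toNNReal (c*c*L*‖F 0 - F y‖) with hKdef
    have hKcoe : (K : ℝ) = c*c*L*‖F 0 - F y‖ := Real.coe_toNNReal _ (by positivity)
    have hlipv : ∀ t : ℝ, LipschitzWith K (fun z => (G z) (F 0 - F y)) := by
      intro _
      apply LipschitzWith.of_dist_le_mul
      intro a b
      rw [dist_eq_norm, dist_eq_norm, hKcoe]
      have h1 : G a (F 0 - F y) - G b (F 0 - F y) = (G a - G b) (F 0 - F y) := by
        simp [ContinuousLinearMap.sub_apply]
      rw [h1]
      calc ‖(G a - G b) (F 0 - F y)‖ ≤ ‖G a - G b‖ * ‖F 0 - F y‖ :=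
            (G a - G b).le_opNorm _
      _ ≤ ((c*c*L) * ‖a - b‖) * ‖F 0 - F y‖ :=
            mul_le_mul_of_nonneg_right (hGlip a b) (norm_nonneg _)
      _ = c*c*L*‖F 0 - F y‖ * ‖a - b‖ := by ring
    have fb : ∀ t ∈ Ico (0:ℝ) 1,
        dist ((G (γ x t)) (F 0 - F x)) ((fun (_ : ℝ) z => (G z) (F 0 - F y)) t (γ x t))
          ≤ c * ‖F y - F x‖ := by
      intro t _
      rw [dist_eq_norm, ← map_sub]
      have h1 : (F 0 - F x) - (F 0 - F y) = F y - F x := by abel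
      rw [h1]
      exact le_trans ((G (γ x t)).le_opNorm _)
        (mul_le_mul_of_nonneg_right (hGb _) (norm_nonneg _))
    have gb : ∀ t ∈ Ico (0:ℝ) 1,
        dist ((G (γ y t)) (F 0 - F y)) ((fun (_ : ℝ) z => (G z) (F 0 - F y)) t (γ y t))
          ≤ (0:ℝ) := by
      intro t _
      simp
    have ha : dist (γ x 0) (γ y 0) ≤ dist x y := by rw [hγ0, hγ0]
    have h := dist_le_of_approx_trajectories_ODE hlipv
      (hcont x) (hγd' x) fb (hcont y) (hγd' y) gb ha 1 (right_mem_Icc.2 zero_le_one)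
    rw [sub_zero, hKcoe] at h
    exact h
  -- local constancy of the endpoint map
  have hloc : ∀ x₀ : E, ∃ ε > 0, ∀ x, dist x x₀ < ε → γ x 1 = γ x₀ 1 := by
    intro x₀
    set Kr := c*c*L*‖F 0 - F x₀‖ with hKr
    have hKrnn : 0 ≤ Kr := by positivity
    set A := Real.exp Kr with hA
    have hApos : 0 < A := Real.exp_pos _
    obtain ⟨ε₁, hε₁pos, hFc⟩ := Metric.continuousAt_iff.1
      (hFd.continuous.continuousAt (x := x₀)) (ρ / (2 * (c+1) * A)) (by positivity)
    refine ⟨min ε₁ (ρ / (4 * A)), by positivity, fun x hx => ?_⟩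
    have hx1 : dist x x₀ < ε₁ := lt_of_lt_of_le hx (min_le_left _ _)
    have hx2 : dist x x₀ < ρ / (4 * A) := lt_of_lt_of_le hx (min_le_right _ _)
    have hF2 : dist (F x) (F x₀) < ρ / (2*(c+1)*A) := hFc hx1
    have hb1 : dist (γ x 1) (γ x₀ 1) ≤ (dist x x₀ + (c * ‖F x₀ - F x‖ + 0)) * A :=
      le_trans (hcomp x x₀)
        (gronwallBound_le_simple _ _ _ dist_nonneg hKrnn (by positivity))
    have hFn : ‖F x₀ - F x‖ = dist (F x) (F x₀) := by
      rw [dist_eq_norm, norm_sub_rev]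
    rw [hFn] at hb1
    have e1 : dist x x₀ * A < ρ / 4 := by
      have h4 := (lt_div_iff₀ (by positivity : (0:ℝ) < 4 * A)).1 hx2
      nlinarith
    have e2 : c * dist (F x) (F x₀) * A < ρ / 2 := by
      have h4 := (lt_div_iff₀ (by positivity : (0:ℝ) < 2*(c+1)*A)).1 hF2
      nlinarith [dist_nonneg (x := F x) (y := F x₀), hApos]
    have hlt : dist (γ x 1) (γ x₀ 1) < ρ := by nlinarith
    have hsep' := hsep (γ x 1) (γ x₀ 1) (by rw [hfib, hfib])
      (by rw [← dist_eq_norm']; exact hlt)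
    exact hsep'.symm
  -- the endpoint map is constant; at 0 it equals 0
  have hψ0 : γ 0 1 = 0 := by
    have hd0 : ∀ t ∈ Ico (0:ℝ) 1, HasDerivWithinAt (γ 0) 0 (Ici t) t := by
      intro t ht
      have := hγd' 0 t ht
      simpa using this
    have h := constant_of_has_deriv_right_zero (hcont 0) hd0 1 (right_mem_Icc.2 zero_le_one)
    rw [hγ0 0] at h
    exact h
  haveI : PreconnectedSpace E := ⟨convex_univ.isPreconnected⟩
  have hSopen : IsOpen {z : E | γ z 1 = 0} := by
    rw [Metric.isOpen_iff]
    intro z hz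
    obtain ⟨ε, hε, hl⟩ := hloc z
    exact ⟨ε, hε, fun w hw => by
      rw [mem_setOf_eq, hl w (mem_ball.1 hw)]; exact hz⟩
  have hScopen : IsOpen {z : E | γ z 1 = 0}ᶜ := by
    rw [Metric.isOpen_iff]
    intro z hz
    obtain ⟨ε, hε, hl⟩ := hloc z
    refine ⟨ε, hε, fun w hw => ?_⟩
    simp only [mem_compl_iff, mem_setOf_eq] at hz ⊢
    rw [hl w (mem_ball.1 hw)]
    exact hz
  have hSuniv : {z : E | γ z 1 = 0} = univ :=
    IsClopen.eq_univ ⟨isOpen_compl_iff.1 hScopen, hSopen⟩ ⟨0, hψ0⟩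
  intro x
  have hx : γ x 1 = 0 := by
    have : x ∈ {z : E | γ z 1 = 0} := hSuniv ▸ mem_univ x
    exact this
  have hd := hdist x
  rw [hx, zero_sub, norm_neg] at hd
  rw [norm_sub_rev (F 0)] at hd
  exact hd




/-- `iteratedFDeriv 1` is the curried `fderiv`. -/
lemma itfd_one_eq {E F : Type*} [NormedAddCommGroup E] [NormedSpace ℝ E]
    [NormedAddCommGroup F] [NormedSpace ℝ F] (f : E → F) (x : E) :
    iteratedFDeriv ℝ 1 f x =
      (continuousMultilinearCurryFin1 ℝ E F).symm (fderiv ℝ f x) := by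
  ext m
  simp [iteratedFDeriv_one_apply]

lemma norm_itfd_one {E F : Type*} [NormedAddCommGroup E] [NormedSpace ℝ E]
    [NormedAddCommGroup F] [NormedSpace ℝ F] (f : E → F) (x : E) :
    ‖iteratedFDeriv ℝ 1 f x‖ = ‖fderiv ℝ f x‖ := by
  rw [itfd_one_eq]
  exact LinearIsometryEquiv.norm_map _ _

lemma norm_comp_iso {X F G : Type*} [NormedAddCommGroup X] [NormedSpace ℝ X]
    [NormedAddCommGroup F] [NormedSpace ℝ F] [NormedAddCommGroup G] [NormedSpace ℝ G]
    (e : F ≃ₗᵢ[ℝ] G) (A : X →L[ℝ] F) :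
    ‖(e : F →L[ℝ] G).comp A‖ = ‖A‖ := by
  apply le_antisymm
  · apply ContinuousLinearMap.opNorm_le_bound _ (norm_nonneg A)
    intro v
    have h1 : ‖((e : F →L[ℝ] G).comp A) v‖ = ‖A v‖ := by
      simp only [ContinuousLinearMap.comp_apply]
      exact e.norm_map _
    rw [h1]
    exact A.le_opNorm v
  · apply ContinuousLinearMap.opNorm_le_bound _ (norm_nonneg _)
    intro v
    calc ‖A v‖ = ‖((e : F →L[ℝ] G).comp A) v‖ := by
          simp only [ContinuousLinearMap.comp_apply]
          exact (e.norm_map _).symm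
    _ ≤ ‖(e : F →L[ℝ] G).comp A‖ * ‖v‖ := ContinuousLinearMap.le_opNorm _ v

lemma coord_le_norm {n : ℕ} (w : En n) (i : Fin n) : |w i| ≤ ‖w‖ := by
  have h1 : (inner ℝ w (EuclideanSpace.single i (1:ℝ)) : ℝ) = w i := by
    rw [EuclideanSpace.inner_single_right]
    simp
  calc |w i| = |(inner ℝ w (EuclideanSpace.single i (1:ℝ)) : ℝ)| := by rw [h1]
  _ ≤ ‖w‖ * ‖EuclideanSpace.single i (1:ℝ)‖ := abs_real_inner_le_norm _ _
  _ = ‖w‖ := by rw [EuclideanSpace.norm_single]; simp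

lemma det_bound {n : ℕ} (P : Matrix (Fin n) (Fin n) ℝ) (K : ℝ)
    (h : ∀ i j, |P i j| ≤ K) : |P.det| ≤ (n.factorial : ℝ) * K ^ n := by
  rw [Matrix.det_apply]
  refine le_trans (Finset.abs_sum_le_sum_abs _ _) ?_
  have hterm : ∀ σ : Equiv.Perm (Fin n), |Equiv.Perm.sign σ • ∏ i, P (σ i) i| ≤ K ^ n := by
    intro σ
    have h1 : |Equiv.Perm.sign σ • ∏ i, P (σ i) i| = |∏ i, P (σ i) i| := by
      rcases Int.units_eq_one_or (Equiv.Perm.sign σ) with hs | hs <;> rw [hs] <;> simp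
    rw [h1, Finset.abs_prod]
    calc ∏ i, |P (σ i) i| ≤ ∏ _i : Fin n, K :=
          Finset.prod_le_prod (fun i _ => abs_nonneg _) (fun i _ => h _ _)
    _ = K ^ n := by rw [Finset.prod_const, Finset.card_univ, Fintype.card_fin]
  refine le_trans (Finset.sum_le_sum (fun σ _ => hterm σ)) ?_
  rw [Finset.sum_const, Finset.card_univ, Fintype.card_perm, Fintype.card_fin,
    nsmul_eq_mul]

section Phi

variable {n : ℕ} {φ : En n → En n → ℝ} {B : ℕ → ℕ → ℝ}

lemma hUopen : IsOpen {q : En n × En n | q.2 ≠ 0} := by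
  have : {q : En n × En n | q.2 ≠ 0} = Prod.snd ⁻¹' ({0}ᶜ) := rfl
  rw [this]
  exact isOpen_compl_singleton.preimage continuous_snd

lemma hpart (hφ : PhiTwo φ B) (x ξ : En n) (hξ : ξ ≠ 0) :
    HasFDerivAt (fun η => φ x η)
      ((fderiv ℝ (Function.uncurry φ) (x, ξ)).comp
        (ContinuousLinearMap.inr ℝ (En n) (En n))) ξ := by
  have hmem : (x, ξ) ∈ {q : En n × En n | q.2 ≠ 0} := hξ
  have hd : DifferentiableAt ℝ (Function.uncurry φ) (x, ξ) := by
    have h1 := hφ.2.1.contDiffAt (hUopen.mem_nhds hmem)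
    exact h1.differentiableAt (by simp)
  exact hd.hasFDerivAt.comp ξ (hasFDerivAt_prodMk_right x ξ)

lemma gradXi_cont (hφ : PhiTwo φ B) :
    ContinuousOn (fun ξ : En n => gradXi φ 0 ξ) {ξ : En n | ξ ≠ 0} := by
  have hP : ContinuousOn (fun p => fderiv ℝ (Function.uncurry φ) p)
      {q : En n × En n | q.2 ≠ 0} :=
    hφ.2.1.continuousOn_fderiv_of_isOpen hUopen (by exact_mod_cast le_top)
  have hemb : Continuous (fun ξ : En n => ((0 : En n), ξ)) :=
    continuous_const.prodMk continuous_id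
  have hmaps : MapsTo (fun ξ : En n => ((0 : En n), ξ)) {ξ : En n | ξ ≠ 0}
      {q : En n × En n | q.2 ≠ 0} := fun ξ hξ => hξ
  have hcomp : ContinuousOn
      (fun ξ : En n => ((InnerProductSpace.toDual ℝ (En n)).symm :
          StrongDual ℝ (En n) → En n)
        ((fderiv ℝ (Function.uncurry φ) ((0 : En n), ξ)).comp
          (ContinuousLinearMap.inr ℝ (En n) (En n)))) {ξ : En n | ξ ≠ 0} := by
    apply Continuous.comp_continuousOn (LinearIsometryEquiv.continuous _)
    apply Continuous.comp_continuousOn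
      (((ContinuousLinearMap.compL ℝ (En n) (En n × En n) ℝ).flip
        (ContinuousLinearMap.inr ℝ (En n) (En n))).continuous)
    exact hP.comp hemb.continuousOn hmaps
  refine ContinuousOn.congr hcomp ?_
  intro ξ hξ
  have h1 := (hpart hφ 0 ξ hξ).fderiv
  show gradXi φ 0 ξ = _
  rw [gradXi, gradient, h1]


/-- The real Riesz isometry as an `ℝ`-linear isometric equivalence. -/
def iotaR (E : Type*) [NormedAddCommGroup E] [InnerProductSpace ℝ E] [CompleteSpace E] :
    StrongDual ℝ E ≃ₗᵢ[ℝ] E where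
  toLinearEquiv :=
    { toFun := fun L => (InnerProductSpace.toDual ℝ E).symm L
      map_add' := fun L1 L2 => by simp
      map_smul' := fun r L => by simp
      invFun := fun v => InnerProductSpace.toDual ℝ E v
      left_inv := fun L => by simp
      right_inv := fun v => by simp }
  norm_map' := fun L => LinearIsometryEquiv.norm_map _ _

set_option maxHeartbeats 1000000 in
theorem grad_lower (hφ : PhiTwo φ B) {lam : ℝ} (hsnd : SNDCondition φ lam)
    (ξ₀ : En n) (hξ₀ : ‖ξ₀‖ = 1) (x₁ : En n) :
    ‖x₁‖ ≤ ((n:ℝ)^2 * (((n.factorial : ℝ) * (max (B 1 1) 1)^n) / lam) + 1) *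
      ‖gradXi φ x₁ ξ₀ - gradXi φ 0 ξ₀‖ := by
  classical
  have hξ0ne : ξ₀ ≠ 0 := by
    intro h; rw [h, norm_zero] at hξ₀; exact one_ne_zero hξ₀.symm
  have hlam : 0 < lam := hsnd.1
  set e := continuousMultilinearCurryFin1 ℝ (En n) ℝ with he
  set ι := iotaR (En n) with hι
  set H : En n → (En n →L[ℝ] ℝ) := fun y => fderiv ℝ (fun η => φ y η) ξ₀ with hH
  have hHeq : H = fun y => (fderiv ℝ (Function.uncurry φ) (y, ξ₀)).comp
      (ContinuousLinearMap.inr ℝ (En n) (En n)) :=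
    funext fun y => (hpart hφ y ξ₀ hξ0ne).fderiv
  -- smoothness of H
  have hΦ3 : ContDiffOn ℝ 3 (Function.uncurry φ) {q : En n × En n | q.2 ≠ 0} :=
    hφ.2.1.of_le (show ((3 : ℕ∞) : WithTop ℕ∞) ≤ ((⊤ : ℕ∞) : WithTop ℕ∞) from WithTop.coe_le_coe.2 le_top)
  have hH2 : ContDiff ℝ 2 H := by
    rw [hHeq]
    have h1 : ContDiffOn ℝ 2 (fun p => fderiv ℝ (Function.uncurry φ) p)
        {q : En n × En n | q.2 ≠ 0} := hΦ3.fderiv_of_isOpen hUopen (by norm_num)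
    have h2 : ContDiffOn ℝ 2
        (fun p => (fderiv ℝ (Function.uncurry φ) p).comp
          (ContinuousLinearMap.inr ℝ (En n) (En n)))
        {q : En n × En n | q.2 ≠ 0} := by
      exact (((ContinuousLinearMap.compL ℝ (En n) (En n × En n) ℝ).flip
        (ContinuousLinearMap.inr ℝ (En n) (En n))).contDiff).comp_contDiffOn h1
    have h3 : ContDiff ℝ 2 (fun y : En n => (y, ξ₀)) := contDiff_id.prodMk contDiff_const
    have h4 := h2.comp h3.contDiffOn (fun y (_ : y ∈ univ) => hξ0ne)
    exact contDiffOn_univ.1 h4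
  have hH1 : Differentiable ℝ H := hH2.differentiable (by norm_num)
  -- the curried first derivative object
  set g := fun y => iteratedFDeriv ℝ 1 (fun η => φ y η) ξ₀ with hg
  have hgeq : g = fun y => e.symm (H y) := by
    funext y
    exact itfd_one_eq (fun η => φ y η) ξ₀
  have hgeq' : g = (⇑e.symm ∘ H) := hgeq
  have hg2 : ContDiff ℝ 2 g := by
    rw [hgeq']
    exact (e.symm.contDiff.of_le le_top).comp hH2
  -- first derivative bound
  have hDg_eq : ∀ z, fderiv ℝ g z = ((e.symm : (En n →L[ℝ] ℝ) →L[ℝ] _)).comp (fderiv ℝ H z) := by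
    intro z
    rw [hgeq']
    exact e.symm.comp_fderiv
  have bound1 : ∀ z, ‖fderiv ℝ H z‖ ≤ B 1 1 := by
    intro z
    have hb := hφ.2.2 1 1 (by norm_num) z ξ₀ hξ0ne
    rw [hξ₀] at hb
    rw [Real.one_rpow, mul_one] at hb
    have h1 : mixedDerivNorm φ 1 1 z ξ₀ = ‖fderiv ℝ g z‖ := norm_itfd_one g z
    rw [h1, hDg_eq z, norm_comp_iso] at hb
    exact hb
  have hB11 : (0:ℝ) ≤ B 1 1 := le_trans (norm_nonneg (fderiv ℝ H 0)) (bound1 0)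
  -- Lipschitz bound for the derivative of H
  have hDg1 : ContDiff ℝ 1 (fun z => fderiv ℝ g z) := hg2.fderiv_right le_rfl
  have hDgd : Differentiable ℝ (fun z => fderiv ℝ g z) := hDg1.differentiable (by norm_num)
  have bound2g : ∀ z w, ‖fderiv ℝ g z - fderiv ℝ g w‖ ≤ B 1 2 * ‖z - w‖ := by
    intro z w
    have := Convex.norm_image_sub_le_of_norm_fderiv_le (𝕜 := ℝ) (C := B 1 2)
      (fun u _ => (hDgd u)) (fun u (_ : u ∈ (univ : Set (En n))) => by
      have hb := hφ.2.2 1 2 (by norm_num) u ξ₀ hξ0ne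
      rw [hξ₀] at hb
      rw [Real.one_rpow, mul_one] at hb
      have h1 : mixedDerivNorm φ 1 2 u ξ₀ = ‖iteratedFDeriv ℝ 2 g u‖ := rfl
      have h2 : ‖iteratedFDeriv ℝ 1 (fderiv ℝ g) u‖ = ‖iteratedFDeriv ℝ 2 g u‖ :=
        norm_iteratedFDeriv_fderiv
      rw [h1, ← h2, norm_itfd_one] at hb
      exact hb) convex_univ (mem_univ w) (mem_univ z)
    exact this
  have hB12 : (0:ℝ) ≤ B 1 2 := by
    have hb := hφ.2.2 1 2 (by norm_num) 0 ξ₀ hξ0ne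
    rw [hξ₀, Real.one_rpow, mul_one] at hb
    exact le_trans (norm_nonneg _) hb
  have bound2 : ∀ z w, ‖fderiv ℝ H z - fderiv ℝ H w‖ ≤ B 1 2 * ‖z - w‖ := by
    intro z w
    have h1 : fderiv ℝ g z - fderiv ℝ g w
        = ((e.symm : (En n →L[ℝ] ℝ) →L[ℝ] _)).comp (fderiv ℝ H z - fderiv ℝ H w) := by
      rw [hDg_eq z, hDg_eq w, ContinuousLinearMap.comp_sub]
    have h2 := bound2g z w
    rw [h1, norm_comp_iso] at h2
    exact h2
  -- the map F and its derivative
  set F : En n → En n := fun z => gradXi φ z ξ₀ with hF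
  have hFeq : F = (⇑ι ∘ H) := rfl
  have hFd : Differentiable ℝ F := by
    rw [hFeq]
    exact ι.differentiable.comp hH1
  have hA : ∀ z, fderiv ℝ F z = ((ι : StrongDual ℝ (En n) →L[ℝ] En n)).comp (fderiv ℝ H z) := by
    intro z
    rw [hFeq]
    exact ι.comp_fderiv
  -- matrix of the derivative
  set bas := (EuclideanSpace.basisFun (Fin n) ℝ).toBasis with hbas
  set M : En n → Matrix (Fin n) (Fin n) ℝ :=
    fun z => LinearMap.toMatrix bas bas (fderiv ℝ F z : En n →ₗ[ℝ] En n) with hM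
  have hιcoord : ∀ (Lf : StrongDual ℝ (En n)) (i : Fin n),
      (ι Lf) i = Lf (EuclideanSpace.single i 1) := by
    intro Lf i
    have h := InnerProductSpace.toDual_symm_apply (𝕜 := ℝ) (E := En n)
      (y := Lf) (x := EuclideanSpace.single i 1)
    rw [← h, EuclideanSpace.inner_single_right]
    simp only [starRingEnd_apply, star_trivial, one_mul]
    rfl
  have hMentry : ∀ z i j, M z i j
      = (fderiv ℝ H z (EuclideanSpace.single j 1)) (EuclideanSpace.single i 1) := by
    intro z i j
    show (LinearMap.toMatrix bas bas ((fderiv ℝ F z : En n →L[ℝ] En n) : En n →ₗ[ℝ] En n)) i j = _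
    rw [LinearMap.toMatrix_apply]
    have hbase : bas j = EuclideanSpace.single j 1 := by
      rw [hbas, OrthonormalBasis.coe_toBasis, EuclideanSpace.basisFun_apply]
    have hrepr : ∀ w : En n, bas.repr w i = w i := by
      intro w
      rw [hbas, OrthonormalBasis.coe_toBasis_repr_apply, EuclideanSpace.basisFun_repr]
    rw [hbase, hrepr]
    have : (fderiv ℝ F z : En n →ₗ[ℝ] En n) (EuclideanSpace.single j 1)
        = ι (fderiv ℝ H z (EuclideanSpace.single j 1)) := by
      rw [ContinuousLinearMap.coe_coe, hA z]
      rfl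
    rw [this, hιcoord]
  have hsndrel : ∀ z, M z = (sndMatrix φ z ξ₀).transpose := by
    intro z
    ext i j
    rw [hMentry]
    show _ = sndMatrix φ z ξ₀ j i
    have h1 : sndMatrix φ z ξ₀ j i
        = fderiv ℝ (fun y => H y (EuclideanSpace.single i 1)) z (EuclideanSpace.single j 1) := rfl
    rw [h1]
    rw [fderiv_clm_apply (hH1 z) (differentiableAt_const _)]
    simp
  have hdet : ∀ z, lam ≤ (M z).det := by
    intro z
    rw [hsndrel, Matrix.det_transpose]
    exact hsnd.2 z ξ₀ hξ0ne
  have hdetu : ∀ z, IsUnit (M z).det := by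
    intro z
    exact isUnit_iff_ne_zero.2 (by nlinarith [hdet z])
  -- the inverse
  set Ginv : En n → (En n →L[ℝ] En n) :=
    fun z => LinearMap.toContinuousLinearMap (Matrix.toLin bas bas (M z)⁻¹) with hGinv
  have hGF : ∀ z, (Ginv z).comp (fderiv ℝ F z) = ContinuousLinearMap.id ℝ (En n) := by
    intro z
    refine ContinuousLinearMap.ext fun v => ?_
    show (Matrix.toLin bas bas (M z)⁻¹) ((fderiv ℝ F z) v) = v
    have h1 : (fderiv ℝ F z) v = (Matrix.toLin bas bas (M z)) ((ContinuousLinearMap.id ℝ (En n)) v) := by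
      rw [hM, Matrix.toLin_toMatrix]
      rfl
    rw [h1]
    have h2 := Matrix.toLin_mul bas bas bas (M z)⁻¹ (M z)
    have h3 : (Matrix.toLin bas bas ((M z)⁻¹ * M z)) v
        = (Matrix.toLin bas bas (M z)⁻¹) ((Matrix.toLin bas bas (M z)) v) := by
      rw [h2]; rfl
    rw [show ((ContinuousLinearMap.id ℝ (En n)) v) = v from rfl, ← h3,
      Matrix.nonsing_inv_mul _ (hdetu z), Matrix.toLin_one]
    rfl
  have hFG : ∀ z, (fderiv ℝ F z).comp (Ginv z) = ContinuousLinearMap.id ℝ (En n) := by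
    intro z
    refine ContinuousLinearMap.ext fun v => ?_
    show (fderiv ℝ F z) ((Matrix.toLin bas bas (M z)⁻¹) v) = v
    have h1 : ∀ w, (fderiv ℝ F z) w = (Matrix.toLin bas bas (M z)) w := by
      intro w
      rw [hM, Matrix.toLin_toMatrix]
      rfl
    rw [h1]
    have h2 := Matrix.toLin_mul bas bas bas (M z) (M z)⁻¹
    have h3 : (Matrix.toLin bas bas ((M z) * (M z)⁻¹)) v
        = (Matrix.toLin bas bas (M z)) ((Matrix.toLin bas bas (M z)⁻¹) v) := by
      rw [h2]; rfl
    rw [← h3, Matrix.mul_nonsing_inv _ (hdetu z), Matrix.toLin_one]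
    rfl
  -- entry bounds
  set K₁ := max (B 1 1) 1 with hK₁
  have hK₁1 : (1:ℝ) ≤ K₁ := le_max_right _ _
  have hK₁0 : (0:ℝ) ≤ K₁ := by linarith
  have hMb : ∀ z i j, |M z i j| ≤ K₁ := by
    intro z i j
    rw [hMentry]
    have h1 : |(fderiv ℝ H z (EuclideanSpace.single j 1)) (EuclideanSpace.single i 1)|
        ≤ ‖fderiv ℝ H z (EuclideanSpace.single j 1)‖
            * ‖(EuclideanSpace.single i (1:ℝ) : En n)‖ := by
      rw [← Real.norm_eq_abs]
      exact ContinuousLinearMap.le_opNorm _ _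
    have h2 : ‖fderiv ℝ H z (EuclideanSpace.single j 1)‖
        ≤ ‖fderiv ℝ H z‖ * ‖(EuclideanSpace.single j (1:ℝ) : En n)‖ :=
      ContinuousLinearMap.le_opNorm _ _
    rw [EuclideanSpace.norm_single, norm_one, mul_one] at h1 h2
    exact le_trans h1 (le_trans h2 (le_trans (bound1 z) (le_max_left _ _)))
  set β := ((n.factorial : ℝ) * K₁^n) / lam with hβ
  have hβ0 : 0 ≤ β := div_nonneg (by positivity) hlam.le
  have hNb : ∀ z i j, |((M z)⁻¹) i j| ≤ β := by
    intro z i j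
    rw [Matrix.inv_def, Matrix.smul_apply, smul_eq_mul, abs_mul]
    have hdabs : |Ring.inverse (M z).det| ≤ lam⁻¹ := by
      rw [Ring.inverse_eq_inv, abs_inv]
      have hle : lam ≤ |(M z).det| := le_trans (hdet z) (le_abs_self _)
      exact inv_anti₀ hlam hle
    have hadj : |(M z).adjugate i j| ≤ (n.factorial : ℝ) * K₁^n := by
      rw [Matrix.adjugate_apply]
      apply det_bound
      intro a b
      rw [Matrix.updateRow_apply]
      by_cases hab : a = j
      · simp only [hab, if_true]
        by_cases hbi : b = i
        · subst hbi
          rw [Pi.single_eq_same]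
          simpa using hK₁1
        · rw [Pi.single_eq_of_ne hbi]
          simpa using hK₁0
      · simp only [hab, if_false]
        exact hMb z a b
    calc |Ring.inverse (M z).det| * |(M z).adjugate i j|
        ≤ lam⁻¹ * ((n.factorial:ℝ) * K₁^n) :=
          mul_le_mul hdabs hadj (abs_nonneg _) (by positivity)
    _ = β := by rw [hβ]; ring
  set c₀ := (n:ℝ)^2 * β + 1 with hc₀
  have hc₀pos : 0 < c₀ := by positivity
  have hGb : ∀ z, ‖Ginv z‖ ≤ c₀ := by
    intro z
    apply ContinuousLinearMap.opNorm_le_bound _ hc₀pos.le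
    intro v
    show ‖(Matrix.toLin bas bas (M z)⁻¹) v‖ ≤ c₀ * ‖v‖
    rw [Matrix.toLin_apply]
    refine le_trans (norm_sum_le _ _) ?_
    have hterm : ∀ i : Fin n, ‖((M z)⁻¹.mulVec (⇑(bas.repr v))) i • bas i‖
        ≤ ((n:ℝ) * β) * ‖v‖ := by
      intro i
      rw [norm_smul]
      have hbase : ‖bas i‖ = 1 := by
        rw [hbas, OrthonormalBasis.coe_toBasis, EuclideanSpace.basisFun_apply,
          EuclideanSpace.norm_single, norm_one]
      rw [hbase, mul_one, Real.norm_eq_abs]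
      have hmv : ((M z)⁻¹.mulVec (⇑(bas.repr v))) i
          = ∑ j, ((M z)⁻¹) i j * (bas.repr v) j := rfl
      rw [hmv]
      refine le_trans (Finset.abs_sum_le_sum_abs _ _) ?_
      have hj : ∀ j : Fin n, |((M z)⁻¹) i j * (bas.repr v) j| ≤ β * ‖v‖ := by
        intro j
        rw [abs_mul]
        have hrepr : (bas.repr v) j = v j := by
          rw [hbas, OrthonormalBasis.coe_toBasis_repr_apply, EuclideanSpace.basisFun_repr]
        refine mul_le_mul (hNb z i j) ?_ (abs_nonneg _) hβ0
        rw [hrepr]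
        exact coord_le_norm v j
      refine le_trans (Finset.sum_le_sum (fun j _ => hj j)) ?_
      rw [Finset.sum_const, Finset.card_univ, Fintype.card_fin, nsmul_eq_mul]
      ring_nf
      exact le_refl _
    refine le_trans (Finset.sum_le_sum (fun i _ => hterm i)) ?_
    rw [Finset.sum_const, Finset.card_univ, Fintype.card_fin, nsmul_eq_mul]
    have : (n:ℝ) * ((n:ℝ) * β * ‖v‖) = ((n:ℝ)^2*β) * ‖v‖ := by ring
    rw [this, hc₀]
    nlinarith [norm_nonneg v, sq_nonneg (n:ℝ)]
  set L := B 1 2 + 1 with hLdef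
  have hLpos : 0 < L := by rw [hLdef]; linarith
  have hDL : ∀ z w, ‖fderiv ℝ F z - fderiv ℝ F w‖ ≤ L * ‖z - w‖ := by
    intro z w
    have h1 : fderiv ℝ F z - fderiv ℝ F w
        = ((ι : StrongDual ℝ (En n) →L[ℝ] En n)).comp (fderiv ℝ H z - fderiv ℝ H w) := by
      rw [hA z, hA w, ← ContinuousLinearMap.comp_sub]
    rw [h1, norm_comp_iso]
    refine le_trans (bound2 z w) ?_
    refine mul_le_mul_of_nonneg_right ?_ (norm_nonneg _)
    rw [hLdef]; linarith
  have hmain := hadamard_bound F Ginv c₀ L hc₀pos hLpos hFd hGF hFG hGb hDL x₁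
  exact hmain


end Phi

end S7aux

/-- The exceptional set `B̃_r = ⋃_{ξ ∈ S^{n-1}} {x : |∇_ξφ(x,ξ)| ≤ 3r}`
has measure at most `C rⁿ` for `r ≥ 1`. -/
theorem statement7 (n : ℕ)
    (φ : En n → En n → ℝ) (B : ℕ → ℕ → ℝ) (hφ : PhiTwo φ B)
    (lam : ℝ) (hsnd : SNDCondition φ lam) :
    ∃ C : ℝ, 0 < C ∧ ∀ r : ℝ, 1 ≤ r →
      volume (⋃ ξ ∈ {ξ : En n | ‖ξ‖ = 1}, {x : En n | ‖gradXi φ x ξ‖ ≤ 3 * r})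
        ≤ ENNReal.ofReal (C * r ^ n) := by
  classical
  have hlam : 0 < lam := hsnd.1
  have hsph : {ξ : En n | ‖ξ‖ = 1} ⊆ {ξ : En n | ξ ≠ 0} := by
    intro ξ hξ
    rw [mem_setOf_eq] at hξ ⊢
    intro h0
    rw [h0, norm_zero] at hξ
    exact one_ne_zero hξ.symm
  have hspheq : {ξ : En n | ‖ξ‖ = 1} = Metric.sphere (0 : En n) 1 := by
    ext ξ
    simp [Metric.mem_sphere, dist_zero_right]
  have hcompact : IsCompact {ξ : En n | ‖ξ‖ = 1} := by
    rw [hspheq]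
    exact isCompact_sphere 0 1
  obtain ⟨C₀, hC₀⟩ := hcompact.exists_bound_of_continuousOn
    ((S7aux.gradXi_cont hφ).mono hsph)
  set C₀' := max C₀ 0 with hC₀'
  have hC₀'0 : (0:ℝ) ≤ C₀' := le_max_right _ _
  set c₀ := (n:ℝ)^2 * (((n.factorial : ℝ) * (max (B 1 1) 1)^n) / lam) + 1 with hc₀
  have hβ0 : (0:ℝ) ≤ (((n.factorial : ℝ) * (max (B 1 1) 1)^n) / lam) :=
    div_nonneg (by positivity) hlam.le
  have hc₀pos : 0 < c₀ := by
    have h1 : (0:ℝ) ≤ (n:ℝ)^2 * (((n.factorial : ℝ) * (max (B 1 1) 1)^n) / lam) :=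
      mul_nonneg (by positivity) hβ0
    rw [hc₀]
    linarith
  set κ := (volume (Metric.ball (0 : En n) 1)).toReal with hκ
  have hκ0 : 0 ≤ κ := ENNReal.toReal_nonneg
  refine ⟨(c₀ * (3 + C₀'))^n * κ + 1, by positivity, fun r hr => ?_⟩
  have hrpos : (0:ℝ) < r := lt_of_lt_of_le one_pos hr
  have hsub : (⋃ ξ ∈ {ξ : En n | ‖ξ‖ = 1}, {x : En n | ‖gradXi φ x ξ‖ ≤ 3 * r})
      ⊆ Metric.closedBall (0 : En n) (c₀ * (3 + C₀') * r) := by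
    intro x hx
    rw [mem_iUnion₂] at hx
    obtain ⟨ξ, hξ, hxξ⟩ := hx
    rw [mem_setOf_eq] at hxξ
    have hg := S7aux.grad_lower hφ hsnd ξ hξ x
    rw [Metric.mem_closedBall, dist_zero_right]
    have h2 : ‖gradXi φ 0 ξ‖ ≤ C₀' := le_trans (hC₀ ξ hξ) (le_max_left _ _)
    have h1 : ‖gradXi φ x ξ - gradXi φ 0 ξ‖ ≤ 3*r + C₀' := by
      refine le_trans (norm_sub_le _ _) ?_
      linarith
    calc ‖x‖ ≤ c₀ * ‖gradXi φ x ξ - gradXi φ 0 ξ‖ := hg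
    _ ≤ c₀ * (3*r + C₀') := mul_le_mul_of_nonneg_left h1 hc₀pos.le
    _ ≤ c₀ * (3 + C₀') * r := by
        have hkey : c₀ * C₀' * 1 ≤ c₀ * C₀' * r :=
          mul_le_mul_of_nonneg_left hr (mul_nonneg hc₀pos.le hC₀'0)
        nlinarith
  refine le_trans (measure_mono hsub) ?_
  have hR0 : 0 ≤ c₀ * (3 + C₀') * r := by positivity
  rw [MeasureTheory.Measure.addHaar_closedBall _ _ hR0, finrank_euclideanSpace_fin]
  have hballfin : volume (Metric.ball (0 : En n) 1) ≠ ⊤ :=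
    (MeasureTheory.measure_ball_lt_top).ne
  rw [← ENNReal.ofReal_toReal hballfin, ← hκ,
    ← ENNReal.ofReal_mul (by positivity)]
  apply ENNReal.ofReal_le_ofReal
  have hrn : (1:ℝ) ≤ r^n := by
    have h := pow_le_pow_left₀ (zero_le_one) hr n
    rwa [one_pow] at h
  have hrn0 : (0:ℝ) ≤ r^n := by positivity
  have heq : (c₀*(3+C₀')*r)^n * κ = ((c₀*(3+C₀'))^n * κ) * r^n := by
    rw [mul_pow]; ring
  rw [heq]
  have hcoef : (0:ℝ) ≤ (c₀*(3+C₀'))^n * κ := by positivity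
  nlinarith

end
end

section
/- Let 0 ≤ ρ ≤ 1, let φ ∈ Φ² satisfy the SND condition, and let 0 < r < 1. Define P_r = ⋃_{ξ ∈ S^{n−1}} { x ∈ ℝ^n : |φ(x,ξ)| ≤ 3r and |∇_ξφ(x,ξ)| ≤ 3r^{λ_ρ} }. Then there is a constant C, depending only on n, λ and finitely many of the seminorm constants B_{N,M} of φ, such that for every x ∉ P_r, every y ∈ ℝ^n with |y| < r, every integer j > 0 and every ξ ∈ S^{n−1}: 1 + 2^{jρ}|ξ·∇_ξφ(x,ξ)| + 2^{jρ₀}|∇_ξφ(x,ξ)| ≤ C (1 + 2^{jρ}|ξ·(∇_ξφ(x,ξ)−y)| + 2^{jρ₀}|∇_ξφ(x,ξ)−y|)^{1/λ_ρ}. -/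
open MeasureTheory Complex Real Set
open scoped ENNReal RealInnerProductSpace NNReal

noncomputable section

lemma euler_id {n : ℕ} {φ : En n → En n → ℝ} {B : ℕ → ℕ → ℝ} (hφ : PhiTwo φ B)
    (x ξ : En n) (hξ : ξ ≠ 0) : φ x ξ = ⟪ξ, gradXi φ x ξ⟫ := by
  have hopen : IsOpen {q : En n × En n | q.2 ≠ 0} :=
    isOpen_ne_fun continuous_snd continuous_const
  have hmem : (x, ξ) ∈ {q : En n × En n | q.2 ≠ 0} := hξ
  have hca : ContDiffAt ℝ (⊤ : ℕ∞) (Function.uncurry φ) (x, ξ) :=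
    (hφ.2.1.contDiffAt (hopen.mem_nhds hmem))
  have hdiff : DifferentiableAt ℝ (fun η => φ x η) ξ := by
    have hc : ContDiffAt ℝ (⊤ : ℕ∞) (fun η : En n => ((x, η) : En n × En n)) ξ :=
      ContDiffAt.prodMk contDiffAt_const contDiffAt_id
    exact (hca.comp ξ hc).differentiableAt (by simp)
  have h1 : HasDerivAt (fun t : ℝ => φ x (t • ξ)) (fderiv ℝ (fun η => φ x η) ξ ξ) 1 := by
    have hsm : HasDerivAt (fun t : ℝ => t • ξ) ξ 1 := by
      simpa using (hasDerivAt_id (1:ℝ)).smul_const ξ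
    have hF : HasFDerivAt (fun η => φ x η) (fderiv ℝ (fun η => φ x η) ξ) ((1:ℝ) • ξ) := by
      simpa using hdiff.hasFDerivAt
    exact hF.comp_hasDerivAt (1:ℝ) hsm
  have h2 : HasDerivAt (fun t : ℝ => φ x (t • ξ)) (φ x ξ) 1 := by
    have heq : (fun t : ℝ => t * φ x ξ) =ᶠ[nhds (1:ℝ)] fun t => φ x (t • ξ) := by
      filter_upwards [eventually_gt_nhds (by norm_num : (0:ℝ) < 1)] with t ht
      exact (hφ.1 x ξ t ht).symm
    have : HasDerivAt (fun t : ℝ => t * φ x ξ) (φ x ξ) 1 := by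
      simpa using (hasDerivAt_id (1:ℝ)).mul_const (φ x ξ)
    exact this.congr_of_eventuallyEq heq.symm
  have hfd : fderiv ℝ (fun η => φ x η) ξ ξ = φ x ξ := h1.unique h2
  have hgr : ⟪gradXi φ x ξ, ξ⟫ = fderiv ℝ (fun η => φ x η) ξ ξ :=
    InnerProductSpace.toDual_symm_apply
  rw [real_inner_comm] at hgr
  rw [hgr, hfd]

set_option maxHeartbeats 1600000 in
/-- Pointwise lower bound off the exceptional set `P_r`:
for `x ∉ P_r`, `|y| < r`, `j > 0` and unit `ξ`,
`1 + 2^{jρ}|ξ·∇_ξφ| + 2^{jρ₀}|∇_ξφ| ≤ C (1 + 2^{jρ}|ξ·(∇_ξφ − y)| + 2^{jρ₀}|∇_ξφ − y|)^{1/λ_ρ}`. -/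
theorem statement9 (n : ℕ) (ρ : ℝ) (hρ₀ : 0 ≤ ρ) (hρ₁ : ρ ≤ 1)
    (φ : En n → En n → ℝ) (B : ℕ → ℕ → ℝ) (hφ : PhiTwo φ B)
    (lam : ℝ) (hsnd : SNDCondition φ lam) :
    ∃ C : ℝ, 0 < C ∧ ∀ r : ℝ, 0 < r → r < 1 → ∀ x : En n,
      x ∉ (⋃ ξ ∈ {ξ : En n | ‖ξ‖ = 1},
          {x : En n | |φ x ξ| ≤ 3 * r ∧ ‖gradXi φ x ξ‖ ≤ 3 * r ^ lamRho ρ}) →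
      ∀ y : En n, ‖y‖ < r → ∀ j : ℕ, 0 < j → ∀ ξ : En n, ‖ξ‖ = 1 →
      1 + (2:ℝ) ^ ((j:ℝ) * ρ) * |⟪ξ, gradXi φ x ξ⟫| +
          (2:ℝ) ^ ((j:ℝ) * min ρ (1/2)) * ‖gradXi φ x ξ‖
        ≤ C * (1 + (2:ℝ) ^ ((j:ℝ) * ρ) * |⟪ξ, gradXi φ x ξ - y⟫| +
            (2:ℝ) ^ ((j:ℝ) * min ρ (1/2)) * ‖gradXi φ x ξ - y‖) ^ (1 / lamRho ρ) := by
  refine ⟨12, by norm_num, ?_⟩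
  intro r hr0 hr1 x hx y hy j hj ξ hξ
  have hξ0 : ξ ≠ 0 := by intro h; rw [h] at hξ; simp at hξ
  set g := gradXi φ x ξ with hg
  have hE : φ x ξ = ⟪ξ, g⟫ := euler_id hφ x ξ hξ0
  have hxP : ¬ (|φ x ξ| ≤ 3 * r ∧ ‖g‖ ≤ 3 * r ^ lamRho ρ) := fun h =>
    hx (Set.mem_biUnion hξ h)
  rw [hE] at hxP
  push_neg at hxP
  set P : ℝ := (2:ℝ) ^ ((j:ℝ) * ρ) with hPdef
  set Q : ℝ := (2:ℝ) ^ ((j:ℝ) * min ρ (1/2)) with hQdef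
  set a := |⟪ξ, g⟫| with ha
  set d := ‖g‖ with hd
  set a' := |⟪ξ, g - y⟫| with ha'
  set d' := ‖g - y‖ with hd'
  have ha0 : 0 ≤ a := abs_nonneg _
  have hd0 : 0 ≤ d := norm_nonneg _
  have ha'0 : 0 ≤ a' := abs_nonneg _
  have hd'0 : 0 ≤ d' := norm_nonneg _
  have had : a ≤ d := by simpa [hξ] using abs_real_inner_le_norm ξ g
  have hsub : a - r ≤ a' := by
    have h1 : ⟪ξ, g⟫ = ⟪ξ, g - y⟫ + ⟪ξ, y⟫ := by rw [inner_sub_right]; ring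
    have h2 : |⟪ξ, y⟫| ≤ ‖y‖ := by simpa [hξ] using abs_real_inner_le_norm ξ y
    have h3 : a ≤ a' + |⟪ξ, y⟫| := by rw [ha, h1]; exact abs_add_le _ _
    linarith
  have hdsub : d - r ≤ d' := by
    have h1 : ‖g‖ - ‖g - y‖ ≤ ‖g - (g - y)‖ := norm_sub_norm_le g (g - y)
    simp only [sub_sub_cancel] at h1
    linarith
  have hjρ : (0:ℝ) ≤ (j:ℝ) * ρ := by positivity
  have hjm : (0:ℝ) ≤ (j:ℝ) * min ρ (1/2) := by
    have : (0:ℝ) ≤ min ρ (1/2) := le_min hρ₀ (by norm_num)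
    positivity
  have hP1 : 1 ≤ P := by
    rw [hPdef]
    calc (1:ℝ) = (2:ℝ) ^ (0:ℝ) := (Real.rpow_zero 2).symm
    _ ≤ (2:ℝ) ^ ((j:ℝ) * ρ) := Real.rpow_le_rpow_of_exponent_le one_le_two hjρ
  have hQ1 : 1 ≤ Q := by
    rw [hQdef]
    calc (1:ℝ) = (2:ℝ) ^ (0:ℝ) := (Real.rpow_zero 2).symm
    _ ≤ (2:ℝ) ^ ((j:ℝ) * min ρ (1/2)) := Real.rpow_le_rpow_of_exponent_le one_le_two hjm
  have hP0 : (0:ℝ) < P := lt_of_lt_of_le one_pos hP1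
  have hQ0 : (0:ℝ) < Q := lt_of_lt_of_le one_pos hQ1
  set S := 1 + P * a' + Q * d' with hSdef
  have hS1 : 1 ≤ S := by
    have := mul_nonneg hP0.le ha'0
    have := mul_nonneg hQ0.le hd'0
    rw [hSdef]; linarith
  have hS0 : (0:ℝ) < S := lt_of_lt_of_le one_pos hS1
  rcases le_or_gt ρ (1/2) with hc | hc
  · -- case ρ ≤ 1/2
    have hlam : lamRho ρ = 1 := if_pos hc
    have hmin : min ρ (1/2) = ρ := min_eq_left hc
    have hQP : Q = P := by rw [hQdef, hPdef, hmin]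
    rw [hlam, Real.rpow_one] at hxP
    rw [hlam]
    norm_num
    have hd3 : 3 * r < d := by
      rcases le_or_gt a (3 * r) with h | h
      · exact hxP h
      · linarith
    have e1 : P * (a - r) ≤ P * a' := mul_le_mul_of_nonneg_left hsub hP0.le
    have e2 : P * (d - r) ≤ P * d' := mul_le_mul_of_nonneg_left hdsub hP0.le
    have e3 : P * (3 * r) ≤ P * d := mul_le_mul_of_nonneg_left hd3.le hP0.le
    have e4 : 0 ≤ P * a := mul_nonneg hP0.le ha0
    have e5 : 0 ≤ P * d := mul_nonneg hP0.le hd0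
    rw [hQP] at hSdef ⊢
    nlinarith [hSdef]
  · -- case 1/2 < ρ
    have hρpos : (0:ℝ) < ρ := lt_trans (by norm_num) hc
    have hlam : lamRho ρ = 1 / (2 * ρ) := if_neg (not_le.2 hc)
    have hexp : 1 / lamRho ρ = 2 * ρ := by
      rw [hlam]; field_simp
    set e := 2 * ρ with he
    have he1 : 1 ≤ e := by rw [he]; linarith
    have he2 : e ≤ 2 := by rw [he]; linarith
    have he0 : (0:ℝ) < e := lt_of_lt_of_le one_pos he1
    have hmin : min ρ (1/2) = 1/2 := min_eq_right hc.le
    have hPQ : P = Q ^ e := by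
      have harr : ((j:ℝ) * (1/2)) * e = (j:ℝ) * ρ := by rw [he]; ring
      rw [hPdef, hQdef, hmin, ← Real.rpow_mul (by norm_num : (0:ℝ) ≤ 2), harr]
    set s := r ^ lamRho ρ with hs
    have hs0 : (0:ℝ) < s := by rw [hs]; positivity
    have hse : s ^ e = r := by
      rw [hs, hlam, one_div, Real.rpow_inv_rpow hr0.le he0.ne']
    have hrs : r ≤ s := by
      have h1e : 1 / e ≤ 1 := by
        rw [div_le_one he0]; exact he1
      have := Real.rpow_le_rpow_of_exponent_ge hr0 hr1.le h1e
      rw [Real.rpow_one] at this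
      rw [hs, hlam]
      exact this
    rw [hexp]
    have hSeS : S ≤ S ^ e := by
      have := Real.rpow_le_rpow_of_exponent_le hS1 he1
      rwa [Real.rpow_one] at this
    have hSe1 : 1 ≤ S ^ e := le_trans hS1 hSeS
    rcases lt_or_ge (3 * s) d with hd3 | hd3
    · -- Case I : d > 3s
      have hd3r : 3 * r < d := lt_of_le_of_lt (by linarith) hd3
      have hd'23 : 2/3 * d ≤ d' := by linarith
      have hPr : P * r ≤ (Q * (d/3)) ^ e := by
        have h1 : s ≤ d / 3 := by linarith
        have h2 : r ≤ (d/3) ^ e := by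
          rw [← hse]; exact Real.rpow_le_rpow hs0.le h1 he0.le
        calc P * r = Q ^ e * r := by rw [hPQ]
        _ ≤ Q ^ e * ((d/3) ^ e) := mul_le_mul_of_nonneg_left h2 (by positivity)
        _ = (Q * (d/3)) ^ e := (Real.mul_rpow hQ0.le (by linarith)).symm
      set U := 2/3 * (Q * d) with hU
      have hU0 : 0 ≤ U := by rw [hU]; positivity
      have hUS : U ≤ S := by
        have h1 : Q * (2/3 * d) ≤ Q * d' := mul_le_mul_of_nonneg_left hd'23 hQ0.le
        have h2 : 0 ≤ P * a' := mul_nonneg hP0.le ha'0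
        rw [hU, hSdef]; linarith
      have hUe : U ^ e ≤ S ^ e := Real.rpow_le_rpow hU0 hUS he0.le
      have hQd32 : (Q * (d/3)) ^ e ≤ U ^ e * (1/2) := by
        have hqd : Q * (d/3) = U * (1/2) := by rw [hU]; ring
        have hhalf : ((1:ℝ)/2) ^ e ≤ 1/2 := by
          have := Real.rpow_le_rpow_of_exponent_ge (by norm_num : (0:ℝ) < 1/2)
            (by norm_num : (1:ℝ)/2 ≤ 1) he1
          rwa [Real.rpow_one] at this
        calc (Q * (d/3)) ^ e = U ^ e * ((1/2:ℝ)) ^ e := by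
              rw [hqd, Real.mul_rpow hU0 (by norm_num)]
        _ ≤ U ^ e * (1/2) := mul_le_mul_of_nonneg_left hhalf (by positivity)
      rcases le_or_gt (P * a) (2 * (Q * (d/3)) ^ e) with hA | hA
      · -- I.a
        have h1 : P * a ≤ U ^ e := by linarith
        have h2 : Q * d = 3/2 * U := by rw [hU]; ring
        have h3 : Q * d ≤ 3/2 * (S ^ e) := by
          rw [h2]; linarith [le_trans hUS hSeS]
        linarith
      · -- I.b
        have h2r : 2 * r < a := by
          by_contra hcon
          push_neg at hcon
          have hm : P * a ≤ P * (2 * r) := mul_le_mul_of_nonneg_left hcon hP0.le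
          linarith
        have ha23 : a / 2 ≤ a' := by linarith
        have e1 : P * (a/2) ≤ P * a' := mul_le_mul_of_nonneg_left ha23 hP0.le
        have e2 : Q * (2/3 * d) ≤ Q * d' := mul_le_mul_of_nonneg_left hd'23 hQ0.le
        have e4 : 0 ≤ P * a := mul_nonneg hP0.le ha0
        have e5 : 0 ≤ Q * d := mul_nonneg hQ0.le hd0
        have h12 : 1 + P * a + Q * d ≤ 12 * S := by rw [hSdef]; linarith
        linarith
    · -- Case II : d ≤ 3s
      have ha3 : 3 * r < a := by
        by_contra h
        push_neg at h
        have := hxP h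
        linarith
      have ha23 : 2/3 * a ≤ a' := by linarith
      set t := P * a with ht
      have ht0 : 0 < t := by rw [ht]; exact mul_pos hP0 (by linarith)
      have hQd : Q * d ≤ 3 * t ^ (e⁻¹) := by
        have hQs0 : 0 ≤ Q * s := by positivity
        have hQse : (Q * s) ^ e ≤ t := by
          have h1 : (Q * s) ^ e = P * r := by
            rw [Real.mul_rpow hQ0.le hs0.le, hse, ← hPQ]
          rw [h1, ht]
          have hm : P * (3 * r) ≤ P * a := mul_le_mul_of_nonneg_left ha3.le hP0.le
          have hpr : 0 ≤ P * r := by positivity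
          linarith
        have h2 : Q * s ≤ t ^ (e⁻¹) := by
          have h3 := Real.rpow_le_rpow (by positivity : (0:ℝ) ≤ (Q*s)^e) hQse
            (by positivity : (0:ℝ) ≤ e⁻¹)
          rwa [Real.rpow_rpow_inv hQs0 he0.ne'] at h3
        calc Q * d ≤ Q * (3 * s) := mul_le_mul_of_nonneg_left (by linarith) hQ0.le
        _ = 3 * (Q * s) := by ring
        _ ≤ 3 * t ^ (e⁻¹) := by linarith
      have hSa : 1 + 2/3 * t ≤ S := by
        have e1 : P * (2/3 * a) ≤ P * a' := mul_le_mul_of_nonneg_left ha23 hP0.le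
        have e2 : 0 ≤ Q * d' := mul_nonneg hQ0.le hd'0
        rw [hSdef, ht]; linarith
      rcases le_or_gt t 1 with htc | htc
      · -- II.a
        have h1 : t ^ (e⁻¹) ≤ 1 := Real.rpow_le_one ht0.le htc (by positivity)
        have h2 : Q * d ≤ 3 := by linarith
        linarith
      · -- II.b
        have h1 : t ^ (e⁻¹) ≤ t := by
          have h2 : e⁻¹ ≤ 1 := by
            rw [inv_le_one_iff₀]; right; exact he1
          have := Real.rpow_le_rpow_of_exponent_le htc.le h2
          rwa [Real.rpow_one] at this
        have hQd' : Q * d ≤ 3 * t := by linarith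
        have hSt : 2/3 * t ≤ S := by linarith
        have hkey : 4/9 * t ≤ S ^ e := by
          have h3 : (2/3 * t) ^ e ≤ S ^ e := Real.rpow_le_rpow (by positivity) hSt he0.le
          have h4 : (2/3 * t) ^ e = (2/3:ℝ) ^ e * t ^ e := Real.mul_rpow (by norm_num) ht0.le
          have h5 : (4/9:ℝ) ≤ (2/3:ℝ) ^ e := by
            have h6 := Real.rpow_le_rpow_of_exponent_ge (by norm_num : (0:ℝ) < 2/3)
              (by norm_num : (2:ℝ)/3 ≤ 1) he2
            have h7 : ((2:ℝ)/3) ^ (2:ℝ) = 4/9 := by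
              rw [show (2:ℝ) = ((2:ℕ):ℝ) by norm_num, Real.rpow_natCast]; norm_num
            rw [h7] at h6
            exact h6
          have h8 : t ≤ t ^ e := by
            have := Real.rpow_le_rpow_of_exponent_le htc.le he1
            rwa [Real.rpow_one] at this
          have h9 : (4/9) * t ≤ (2/3:ℝ) ^ e * t ^ e := by
            apply mul_le_mul h5 h8 ht0.le (by positivity)
          linarith [h4 ▸ h3]
        linarith


end
end

section
/- Let 0 < p ≤ 1, let b be an L²-atom for h^p(ℝ^n) supported in the ball B_r(0) with 0 < r < 1, and let N_p be the least integer strictly greater than n(1/p−1). Then there is a constant C, depending only on n and p, such that for every multi-index α and every ξ ≠ 0 with r|ξ| ≤ 1: |∂_ξ^α b̂(ξ)| ≤ C |ξ|^{N_p−|α|} r^{N_p − n(1/p−1)}, where b̂ is the Fourier transform of b. -/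
open MeasureTheory Complex Real Set
open scoped ENNReal RealInnerProductSpace NNReal

noncomputable section
set_option maxHeartbeats 1000000

namespace S17aux

open VectorFourier

variable {n : ℕ}

lemma abs_apply_le_norm (v : En n) (i : Fin n) : |v i| ≤ ‖v‖ := by
  have h := abs_real_inner_le_norm (EuclideanSpace.single i (1:ℝ)) v
  rw [EuclideanSpace.inner_single_left] at h
  simpa [EuclideanSpace.norm_single] using h

lemma prod_comp_eq_prod_pow {m : ℕ} (c : Fin m → Fin n) (v : En n) :
    (∏ t : Fin m, (v (c t) : ℂ)) =
      ∏ i : Fin n, ((v i : ℂ)) ^ (Finset.univ.filter (fun t => c t = i)).card := by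
  classical
  calc (∏ t : Fin m, (v (c t) : ℂ))
      = ∏ i : Fin n, ∏ t ∈ Finset.univ.filter (fun t => c t = i), (v (c t) : ℂ) :=
        (Finset.prod_fiberwise Finset.univ c _).symm
    _ = _ := by
        refine Finset.prod_congr rfl fun i _ => ?_
        rw [Finset.prod_congr rfl fun t ht => by rw [(Finset.mem_filter.1 ht).2],
          Finset.prod_const]

lemma sum_card_fiber {m : ℕ} (c : Fin m → Fin n) :
    ∑ i : Fin n, (Finset.univ.filter (fun t => c t = i)).card = m := by
  classical
  rw [← Finset.card_eq_sum_card_fiberwise (fun t _ => Finset.mem_univ (c t))]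
  simp

lemma hchar (L : En n →L[ℝ] En n →L[ℝ] ℝ) (hL : L = (2*π)⁻¹ • innerSL ℝ) (v w : En n) :
    (Real.fourierChar (-(L.toLinearMap₁₂ v w)) : ℂ) = Complex.exp (-(Complex.I * (⟪v, w⟫ : ℂ))) := by
  rw [Real.fourierChar_apply]
  congr 1
  subst hL
  have hπ : (2*π) ≠ 0 := by positivity
  show ((2 * π * -((2*π)⁻¹ * ⟪v, w⟫) : ℝ) : ℂ) * Complex.I = _
  push_cast
  rw [show (2*(π:ℂ)) * -((2*(π:ℂ))⁻¹ * (⟪v, w⟫:ℂ)) = -((2*(π:ℂ)) * (2*(π:ℂ))⁻¹ * (⟪v, w⟫:ℂ)) by ring,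
    mul_inv_cancel₀ (by exact_mod_cast hπ)]
  ring

lemma ftrans_eq (L : En n →L[ℝ] En n →L[ℝ] ℝ) (hL : L = (2*π)⁻¹ • innerSL ℝ) (b : En n → ℂ) :
    ftrans b = VectorFourier.fourierIntegral Real.fourierChar volume L.toLinearMap₁₂ b := by
  ext w
  unfold ftrans VectorFourier.fourierIntegral
  congr 1
  ext v
  rw [Circle.smul_def, hchar L hL, smul_eq_mul]

lemma integrable_mul_bound {r : ℝ} {b : En n → ℂ} (hbInt : Integrable b volume)
    (hsupp : ∀ x : En n, x ∉ Metric.closedBall (0:En n) r → b x = 0)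
    {φ : En n → ℂ} (hφ : Continuous φ) (Cφ : ℝ)
    (hbd : ∀ v ∈ Metric.closedBall (0:En n) r, ‖φ v‖ ≤ Cφ) :
    Integrable (fun v => φ v * b v) volume := by
  refine (hbInt.norm.const_mul Cφ).mono' (hφ.aestronglyMeasurable.mul hbInt.1) ?_
  filter_upwards with v
  by_cases hv : b v = 0
  · simp [hv]
  · have hm : v ∈ Metric.closedBall (0:En n) r := by
      by_contra h; exact hv (hsupp v h)
    rw [norm_mul]
    exact mul_le_mul_of_nonneg_right (hbd v hm) (norm_nonneg _)

lemma norm_integral_mul_bound {r : ℝ} {b : En n → ℂ} (hbInt : Integrable b volume)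
    (hsupp : ∀ x : En n, x ∉ Metric.closedBall (0:En n) r → b x = 0)
    {φ : En n → ℂ} (Cφ : ℝ)
    (hbd : ∀ v ∈ Metric.closedBall (0:En n) r, ‖φ v‖ ≤ Cφ) :
    ‖∫ v, φ v * b v‖ ≤ Cφ * ∫ v, ‖b v‖ := by
  calc ‖∫ v, φ v * b v‖ ≤ ∫ v, Cφ * ‖b v‖ := by
        refine norm_integral_le_of_norm_le (hbInt.norm.const_mul Cφ) ?_
        filter_upwards with v
        by_cases hv : b v = 0
        · simp [hv]
        · have hm : v ∈ Metric.closedBall (0:En n) r := by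
            by_contra h; exact hv (hsupp v h)
          rw [norm_mul]
          exact mul_le_mul_of_nonneg_right (hbd v hm) (norm_nonneg _)
    _ = Cφ * ∫ v, ‖b v‖ := integral_const_mul _ _

lemma cancel_lemma {p r : ℝ} (hr1 : r < 1) {b : En n → ℂ}
    (hbInt : Integrable b volume)
    (hsupp : ∀ x : En n, x ∉ Metric.closedBall (0:En n) r → b x = 0)
    (hmom : ∀ α : Fin n → ℕ, ((∑ i, α i : ℕ) : ℝ) ≤ (n:ℝ) * (1/p - 1) →
        ∫ x : En n, (∏ i, ((x i : ℂ) ^ α i)) * b x = 0)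
    (m : ℕ) (hm : (m:ℝ) ≤ (n:ℝ) * (1/p - 1)) (w : Fin m → En n) :
    ∫ v, (∏ t : Fin m, (⟪v, w t⟫ : ℂ)) * b v = 0 := by
  classical
  have hpt : ∀ v : En n, (∏ t : Fin m, (⟪v, w t⟫ : ℂ))
      = ∑ c : Fin m → Fin n, ∏ t : Fin m, ((v (c t) * w t (c t) : ℝ) : ℂ) := by
    intro v
    have h1 : ∀ t, (⟪v, w t⟫ : ℂ) = ∑ i : Fin n, ((v i * w t i : ℝ) : ℂ) := by
      intro t
      have : ⟪v, w t⟫ = ∑ i : Fin n, v i * w t i := by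
        simp [PiLp.inner_apply, RCLike.inner_apply]
        exact Finset.sum_congr rfl fun _ _ => mul_comm _ _
      rw [this]
      push_cast
      rfl
    simp_rw [h1]
    rw [Finset.prod_univ_sum]
    simp
  have hIc : ∀ c : Fin m → Fin n,
      Integrable (fun v => (∏ t : Fin m, ((v (c t) * w t (c t) : ℝ) : ℂ)) * b v) volume := by
    intro c
    refine integrable_mul_bound hbInt hsupp ?_ (∏ t : Fin m, |w t (c t)|) ?_
    · apply continuous_finset_prod
      intro t _
      exact Complex.continuous_ofReal.comp
        (((EuclideanSpace.proj (c t) : En n →L[ℝ] ℝ).continuous).mul continuous_const)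
    · intro v hv
      rw [mem_closedBall_zero_iff] at hv
      rw [norm_prod]
      refine Finset.prod_le_prod (fun t _ => norm_nonneg _) fun t _ => ?_
      rw [Complex.norm_real, Real.norm_eq_abs, abs_mul]
      have h2 : |v (c t)| ≤ 1 := le_trans (abs_apply_le_norm v (c t)) (le_trans hv hr1.le)
      calc |v (c t)| * |w t (c t)| ≤ 1 * |w t (c t)| :=
            mul_le_mul_of_nonneg_right h2 (abs_nonneg _)
        _ = |w t (c t)| := one_mul _
  calc ∫ v, (∏ t : Fin m, (⟪v, w t⟫ : ℂ)) * b v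
      = ∫ v, ∑ c : Fin m → Fin n, (∏ t : Fin m, ((v (c t) * w t (c t) : ℝ) : ℂ)) * b v := by
        congr 1; ext v; rw [hpt v, Finset.sum_mul]
    _ = ∑ c : Fin m → Fin n, ∫ v, (∏ t : Fin m, ((v (c t) * w t (c t) : ℝ) : ℂ)) * b v :=
        integral_finset_sum _ (fun c _ => hIc c)
    _ = 0 := by
        refine Finset.sum_eq_zero fun c _ => ?_
        have hsplit : ∀ v : En n, (∏ t : Fin m, ((v (c t) * w t (c t) : ℝ) : ℂ))
            = (∏ t : Fin m, ((w t (c t) : ℝ) : ℂ)) * ∏ i : Fin n,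
                ((v i : ℂ)) ^ (Finset.univ.filter (fun t => c t = i)).card := by
          intro v
          rw [← prod_comp_eq_prod_pow c v, ← Finset.prod_mul_distrib]
          congr 1; ext t; push_cast; ring
        simp_rw [hsplit, mul_assoc]
        rw [integral_const_mul]
        rw [hmom (fun i => (Finset.univ.filter (fun t => c t = i)).card) ?_, mul_zero]
        rw [sum_card_fiber c]
        exact hm

lemma L1_bound {p r : ℝ} (hr0 : 0 < r) {b : En n → ℂ} (hb : MemLp b 2 volume)
    (hsupp : ∀ x : En n, x ∉ Metric.closedBall (0 : En n) r → b x = 0)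
    (hb2 : eLpNorm b 2 volume ≤ ENNReal.ofReal (r ^ ((n:ℝ) * (1/2 - 1/p))))
    (hbInt : Integrable b volume) :
    ∫ v, ‖b v‖ ≤ (volume (Metric.ball (0:En n) 1)).toReal ^ ((1:ℝ)/2)
      * r ^ ((n:ℝ) * (1 - 1/p)) := by
  set Vb : ℝ := (volume (Metric.ball (0:En n) 1)).toReal with hVb
  have hVb0 : 0 ≤ Vb := ENNReal.toReal_nonneg
  have hVbne : volume (Metric.ball (0:En n) 1) ≠ ∞ := measure_ball_lt_top.ne
  have hsupp' : Function.support b ⊆ Metric.closedBall 0 r :=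
    Function.support_subset_iff'.2 hsupp
  have h1 : eLpNorm b 1 volume
      ≤ eLpNorm b 2 volume * (volume (Metric.closedBall (0:En n) r)) ^ ((1:ℝ)/2) := by
    rw [← eLpNorm_restrict_eq_of_support_subset hsupp' (p := 1),
        ← eLpNorm_restrict_eq_of_support_subset hsupp' (p := 2)]
    have h := eLpNorm_le_eLpNorm_mul_rpow_measure_univ (p := 1) (q := 2)
      one_le_two (hb.1.restrict (s := Metric.closedBall 0 r))
    have he : (1 / (1:ℝ≥0∞).toReal - 1 / (2:ℝ≥0∞).toReal) = (1:ℝ)/2 := by norm_num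
    rw [he, Measure.restrict_apply_univ] at h
    exact h
  have hball : volume (Metric.closedBall (0:En n) r)
      = ENNReal.ofReal (r ^ n) * volume (Metric.ball (0:En n) 1) := by
    rw [Measure.addHaar_closedBall _ _ hr0.le, finrank_euclideanSpace_fin]
  have h2 : eLpNorm b 1 volume ≤ ENNReal.ofReal (r ^ ((n:ℝ) * (1/2 - 1/p)))
      * (ENNReal.ofReal (r ^ n) * volume (Metric.ball (0:En n) 1)) ^ ((1:ℝ)/2) := by
    rw [← hball]
    exact h1.trans (mul_le_mul_left hb2 _)
  have hne : ENNReal.ofReal (r ^ ((n:ℝ) * (1/2 - 1/p)))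
      * (ENNReal.ofReal (r ^ n) * volume (Metric.ball (0:En n) 1)) ^ ((1:ℝ)/2) ≠ ∞ := by
    apply ENNReal.mul_ne_top ENNReal.ofReal_ne_top
    exact (ENNReal.rpow_ne_top_of_nonneg (by norm_num)
      (ENNReal.mul_ne_top ENNReal.ofReal_ne_top hVbne))
  have hL1' : ENNReal.ofReal (∫ v, ‖b v‖) = eLpNorm b 1 volume := by
    rw [eLpNorm_one_eq_lintegral_enorm, ofReal_integral_norm_eq_lintegral_enorm hbInt]
  have hle : ∫ v, ‖b v‖ ≤ (ENNReal.ofReal (r ^ ((n:ℝ) * (1/2 - 1/p)))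
      * (ENNReal.ofReal (r ^ n) * volume (Metric.ball (0:En n) 1)) ^ ((1:ℝ)/2)).toReal := by
    rw [← ENNReal.ofReal_le_iff_le_toReal hne, hL1']
    exact h2
  refine hle.trans (le_of_eq ?_)
  rw [ENNReal.toReal_mul, ← ENNReal.toReal_rpow, ENNReal.toReal_mul,
    ENNReal.toReal_ofReal (by positivity), ENNReal.toReal_ofReal (by positivity)]
  rw [Real.mul_rpow (by positivity) hVb0, ← Real.rpow_natCast r n, ← Real.rpow_mul hr0.le]
  rw [show r ^ ((n:ℝ) * (1/2 - 1/p)) * (r ^ ((n:ℝ) * (1/2)) * Vb ^ ((1:ℝ)/2))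
      = Vb ^ ((1:ℝ)/2) * (r ^ ((n:ℝ) * (1/2 - 1/p)) * r ^ ((n:ℝ) * (1/2))) by ring,
    ← Real.rpow_add hr0]
  congr 1
  ring

lemma fact_bound (M : ℕ) (hM : 0 < M) :
    (M.succ : ℝ) * ((M.factorial : ℝ) * M)⁻¹ ≤ 2 := by
  have h2 : (1:ℝ) ≤ M := by exact_mod_cast hM
  have h3 : (1:ℝ) ≤ M.factorial := by exact_mod_cast M.factorial_pos
  have h1 : (M:ℝ) ≤ (M.factorial:ℝ) * M := by nlinarith
  have hinv : ((M.factorial:ℝ) * M)⁻¹ ≤ (M:ℝ)⁻¹ :=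
    inv_anti₀ (by linarith) h1
  have h4 : (M.succ : ℝ) * ((M.factorial : ℝ) * M)⁻¹ ≤ (M.succ : ℝ) * (M:ℝ)⁻¹ :=
    mul_le_mul_of_nonneg_left hinv (by positivity)
  refine h4.trans ?_
  have hM0 : (M:ℝ) ≠ 0 := by linarith
  rw [Nat.cast_succ, add_mul, one_mul, mul_inv_cancel₀ hM0]
  have h5 : (M:ℝ)⁻¹ ≤ 1 := inv_le_one_of_one_le₀ h2
  linarith

end S17aux

/-- Derivative bounds for the Fourier transform of an `h^p`-atom `b`
supported in `B_r(0)`, `r < 1`: for `r|ξ| ≤ 1`,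
`|∂_ξ^α b̂(ξ)| ≤ C |ξ|^{N_p−|α|} r^{N_p − n(1/p−1)}` with `N_p = ⌊n(1/p−1)⌋ + 1`. -/
theorem statement17 (n : ℕ) (p : ℝ) (hp₀ : 0 < p) (hp₁ : p ≤ 1) :
    ∃ C : ℝ, 0 < C ∧ ∀ r : ℝ, 0 < r → r < 1 → ∀ b : En n → ℂ,
      MemLp b 2 volume →
      (∀ x : En n, x ∉ Metric.closedBall (0 : En n) r → b x = 0) →
      eLpNorm b 2 volume ≤ ENNReal.ofReal (r ^ ((n:ℝ) * (1/2 - 1/p))) →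
      (∀ α : Fin n → ℕ, ((∑ i, α i : ℕ) : ℝ) ≤ (n:ℝ) * (1/p - 1) →
        ∫ x : En n, (∏ i, ((x i : ℂ) ^ α i)) * b x = 0) →
      ∀ (k : ℕ) (ξ : En n), ξ ≠ 0 → r * ‖ξ‖ ≤ 1 →
        ‖iteratedFDeriv ℝ k (ftrans b) ξ‖
          ≤ C * ‖ξ‖ ^ (((⌊(n:ℝ) * (1/p - 1)⌋₊ + 1 : ℕ) : ℝ) - (k:ℝ)) *
            r ^ (((⌊(n:ℝ) * (1/p - 1)⌋₊ + 1 : ℕ) : ℝ) - (n:ℝ) * (1/p - 1)) := by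
  classical
  have hp1' : (1:ℝ) ≤ 1/p := by
    rw [le_div_iff₀ hp₀]; linarith
  have hnp : (0:ℝ) ≤ (n:ℝ) * (1/p - 1) := by
    have h0 : (0:ℝ) ≤ 1/p - 1 := by linarith
    positivity
  set cB : ℝ := (volume (Metric.ball (0:En n) 1)).toReal ^ ((1:ℝ)/2) with hcBdef
  have hcB0 : 0 ≤ cB := Real.rpow_nonneg ENNReal.toReal_nonneg _
  refine ⟨2 * cB + 1, by positivity, ?_⟩
  intro r hr0 hr1 b hb hsupp hb2 hmom k ξ hξ hrξ
  obtain ⟨s, hsdef⟩ : ∃ s : ℕ, s = ⌊(n:ℝ) * (1/p - 1)⌋₊ := ⟨_, rfl⟩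
  rw [← hsdef]
  have hsle : (s:ℝ) ≤ (n:ℝ) * (1/p - 1) := by rw [hsdef]; exact_mod_cast Nat.floor_le hnp
  have hξ0 : 0 < ‖ξ‖ := norm_pos_iff.2 hξ
  have hrinv : r ≤ ‖ξ‖⁻¹ := by
    have h := (le_div_iff₀ hξ0).2 hrξ
    rwa [one_div] at h
  have hbInt : Integrable b volume := memLp_one_iff_integrable.1
    (hb.mono_exponent_of_measure_support_ne_top hsupp
      (measure_closedBall_lt_top).ne one_le_two)
  have hbn0 : 0 ≤ ∫ v, ‖b v‖ := integral_nonneg fun v => norm_nonneg _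
  have hL1 : ∫ v, ‖b v‖ ≤ cB * r ^ ((n:ℝ) * (1 - 1/p)) :=
    S17aux.L1_bound hr0 hb hsupp hb2 hbInt
  obtain ⟨L, hLdef⟩ : ∃ L : En n →L[ℝ] En n →L[ℝ] ℝ, L = (2*π)⁻¹ • innerSL ℝ := ⟨_, rfl⟩
  have hLapp : ∀ v u : En n, L v u = (2*π)⁻¹ * ⟪v, u⟫ := by
    intro v u; rw [hLdef]; rfl
  have hInt : ∀ i : ℕ, Integrable (fun v => ‖v‖^i * ‖b v‖) volume := by
    intro i
    refine hbInt.norm.mono' ((continuous_norm.pow i).aestronglyMeasurable.mul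
      hbInt.1.norm) ?_
    filter_upwards with v
    by_cases hv : b v = 0
    · simp [hv]
    · have hm : v ∈ Metric.closedBall (0:En n) r := by
        by_contra h; exact hv (hsupp v h)
      rw [mem_closedBall_zero_iff] at hm
      rw [Real.norm_eq_abs, abs_mul, _root_.abs_of_nonneg (by positivity : (0:ℝ) ≤ ‖v‖^i),
        _root_.abs_of_nonneg (norm_nonneg _)]
      calc ‖v‖^i * ‖b v‖ ≤ 1 * ‖b v‖ := by
            refine mul_le_mul_of_nonneg_right ?_ (norm_nonneg _)
            exact pow_le_one₀ (norm_nonneg _) (hm.trans hr1.le)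
        _ = ‖b v‖ := one_mul _
  have hderiv : iteratedFDeriv ℝ k (ftrans b)
      = fun η => VectorFourier.fourierIntegral Real.fourierChar volume L.toLinearMap₁₂
          (fun v => VectorFourier.fourierPowSMulRight L b v k) η := by
    rw [S17aux.ftrans_eq L hLdef b]
    exact VectorFourier.iteratedFDeriv_fourierIntegral (E := ℂ) L (N := (⊤:ℕ∞))
      (fun i _ => hInt i) hbInt.1 (n := k) le_top
  have hLle : ‖L‖ ≤ (2*π)⁻¹ := by
    refine ContinuousLinearMap.opNorm_le_bound _ (by positivity) fun v => ?_
    refine ContinuousLinearMap.opNorm_le_bound _ (by positivity) fun u => ?_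
    rw [hLapp, Real.norm_eq_abs, abs_mul,
      _root_.abs_of_pos (by positivity : (0:ℝ) < (2*π)⁻¹), mul_assoc]
    exact mul_le_mul_of_nonneg_left (abs_real_inner_le_norm v u) (by positivity)
  have hLop : 2*π*‖L‖ ≤ 1 := by
    calc 2*π*‖L‖ ≤ 2*π*(2*π)⁻¹ := mul_le_mul_of_nonneg_left hLle (by positivity)
      _ = 1 := mul_inv_cancel₀ (by positivity)
  have hrs2 : r^(s+1) * r^((n:ℝ)*(1-1/p))
      = r ^ (((s+1 : ℕ):ℝ) - (n:ℝ)*(1/p-1)) := by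
    rw [← Real.rpow_natCast r (s+1), ← Real.rpow_add hr0]
    congr 1
    push_cast; ring
  rcases le_or_gt k s with hk | hk
  · -- cancellation case : k ≤ s
    obtain ⟨M, hMdef⟩ : ∃ M : ℕ, M = s + 1 - k := ⟨_, rfl⟩
    have hMpos : 0 < M := by omega
    have hkM : k + M = s + 1 := by omega
    have hXbd : ∀ v ∈ Metric.closedBall (0:En n) r,
        ‖-(Complex.I * (⟪v,ξ⟫:ℂ))‖ ≤ r * ‖ξ‖ := by
      intro v hv
      rw [mem_closedBall_zero_iff] at hv
      rw [norm_neg, norm_mul, Complex.norm_I, one_mul, Complex.norm_real, Real.norm_eq_abs]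
      exact le_trans (abs_real_inner_le_norm v ξ)
        (mul_le_mul_of_nonneg_right hv (norm_nonneg ξ))
    have hTm : ∀ m : Fin k → En n,
        ‖(VectorFourier.fourierIntegral Real.fourierChar volume L.toLinearMap₁₂
            (fun v => VectorFourier.fourierPowSMulRight L b v k) ξ) m‖
          ≤ (2 * (∫ v, ‖b v‖) * r^(s+1) * ‖ξ‖^M) * ∏ i, ‖m i‖ := by
      intro m
      have heq : (VectorFourier.fourierIntegral Real.fourierChar volume L.toLinearMap₁₂
            (fun v => VectorFourier.fourierPowSMulRight L b v k) ξ) m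
          = (-(2*π*Complex.I))^k * ∫ v, (((∏ i, L v (m i) : ℝ)) : ℂ)
              * Complex.exp (-(Complex.I * (⟪v,ξ⟫:ℂ))) * b v := by
        rw [fourierIntegral_continuousMultilinearMap_apply'
          (VectorFourier.integrable_fourierPowSMulRight L (hInt k) hbInt.1)]
        unfold VectorFourier.fourierIntegral
        rw [← integral_const_mul]
        congr 1; ext v
        rw [Circle.smul_def, S17aux.hchar L hLdef]
        simp only [VectorFourier.fourierPowSMulRight_apply, smul_eq_mul, Complex.real_smul]
        ring
      have hQcont : Continuous fun v : En n => (((∏ i, L v (m i) : ℝ)) : ℂ) := by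
        apply Complex.continuous_ofReal.comp
        apply continuous_finset_prod
        intro i _
        exact L.continuous₂.comp (continuous_id.prodMk continuous_const)
      have hXcont : Continuous fun v : En n => -(Complex.I * (⟪v,ξ⟫:ℂ)) :=
        ((continuous_const.mul (Complex.continuous_ofReal.comp
          (continuous_id.inner continuous_const)))).neg
      have hEcont : Continuous fun v : En n => Complex.exp (-(Complex.I * (⟪v,ξ⟫:ℂ))) :=
        Complex.continuous_exp.comp hXcont
      have hPcont : Continuous fun v : En n => ∑ j ∈ Finset.range M,
          (-(Complex.I * (⟪v,ξ⟫:ℂ)))^j / (j.factorial : ℂ) := by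
        apply continuous_finset_sum
        intro j _
        exact (hXcont.pow j).div_const _
      have hQbd : ∀ v ∈ Metric.closedBall (0:En n) r,
          ‖(((∏ i, L v (m i) : ℝ)) : ℂ)‖ ≤ ((2*π)⁻¹ * r)^k * ∏ i, ‖m i‖ := by
        intro v hv
        rw [mem_closedBall_zero_iff] at hv
        rw [Complex.norm_real, Real.norm_eq_abs, Finset.abs_prod]
        calc ∏ i, |L v (m i)| ≤ ∏ i, ((2*π)⁻¹ * r * ‖m i‖) := by
              refine Finset.prod_le_prod (fun i _ => abs_nonneg _) fun i _ => ?_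
              rw [hLapp, abs_mul, abs_of_pos (by positivity : (0:ℝ) < (2*π)⁻¹), mul_assoc]
              refine mul_le_mul_of_nonneg_left ?_ (by positivity)
              exact le_trans (abs_real_inner_le_norm _ _)
                (mul_le_mul_of_nonneg_right hv (norm_nonneg _))
          _ = ((2*π)⁻¹ * r)^k * ∏ i, ‖m i‖ := by
              rw [show (fun i => (2*π)⁻¹ * r * ‖m i‖) = fun i => ((2*π)⁻¹ * r) * ‖m i‖ from rfl,
                Finset.prod_mul_distrib, Finset.prod_const, Finset.card_univ, Fintype.card_fin]
      have hEP : ∀ v ∈ Metric.closedBall (0:En n) r,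
          ‖Complex.exp (-(Complex.I * (⟪v,ξ⟫:ℂ)))
            - ∑ j ∈ Finset.range M, (-(Complex.I * (⟪v,ξ⟫:ℂ)))^j / (j.factorial : ℂ)‖
          ≤ 2 * (r * ‖ξ‖)^M := by
        intro v hv
        have hx1 : ‖(-(Complex.I * (⟪v,ξ⟫:ℂ)))‖ ≤ 1 := by
          exact (hXbd v hv).trans hrξ
        have h := Complex.exp_bound hx1 hMpos
        calc ‖Complex.exp (-(Complex.I * (⟪v,ξ⟫:ℂ)))
              - ∑ j ∈ Finset.range M, (-(Complex.I * (⟪v,ξ⟫:ℂ)))^j / (j.factorial : ℂ)‖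
            ≤ ‖(-(Complex.I * (⟪v,ξ⟫:ℂ)))‖^M
                * ((M.succ : ℝ) * ((M.factorial : ℝ) * M)⁻¹) := by
              exact h
          _ ≤ (r * ‖ξ‖)^M * 2 := by
              refine mul_le_mul ?_ (S17aux.fact_bound M hMpos) (by positivity) (by positivity)
              refine pow_le_pow_left₀ (norm_nonneg _) ?_ M
              exact hXbd v hv
          _ = 2 * (r * ‖ξ‖)^M := by ring
      have hjzero : ∀ j ∈ Finset.range M,
          ∫ v, (∏ i, (⟪v, m i⟫ : ℂ)) * (⟪v, ξ⟫ : ℂ)^j * b v = 0 := by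
        intro j hj
        rw [Finset.mem_range] at hj
        have hkj : ((k + j : ℕ) : ℝ) ≤ (n:ℝ) * (1/p - 1) := by
          have hle' : k + j ≤ s := by omega
          calc ((k+j:ℕ):ℝ) ≤ (s:ℝ) := by exact_mod_cast hle'
            _ ≤ _ := hsle
        have h0 := S17aux.cancel_lemma hr1 hbInt hsupp hmom (k+j) hkj
          (Fin.append m (fun _ : Fin j => ξ))
        rw [← h0]
        congr 1; ext v
        congr 1
        rw [Fin.prod_univ_add]
        congr 1
        · exact Finset.prod_congr rfl fun i _ => by rw [Fin.append_left]
        · rw [Finset.prod_congr rfl fun t _ => by rw [Fin.append_right],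
            Finset.prod_const, Finset.card_univ, Fintype.card_fin]
      have hQeq : ∀ v : En n, (((∏ i, L v (m i) : ℝ)) : ℂ)
          = (((2*π)⁻¹ ^ k : ℝ) : ℂ) * ∏ i, (⟪v, m i⟫ : ℂ) := by
        intro v
        rw [show (∏ i, L v (m i)) = (2*π)⁻¹^k * ∏ i, ⟪v, m i⟫ by
          simp_rw [hLapp]
          rw [Finset.prod_mul_distrib, Finset.prod_const, Finset.card_univ, Fintype.card_fin]]
        push_cast
        ring
      have hQPzero : ∫ v, (((∏ i, L v (m i) : ℝ)) : ℂ)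
          * (∑ j ∈ Finset.range M, (-(Complex.I * (⟪v,ξ⟫:ℂ)))^j / (j.factorial : ℂ))
          * b v = 0 := by
        have hpt : ∀ v : En n, (((∏ i, L v (m i) : ℝ)) : ℂ)
            * (∑ j ∈ Finset.range M, (-(Complex.I * (⟪v,ξ⟫:ℂ)))^j / (j.factorial : ℂ)) * b v
            = ∑ j ∈ Finset.range M,
              ((((2*π)⁻¹ ^ k : ℝ) : ℂ) * ((-Complex.I)^j / (j.factorial:ℂ)))
                * ((∏ i, (⟪v, m i⟫ : ℂ)) * (⟪v, ξ⟫ : ℂ)^j * b v) := by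
          intro v
          rw [hQeq v, Finset.mul_sum, Finset.sum_mul]
          refine Finset.sum_congr rfl fun j _ => ?_
          rw [show -(Complex.I * ((⟪v, ξ⟫ : ℝ):ℂ)) = (-Complex.I) * ((⟪v, ξ⟫ : ℝ):ℂ) by ring,
            mul_pow]
          ring
        have hIj : ∀ j ∈ Finset.range M, Integrable (fun v =>
            ((((2*π)⁻¹ ^ k : ℝ) : ℂ) * ((-Complex.I)^j / (j.factorial:ℂ)))
              * ((∏ i, (⟪v, m i⟫ : ℂ)) * (⟪v, ξ⟫ : ℂ)^j * b v)) volume := by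
          intro j _
          have hbase : Integrable (fun v =>
              ((∏ i, (⟪v, m i⟫ : ℂ)) * (⟪v, ξ⟫ : ℂ)^j) * b v) volume := by
            refine S17aux.integrable_mul_bound hbInt hsupp ?_ (∏ i, ‖m i‖) ?_
            · refine Continuous.mul ?_ ?_
              · apply continuous_finset_prod
                intro i _
                exact Complex.continuous_ofReal.comp (continuous_id.inner continuous_const)
              · exact (Complex.continuous_ofReal.comp
                  (continuous_id.inner continuous_const)).pow j
            · intro v hv
              have hv' := hv
              rw [mem_closedBall_zero_iff] at hv'
              rw [norm_mul, norm_pow]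
              have h1 : ‖((⟪v, ξ⟫ : ℝ):ℂ)‖ ≤ 1 := by
                rw [Complex.norm_real, Real.norm_eq_abs]
                refine le_trans (abs_real_inner_le_norm v ξ) ?_
                exact le_trans (mul_le_mul_of_nonneg_right hv' (norm_nonneg ξ)) hrξ
              have h2 : ‖∏ i, ((⟪v, m i⟫ : ℝ):ℂ)‖ ≤ ∏ i, ‖m i‖ := by
                rw [norm_prod]
                refine Finset.prod_le_prod (fun i _ => norm_nonneg _) fun i _ => ?_
                rw [Complex.norm_real, Real.norm_eq_abs]
                refine le_trans (abs_real_inner_le_norm v (m i)) ?_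
                calc ‖v‖ * ‖m i‖ ≤ 1 * ‖m i‖ := mul_le_mul_of_nonneg_right
                      (hv'.trans hr1.le) (norm_nonneg _)
                  _ = ‖m i‖ := one_mul _
              calc ‖∏ i, ((⟪v, m i⟫ : ℝ):ℂ)‖ * ‖((⟪v, ξ⟫ : ℝ):ℂ)‖^j
                  ≤ (∏ i, ‖m i‖) * 1^j := mul_le_mul h2
                    (pow_le_pow_left₀ (norm_nonneg _) h1 j) (by positivity)
                    (Finset.prod_nonneg fun i _ => norm_nonneg _)
                _ = ∏ i, ‖m i‖ := by rw [one_pow, mul_one]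
          simpa [mul_assoc] using hbase.const_mul
            ((((2*π)⁻¹ ^ k : ℝ) : ℂ) * ((-Complex.I)^j / (j.factorial:ℂ)))
        calc ∫ v, (((∏ i, L v (m i) : ℝ)) : ℂ)
              * (∑ j ∈ Finset.range M, (-(Complex.I * (⟪v,ξ⟫:ℂ)))^j / (j.factorial : ℂ)) * b v
            = ∫ v, ∑ j ∈ Finset.range M,
              ((((2*π)⁻¹ ^ k : ℝ) : ℂ) * ((-Complex.I)^j / (j.factorial:ℂ)))
                * ((∏ i, (⟪v, m i⟫ : ℂ)) * (⟪v, ξ⟫ : ℂ)^j * b v) := by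
              congr 1; ext v; exact hpt v
          _ = ∑ j ∈ Finset.range M, ∫ v,
              ((((2*π)⁻¹ ^ k : ℝ) : ℂ) * ((-Complex.I)^j / (j.factorial:ℂ)))
                * ((∏ i, (⟪v, m i⟫ : ℂ)) * (⟪v, ξ⟫ : ℂ)^j * b v) :=
              integral_finset_sum _ hIj
          _ = 0 := by
              refine Finset.sum_eq_zero fun j hj => ?_
              rw [integral_const_mul, hjzero j hj, mul_zero]
      have hIQE : Integrable (fun v => ((((∏ i, L v (m i) : ℝ)) : ℂ)
          * Complex.exp (-(Complex.I * (⟪v,ξ⟫:ℂ)))) * b v) volume := by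
        refine S17aux.integrable_mul_bound hbInt hsupp (hQcont.mul hEcont)
          (((2*π)⁻¹ * r)^k * ∏ i, ‖m i‖) ?_
        intro v hv
        rw [norm_mul]
        have hE1 : ‖Complex.exp (-(Complex.I * (⟪v,ξ⟫:ℂ)))‖ = 1 := by
          rw [Complex.norm_exp]
          simp
        rw [hE1, mul_one]
        exact hQbd v hv
      have hIQP : Integrable (fun v => ((((∏ i, L v (m i) : ℝ)) : ℂ)
          * ∑ j ∈ Finset.range M, (-(Complex.I * (⟪v,ξ⟫:ℂ)))^j / (j.factorial : ℂ)) * b v)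
          volume := by
        refine S17aux.integrable_mul_bound hbInt hsupp (hQcont.mul hPcont)
          ((((2*π)⁻¹ * r)^k * ∏ i, ‖m i‖) * M) ?_
        intro v hv
        rw [norm_mul]
        refine mul_le_mul (hQbd v hv) ?_ (norm_nonneg _)
          (mul_nonneg (by positivity) (Finset.prod_nonneg fun i _ => norm_nonneg _))
        refine (norm_sum_le _ _).trans ?_
        have hterm : ∀ j ∈ Finset.range M,
            ‖(-(Complex.I * (⟪v,ξ⟫:ℂ)))^j / (j.factorial : ℂ)‖ ≤ 1 := by
          intro j _
          rw [norm_div, norm_pow]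
          have h1 : ‖-(Complex.I * (⟪v,ξ⟫:ℂ))‖ ≤ 1 := (hXbd v hv).trans hrξ
          have h2 : (1:ℝ) ≤ ‖((j.factorial : ℕ):ℂ)‖ := by
            rw [Complex.norm_natCast]
            exact_mod_cast j.factorial_pos
          refine div_le_one_of_le₀ ?_ (norm_nonneg _)
          exact le_trans (pow_le_one₀ (norm_nonneg _) h1) h2
        calc ∑ j ∈ Finset.range M, ‖(-(Complex.I * (⟪v,ξ⟫:ℂ)))^j / (j.factorial : ℂ)‖
            ≤ ∑ _j ∈ Finset.range M, (1:ℝ) := Finset.sum_le_sum hterm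
          _ = M := by
              rw [Finset.sum_const, Finset.card_range, nsmul_eq_mul, mul_one]
      have hsub : ∫ v, (((∏ i, L v (m i) : ℝ)) : ℂ)
            * Complex.exp (-(Complex.I * (⟪v,ξ⟫:ℂ))) * b v
          = ∫ v, ((((∏ i, L v (m i) : ℝ)) : ℂ)
            * (Complex.exp (-(Complex.I * (⟪v,ξ⟫:ℂ)))
              - ∑ j ∈ Finset.range M, (-(Complex.I * (⟪v,ξ⟫:ℂ)))^j / (j.factorial : ℂ))) * b v := by
        have h1 : ∫ v, ((((∏ i, L v (m i) : ℝ)) : ℂ)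
            * (Complex.exp (-(Complex.I * (⟪v,ξ⟫:ℂ)))
              - ∑ j ∈ Finset.range M, (-(Complex.I * (⟪v,ξ⟫:ℂ)))^j / (j.factorial : ℂ))) * b v
            = (∫ v, ((((∏ i, L v (m i) : ℝ)) : ℂ)
                * Complex.exp (-(Complex.I * (⟪v,ξ⟫:ℂ)))) * b v)
              - ∫ v, ((((∏ i, L v (m i) : ℝ)) : ℂ)
                * ∑ j ∈ Finset.range M, (-(Complex.I * (⟪v,ξ⟫:ℂ)))^j / (j.factorial : ℂ)) * b v := by
          rw [← integral_sub hIQE hIQP]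
          congr 1; ext v; ring
        have h2 : ∫ v, ((((∏ i, L v (m i) : ℝ)) : ℂ)
            * ∑ j ∈ Finset.range M, (-(Complex.I * (⟪v,ξ⟫:ℂ)))^j / (j.factorial : ℂ)) * b v = 0 := by
          exact hQPzero
        rw [h2, sub_zero] at h1
        exact h1.symm
      have hA : ‖(-(2*π*Complex.I))^k‖ = (2*π)^k := by
        rw [norm_pow]
        congr 1
        rw [norm_neg]
        simp [Complex.norm_real, abs_of_pos Real.pi_pos]
      rw [heq, norm_mul, hsub, hA]
      have hbd2 : ‖∫ v, ((((∏ i, L v (m i) : ℝ)) : ℂ)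
          * (Complex.exp (-(Complex.I * (⟪v,ξ⟫:ℂ)))
            - ∑ j ∈ Finset.range M, (-(Complex.I * (⟪v,ξ⟫:ℂ)))^j / (j.factorial : ℂ))) * b v‖
          ≤ ((((2*π)⁻¹ * r)^k * ∏ i, ‖m i‖) * (2 * (r * ‖ξ‖)^M)) * ∫ v, ‖b v‖ := by
        refine S17aux.norm_integral_mul_bound hbInt hsupp _ ?_
        intro v hv
        rw [norm_mul]
        exact mul_le_mul (hQbd v hv) (hEP v hv) (norm_nonneg _)
          (mul_nonneg (by positivity) (Finset.prod_nonneg fun i _ => norm_nonneg _))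
      calc (2*π)^k * ‖∫ v, ((((∏ i, L v (m i) : ℝ)) : ℂ)
            * (Complex.exp (-(Complex.I * (⟪v,ξ⟫:ℂ)))
              - ∑ j ∈ Finset.range M, (-(Complex.I * (⟪v,ξ⟫:ℂ)))^j / (j.factorial : ℂ))) * b v‖
          ≤ (2*π)^k * (((((2*π)⁻¹ * r)^k * ∏ i, ‖m i‖) * (2 * (r * ‖ξ‖)^M)) * ∫ v, ‖b v‖) :=
            mul_le_mul_of_nonneg_left hbd2 (by positivity)
        _ = (2 * (∫ v, ‖b v‖) * r^(s+1) * ‖ξ‖^M) * ∏ i, ‖m i‖ := by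
            rw [← hkM]
            have hπ0 : (2*π : ℝ) ≠ 0 := by positivity
            have hc : (2*π)^k * ((2*π)⁻¹ * r)^k = r^k := by
              rw [mul_pow ((2*π)⁻¹) r k, ← mul_assoc, ← mul_pow, mul_inv_cancel₀ hπ0, one_pow, one_mul]
            linear_combination (2 * (r^M * ‖ξ‖^M) * (∏ i, ‖m i‖) * ∫ v, ‖b v‖) * hc
    have hnorm : ‖iteratedFDeriv ℝ k (ftrans b) ξ‖
        ≤ 2 * (∫ v, ‖b v‖) * r^(s+1) * ‖ξ‖^M := by
      rw [hderiv]
      exact ContinuousMultilinearMap.opNorm_le_bound (by positivity) hTm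
    have hxiM : (‖ξ‖:ℝ)^M = ‖ξ‖ ^ (((s+1 : ℕ):ℝ) - (k:ℝ)) := by
      rw [← Real.rpow_natCast ‖ξ‖ M]
      congr 1
      rw [hMdef, Nat.cast_sub (by omega : k ≤ s+1)]
    calc ‖iteratedFDeriv ℝ k (ftrans b) ξ‖
        ≤ 2 * (∫ v, ‖b v‖) * r^(s+1) * ‖ξ‖^M := hnorm
      _ ≤ 2 * (cB * r ^ ((n:ℝ) * (1 - 1/p))) * r^(s+1) * ‖ξ‖^M := by gcongr
      _ = 2 * cB * ‖ξ‖^M * (r^(s+1) * r^((n:ℝ)*(1-1/p))) := by ring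
      _ = 2 * cB * ‖ξ‖ ^ (((s+1 : ℕ):ℝ) - (k:ℝ))
            * r ^ (((s+1 : ℕ):ℝ) - (n:ℝ)*(1/p-1)) := by
          rw [hxiM, hrs2, mul_assoc]
      _ ≤ (2 * cB + 1) * ‖ξ‖ ^ (((s+1 : ℕ):ℝ) - (k:ℝ))
            * r ^ (((s+1 : ℕ):ℝ) - (n:ℝ)*(1/p-1)) := by
          have h1 : (0:ℝ) ≤ ‖ξ‖ ^ (((s+1 : ℕ):ℝ) - (k:ℝ)) :=
            Real.rpow_nonneg (norm_nonneg _) _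
          have h2 : (0:ℝ) ≤ r ^ (((s+1 : ℕ):ℝ) - (n:ℝ)*(1/p-1)) :=
            Real.rpow_nonneg hr0.le _
          nlinarith [mul_nonneg h1 h2]
  · -- easy case : s < k
    have hpw : ∀ v, ‖VectorFourier.fourierPowSMulRight L b v k‖ ≤ r^k * ‖b v‖ := by
      intro v
      have h := VectorFourier.norm_fourierPowSMulRight_le L b v k
      by_cases hv : b v = 0
      · simp only [hv, norm_zero, mul_zero] at h ⊢
        exact h
      · have hm : v ∈ Metric.closedBall (0:En n) r := by
          by_contra hh; exact hv (hsupp v hh)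
        rw [mem_closedBall_zero_iff] at hm
        refine h.trans ?_
        have h1 : (2*π*‖L‖)^k ≤ 1 := pow_le_one₀ (by positivity) hLop
        calc (2*π*‖L‖)^k * ‖v‖^k * ‖b v‖ ≤ 1 * r^k * ‖b v‖ := by
              refine mul_le_mul_of_nonneg_right ?_ (norm_nonneg _)
              exact mul_le_mul h1 (pow_le_pow_left₀ (norm_nonneg _) hm k)
                (by positivity) one_pos.le
          _ = r^k * ‖b v‖ := by ring
    have hnorm : ‖iteratedFDeriv ℝ k (ftrans b) ξ‖ ≤ r^k * ∫ v, ‖b v‖ := by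
      rw [hderiv]
      refine (VectorFourier.norm_fourierIntegral_le_integral_norm _ _ _ _ _).trans ?_
      calc ∫ v, ‖VectorFourier.fourierPowSMulRight L b v k‖
          ≤ ∫ v, r^k * ‖b v‖ := integral_mono
            (VectorFourier.integrable_fourierPowSMulRight L (hInt k) hbInt.1).norm
            (hbInt.norm.const_mul _) hpw
        _ = r^k * ∫ v, ‖b v‖ := integral_const_mul _ _
    have hk1 : s + 1 ≤ k := hk
    have hpow : r^k ≤ r^(s+1) * ‖ξ‖ ^ (((s+1 : ℕ):ℝ) - (k:ℝ)) := by
      have hsplit : r^k = r^(s+1) * r^(k - (s+1)) := by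
        rw [← pow_add]; congr 1; omega
      rw [hsplit]
      refine mul_le_mul_of_nonneg_left ?_ (by positivity)
      have h1 : r^(k-(s+1)) ≤ (‖ξ‖⁻¹)^(k-(s+1)) := pow_le_pow_left₀ hr0.le hrinv _
      refine h1.trans (le_of_eq ?_)
      rw [inv_pow, ← Real.rpow_natCast ‖ξ‖ (k - (s+1)), ← Real.rpow_neg (norm_nonneg _)]
      congr 1
      rw [Nat.cast_sub hk1]
      push_cast; ring
    calc ‖iteratedFDeriv ℝ k (ftrans b) ξ‖ ≤ r^k * ∫ v, ‖b v‖ := hnorm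
      _ ≤ r^k * (cB * r ^ ((n:ℝ) * (1 - 1/p))) := by gcongr
      _ ≤ (r^(s+1) * ‖ξ‖ ^ (((s+1 : ℕ):ℝ) - (k:ℝ))) * (cB * r ^ ((n:ℝ) * (1 - 1/p))) :=
          mul_le_mul_of_nonneg_right hpow (by positivity)
      _ = cB * ‖ξ‖ ^ (((s+1 : ℕ):ℝ) - (k:ℝ)) * (r^(s+1) * r^((n:ℝ)*(1-1/p))) := by ring
      _ = cB * ‖ξ‖ ^ (((s+1 : ℕ):ℝ) - (k:ℝ)) * r ^ (((s+1 : ℕ):ℝ) - (n:ℝ)*(1/p-1)) := by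
          rw [hrs2]
      _ ≤ (2 * cB + 1) * ‖ξ‖ ^ (((s+1 : ℕ):ℝ) - (k:ℝ))
            * r ^ (((s+1 : ℕ):ℝ) - (n:ℝ)*(1/p-1)) := by
          have h1 : (0:ℝ) ≤ ‖ξ‖ ^ (((s+1 : ℕ):ℝ) - (k:ℝ)) :=
            Real.rpow_nonneg (norm_nonneg _) _
          have h2 : (0:ℝ) ≤ r ^ (((s+1 : ℕ):ℝ) - (n:ℝ)*(1/p-1)) :=
            Real.rpow_nonneg hr0.le _
          nlinarith [mul_nonneg h1 h2]

end
end

section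
/- Let φ ∈ Φ² satisfy the SND condition. Then there is a constant c > 0, depending only on n, λ and finitely many of the seminorm constants B_{N,M} of φ, such that |∇_ξφ(x,ξ) − ∇_ξφ(y,ξ)| ≥ c|x−y| for all x, y ∈ ℝ^n and all ξ ∈ ℝ^n∖{0}. -/
set_option maxHeartbeats 1000000


open MeasureTheory Complex Real Set
open scoped ENNReal RealInnerProductSpace NNReal

noncomputable section

lemma coord_abs_le_norm {n : ℕ} (w : En n) (k : Fin n) : |w k| ≤ ‖w‖ := by
  have h1 : ‖w‖ = Real.sqrt (∑ i, ‖w i‖ ^ 2) := by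
    rw [EuclideanSpace.norm_eq]
  rw [h1]
  have h2 : |w k| = Real.sqrt (‖w k‖ ^ 2) := by
    rw [Real.sqrt_sq_eq_abs, Real.norm_eq_abs, _root_.abs_abs]
  rw [h2]
  apply Real.sqrt_le_sqrt
  exact Finset.single_le_sum (f := fun i => ‖w i‖ ^ 2) (fun i _ => by positivity) (Finset.mem_univ k)

lemma norm_le_sqrt_card {n : ℕ} (w : En n) (C : ℝ) (hC : 0 ≤ C)
    (h : ∀ k, |w k| ≤ C) : ‖w‖ ≤ Real.sqrt n * C := by
  rw [EuclideanSpace.norm_eq]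
  have h1 : (∑ i, ‖w i‖ ^ 2) ≤ (n : ℝ) * C ^ 2 := by
    calc (∑ i, ‖w i‖ ^ 2) ≤ ∑ _i : Fin n, C ^ 2 := by
          apply Finset.sum_le_sum
          intro i _
          have := h i
          rw [Real.norm_eq_abs]
          nlinarith [_root_.abs_nonneg (w i)]
      _ = (n : ℝ) * C ^ 2 := by simp [Finset.sum_const]
  calc Real.sqrt (∑ i, ‖w i‖ ^ 2) ≤ Real.sqrt ((n:ℝ) * C ^ 2) := Real.sqrt_le_sqrt h1
    _ = Real.sqrt n * C := by
        rw [Real.sqrt_mul (by positivity), Real.sqrt_sq hC]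

/-- The constant in the lower bound for nondegenerate matrices. -/
def Dconst (n : ℕ) (b : ℝ) : ℝ := Real.sqrt n * n * (n.factorial * (max b 1) ^ n)

lemma Dconst_pos {n : ℕ} (hn : 0 < n) (b : ℝ) : 0 < Dconst n b := by
  have h1 : (0:ℝ) < Real.sqrt n := Real.sqrt_pos.mpr (by exact_mod_cast hn)
  have h2 : (0:ℝ) < n := by exact_mod_cast hn
  have h3 : (0:ℝ) < n.factorial := by exact_mod_cast n.factorial_pos
  have h4 : (0:ℝ) < max b 1 := lt_of_lt_of_le one_pos (le_max_right b 1)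
  have h5 : (0:ℝ) < (max b 1) ^ n := pow_pos h4 n
  unfold Dconst
  positivity

lemma matrix_anti {n : ℕ} (hn : 0 < n) (M : Matrix (Fin n) (Fin n) ℝ) (lam b : ℝ)
    (hlam : 0 < lam) (hdet : lam ≤ M.det) (hMb : ∀ j k, |M j k| ≤ b) (v w : En n)
    (hw : ∀ k, w k = ∑ j, M j k * v j) :
    lam / Dconst n b * ‖v‖ ≤ ‖w‖ := by
  set A := M.transpose with hA
  have hdetA : A.det = M.det := Matrix.det_transpose M
  -- w = A.mulVec v
  have hwv : (fun k => w k) = A.mulVec (fun j => v j) := by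
    funext k
    rw [hw k, Matrix.mulVec]
    simp [dotProduct, hA, Matrix.transpose_apply]
  -- cramer
  have hcram : ∀ i, M.det * v i = ∑ k, A.adjugate i k * w k := by
    intro i
    have h1 : A.adjugate.mulVec (A.mulVec (fun j => v j)) = A.det • (fun j => v j) := by
      rw [Matrix.mulVec_mulVec, Matrix.adjugate_mul, Matrix.smul_mulVec, Matrix.one_mulVec]
    have h2 := congrFun h1 i
    rw [hdetA] at h2
    calc M.det * v i = (M.det • (fun j => v j)) i := by simp
      _ = A.adjugate.mulVec (A.mulVec (fun j => v j)) i := h2.symm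
      _ = ∑ k, A.adjugate i k * w k := by
          rw [← hwv, Matrix.mulVec]
          simp [dotProduct]
  -- adjugate entries bounded
  have hadj : ∀ i k, |A.adjugate i k| ≤ n.factorial * (max b 1) ^ n := by
    intro i k
    rw [Matrix.adjugate_apply]
    have hent : ∀ r c, |(A.updateRow k (Pi.single i 1)) r c| ≤ max b 1 := by
      intro r c
      rcases eq_or_ne r k with h | h
      · rw [h, Matrix.updateRow_self]
        rcases eq_or_ne c i with h2 | h2
        · rw [h2, Pi.single_eq_same]; simp
        · rw [Pi.single_eq_of_ne h2]; simp
      · rw [Matrix.updateRow_ne h]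
        exact le_trans (hMb c r) (le_max_left b 1)
    have := Matrix.det_le (abv := (AbsoluteValue.abs : AbsoluteValue ℝ ℝ)) hent
    simpa [Fintype.card_fin, nsmul_eq_mul] using this
  -- bound each |v i|
  have hdet0 : 0 < M.det := lt_of_lt_of_le hlam hdet
  have hvi : ∀ i, |v i| ≤ (n.factorial * (max b 1) ^ n) * n / lam * ‖w‖ := by
    intro i
    have h1 : M.det * |v i| ≤ (n.factorial * (max b 1) ^ n) * (n * ‖w‖) := by
      calc M.det * |v i| = |M.det * v i| := by
            rw [_root_.abs_mul, _root_.abs_of_pos hdet0]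
        _ = |∑ k, A.adjugate i k * w k| := by rw [hcram i]
        _ ≤ ∑ k, |A.adjugate i k * w k| := Finset.abs_sum_le_sum_abs _ _
        _ ≤ ∑ _k : Fin n, (n.factorial * (max b 1) ^ n) * ‖w‖ := by
            apply Finset.sum_le_sum
            intro k _
            rw [_root_.abs_mul]
            exact mul_le_mul (hadj i k) (coord_abs_le_norm w k) (_root_.abs_nonneg _)
              (by positivity)
        _ = (n.factorial * (max b 1) ^ n) * (n * ‖w‖) := by
            rw [Finset.sum_const, Finset.card_univ, Fintype.card_fin, nsmul_eq_mul]; ring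
    have h2' : lam * |v i| ≤ M.det * |v i| := mul_le_mul_of_nonneg_right hdet (_root_.abs_nonneg _)
    rw [div_mul_eq_mul_div, le_div_iff₀ hlam]
    calc |v i| * lam = lam * |v i| := by ring
      _ ≤ (n.factorial * (max b 1) ^ n) * (n * ‖w‖) := le_trans h2' h1
      _ = n.factorial * (max b 1) ^ n * n * ‖w‖ := by ring
  -- norm bound
  have hvnorm : ‖v‖ ≤ Real.sqrt n * ((n.factorial * (max b 1) ^ n) * n / lam * ‖w‖) := by
    apply norm_le_sqrt_card v _ (by positivity) hvi
  rw [div_mul_eq_mul_div, div_le_iff₀ (Dconst_pos hn b)]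
  unfold Dconst
  calc lam * ‖v‖ ≤ lam * (Real.sqrt n * ((n.factorial * (max b 1) ^ n) * n / lam * ‖w‖)) :=
        mul_le_mul_of_nonneg_left hvnorm hlam.le
    _ = ‖w‖ * (Real.sqrt n * n * (n.factorial * (max b 1) ^ n)) := by
        field_simp



section PartC
variable {n : ℕ}

lemma partC_uniq (F : En n → En n) (μ r₀ : ℝ) (hμ : 0 < μ)
    (ha : ∀ x y z : En n, ‖y - x‖ ≤ r₀ → ‖z - x‖ ≤ r₀ → μ * ‖y - z‖ ≤ ‖F y - F z‖) :
    ∀ x y z : En n, ‖y - x‖ ≤ r₀ → ‖z - x‖ ≤ r₀ → F y = F z → y = z := by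
  intro x y z h1 h2 h3
  have := ha x y z h1 h2
  rw [h3, sub_self, norm_zero] at this
  have hn : ‖y - z‖ ≤ 0 := by nlinarith [norm_nonneg (y - z)]
  have : y - z = 0 := by
    have := norm_nonneg (y - z)
    have : ‖y - z‖ = 0 := le_antisymm hn this
    exact norm_eq_zero.mp this
  exact sub_eq_zero.mp this

end PartC

section Inj
variable {F : En n → En n} {μ r₀ L : ℝ}

lemma partC_inj (hμ : 0 < μ) (hr : 0 < r₀) (hL0 : 0 ≤ L)
    (hFlip : ∀ x y : En n, ‖F x - F y‖ ≤ L * ‖x - y‖)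
    (ha : ∀ x y z : En n, ‖y - x‖ ≤ r₀ → ‖z - x‖ ≤ r₀ → μ * ‖y - z‖ ≤ ‖F y - F z‖)
    (hb : ∀ (x : En n) (q : En n), ‖q - F x‖ ≤ μ * r₀ → ∃ y, ‖y - x‖ ≤ r₀ ∧ F y = q)
    {a b : En n} (hab : F a = F b) : a = b := by
  have huniq := partC_uniq F μ r₀ hμ ha
  -- choose m
  obtain ⟨m, hm⟩ := exists_nat_gt (max (4 * L * ‖b - a‖ / (μ * r₀)) (4 * ‖b - a‖ / r₀) + 1)
  have hm0 : (0:ℝ) < m := by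
    have h1 : (0:ℝ) ≤ 4 * L * ‖b - a‖ / (μ * r₀) := by positivity
    have h2 : (0:ℝ) ≤ 4 * ‖b - a‖ / r₀ := by positivity
    have := le_max_left (4 * L * ‖b - a‖ / (μ * r₀)) (4 * ‖b - a‖ / r₀)
    linarith
  have hmR : (0:ℝ) < (m:ℝ) := hm0
  have hkey1 : L * ‖b - a‖ / m ≤ μ * r₀ / 4 := by
    rw [div_le_iff₀ hmR]
    have h1 : 4 * L * ‖b - a‖ / (μ * r₀) ≤ (m:ℝ) := by
      have := le_max_left (4 * L * ‖b - a‖ / (μ * r₀)) (4 * ‖b - a‖ / r₀)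
      linarith
    rw [div_le_iff₀ (by positivity)] at h1
    nlinarith
  have hkey2 : ‖b - a‖ / m ≤ r₀ / 4 := by
    rw [div_le_iff₀ hmR]
    have h1 : 4 * ‖b - a‖ / r₀ ≤ (m:ℝ) := by
      have := le_max_right (4 * L * ‖b - a‖ / (μ * r₀)) (4 * ‖b - a‖ / r₀)
      linarith
    rw [div_le_iff₀ hr] at h1
    nlinarith
  set γ : ℕ → En n := fun j => a + ((j:ℝ)/m) • (b - a) with hγ
  set H : ℕ → ℕ → En n := fun i j => F a + ((i:ℝ)/m) • (F (γ j) - F a) with hH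
  have hγ0 : γ 0 = a := by simp [hγ]
  have hγm : γ m = b := by
    simp only [hγ, div_self (ne_of_gt hmR), one_smul]
    abel
  have hγstep : ∀ j : ℕ, ‖γ (j+1) - γ j‖ = ‖b - a‖ / m := by
    intro j
    have : γ (j+1) - γ j = ((1:ℝ)/m) • (b - a) := by
      simp only [hγ]
      rw [show ((j:ℕ)+1 : ℕ) = j+1 from rfl]
      push_cast
      rw [add_sub_add_comm, sub_self, zero_add, ← sub_smul]
      ring_nf
    rw [this, norm_smul]
    simp [_root_.abs_of_pos (by positivity : (0:ℝ) < 1/(m:ℝ)), div_eq_inv_mul, mul_comm]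
  have hγa : ∀ j : ℕ, j ≤ m → ‖γ j - a‖ ≤ ‖b - a‖ := by
    intro j hj
    have : γ j - a = ((j:ℝ)/m) • (b - a) := by simp [hγ]
    rw [this, norm_smul, Real.norm_eq_abs]
    have h1 : |((j:ℝ)/m)| ≤ 1 := by
      rw [_root_.abs_of_nonneg (by positivity)]
      rw [div_le_one hmR]
      exact_mod_cast hj
    nlinarith [norm_nonneg (b - a), _root_.abs_nonneg ((j:ℝ)/m)]
  have hH0 : ∀ j, H 0 j = F a := by intro j; simp [hH]
  have hHi0 : ∀ i, H i 0 = F a := by intro i; simp [hH, hγ0]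
  have hHim : ∀ i, H i m = F a := by intro i; simp [hH, hγm, ← hab]
  have hHm : ∀ j, H m j = F (γ j) := by
    intro j
    simp only [hH, div_self (ne_of_gt hmR), one_smul]
    abel
  have hHcol : ∀ i j : ℕ, j ≤ m → ‖H (i+1) j - H i j‖ ≤ μ * r₀ / 4 := by
    intro i j hj
    have he : H (i+1) j - H i j = ((1:ℝ)/m) • (F (γ j) - F a) := by
      simp only [hH]
      push_cast
      rw [add_sub_add_comm, sub_self, zero_add, ← sub_smul]
      ring_nf
    rw [he, norm_smul, Real.norm_eq_abs]
    have h1 : ‖F (γ j) - F a‖ ≤ L * ‖b - a‖ := by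
      calc ‖F (γ j) - F a‖ ≤ L * ‖γ j - a‖ := hFlip _ _
        _ ≤ L * ‖b - a‖ := by nlinarith [hγa j hj, norm_nonneg (γ j - a)]
    rw [_root_.abs_of_pos (by positivity : (0:ℝ) < 1/(m:ℝ))]
    calc (1/(m:ℝ)) * ‖F (γ j) - F a‖ ≤ (1/m) * (L * ‖b - a‖) := by
          exact mul_le_mul_of_nonneg_left h1 (by positivity)
      _ = L * ‖b - a‖ / m := by ring
      _ ≤ μ * r₀ / 4 := hkey1
  have hHrow : ∀ i j : ℕ, i ≤ m → ‖H i (j+1) - H i j‖ ≤ μ * r₀ / 4 := by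
    intro i j hi
    have he : H i (j+1) - H i j = ((i:ℝ)/m) • (F (γ (j+1)) - F (γ j)) := by
      simp only [hH]
      rw [add_sub_add_comm, sub_self, zero_add, ← smul_sub]
      congr 1
      abel
    rw [he, norm_smul, Real.norm_eq_abs]
    have hi1 : |((i:ℝ)/m)| ≤ 1 := by
      rw [_root_.abs_of_nonneg (by positivity), div_le_one hmR]
      exact_mod_cast hi
    have h1 : ‖F (γ (j+1)) - F (γ j)‖ ≤ L * ‖b - a‖ / m := by
      calc ‖F (γ (j+1)) - F (γ j)‖ ≤ L * ‖γ (j+1) - γ j‖ := hFlip _ _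
        _ = L * (‖b - a‖ / m) := by rw [hγstep]
        _ = L * ‖b - a‖ / m := by ring
    calc |((i:ℝ)/m)| * ‖F (γ (j+1)) - F (γ j)‖ ≤ 1 * (L * ‖b - a‖ / m) :=
          mul_le_mul hi1 h1 (norm_nonneg _) zero_le_one
      _ = L * ‖b - a‖ / m := by ring
      _ ≤ μ * r₀ / 4 := hkey1
  -- main row induction
  have main : ∀ i : ℕ, i ≤ m → ∃ x : ℕ → En n, x 0 = a ∧ x m = a ∧
      (∀ j, j ≤ m → F (x j) = H i j) ∧ (∀ j, j + 1 ≤ m → ‖x (j+1) - x j‖ ≤ r₀/4) := by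
    intro i
    induction i with
    | zero =>
      intro _
      exact ⟨fun _ => a, rfl, rfl, fun j _ => (hH0 j).symm, fun j _ => by simp; positivity⟩
    | succ i ih =>
      intro hi1
      obtain ⟨x, hx0, hxm, hxF, hxstep⟩ := ih (Nat.le_of_succ_le hi1)
      have hex : ∀ j, j ≤ m → ∃ y, ‖y - x j‖ ≤ r₀ ∧ F y = H (i+1) j := by
        intro j hj
        apply hb
        rw [hxF j hj]
        calc ‖H (i+1) j - H i j‖ ≤ μ * r₀ / 4 := hHcol i j hj
          _ ≤ μ * r₀ := by nlinarith
      set x' : ℕ → En n := fun j => if hj : j ≤ m then (hex j hj).choose else a with hx'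
      have hx'ball : ∀ j (hj : j ≤ m), ‖x' j - x j‖ ≤ r₀ := by
        intro j hj
        simp only [hx', dif_pos hj]
        exact (hex j hj).choose_spec.1
      have hx'F : ∀ j (hj : j ≤ m), F (x' j) = H (i+1) j := by
        intro j hj
        simp only [hx', dif_pos hj]
        exact (hex j hj).choose_spec.2
      have hcol : ∀ j (hj : j ≤ m), ‖x' j - x j‖ ≤ r₀ / 4 := by
        intro j hj
        have h1 := ha (x j) (x' j) (x j) (hx'ball j hj) (by simp; positivity)
        rw [hx'F j hj, hxF j hj] at h1
        have h2 := hHcol i j hj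
        have : μ * ‖x' j - x j‖ ≤ μ * r₀ / 4 := le_trans h1 h2
        nlinarith
      refine ⟨x', ?_, ?_, fun j hj => hx'F j hj, ?_⟩
      · apply huniq a (x' 0) a
        · rw [← hx0]; exact hx'ball 0 (Nat.zero_le m)
        · simp; positivity
        · rw [hx'F 0 (Nat.zero_le m), hHi0, hab, ← hab]
      · apply huniq a (x' m) a
        · rw [← hxm]; exact hx'ball m le_rfl
        · simp; positivity
        · rw [hx'F m le_rfl, hHim]
      · intro j hj
        have hj' : j ≤ m := Nat.le_of_succ_le hj
        have hball : ‖x' (j+1) - x' j‖ ≤ r₀ := by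
          calc ‖x' (j+1) - x' j‖
              ≤ ‖x' (j+1) - x (j+1)‖ + ‖x (j+1) - x j‖ + ‖x j - x' j‖ := by
                have := norm_add₃_le (a := x' (j+1) - x (j+1)) (b := x (j+1) - x j) (c := x j - x' j)
                simpa using this
            _ ≤ r₀/4 + r₀/4 + r₀/4 := by
                refine add_le_add (add_le_add (hcol (j+1) hj) (hxstep j hj)) ?_
                rw [norm_sub_rev]; exact hcol j hj'
            _ ≤ r₀ := by linarith
        have h1 := ha (x' j) (x' (j+1)) (x' j) hball (by simp; positivity)
        rw [hx'F (j+1) hj, hx'F j hj'] at h1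
        have h2 := hHrow (i+1) j hi1
        nlinarith
  obtain ⟨x, hx0, hxm, hxF, hxstep⟩ := main m le_rfl
  -- final comparison with γ
  have hfin : ∀ j : ℕ, j ≤ m → x j = γ j := by
    intro j
    induction j with
    | zero => intro _; rw [hx0, hγ0]
    | succ j ih =>
      intro hj
      have hj' : j ≤ m := Nat.le_of_succ_le hj
      apply huniq (x j) (x (j+1)) (γ (j+1))
      · calc ‖x (j+1) - x j‖ ≤ r₀/4 := hxstep j hj
          _ ≤ r₀ := by linarith
      · rw [ih hj']
        calc ‖γ (j+1) - γ j‖ = ‖b - a‖ / m := hγstep j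
          _ ≤ r₀/4 := hkey2
          _ ≤ r₀ := by linarith
      · rw [hxF (j+1) hj, hHm]
  have := hfin m le_rfl
  rw [hxm, hγm] at this
  exact this

lemma partC (hμ : 0 < μ) (hr : 0 < r₀) (hL0 : 0 ≤ L)
    (hFlip : ∀ x y : En n, ‖F x - F y‖ ≤ L * ‖x - y‖)
    (ha : ∀ x y z : En n, ‖y - x‖ ≤ r₀ → ‖z - x‖ ≤ r₀ → μ * ‖y - z‖ ≤ ‖F y - F z‖)
    (hb : ∀ (x : En n) (q : En n), ‖q - F x‖ ≤ μ * r₀ → ∃ y, ‖y - x‖ ≤ r₀ ∧ F y = q)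
    (a b : En n) : μ * ‖a - b‖ ≤ ‖F a - F b‖ := by
  have hinj : ∀ p q : En n, F p = F q → p = q := fun p q h => partC_inj hμ hr hL0 hFlip ha hb h
  set d := ‖F b - F a‖ with hd
  have hd0 : 0 ≤ d := norm_nonneg _
  obtain ⟨m, hm⟩ := exists_nat_gt (d / (μ * r₀) + 1)
  have hmR : (0:ℝ) < (m:ℝ) := by
    have : (0:ℝ) ≤ d / (μ * r₀) := by positivity
    linarith
  have hstep : d / m ≤ μ * r₀ := by
    rw [div_le_iff₀ hmR]
    have h1 : d / (μ * r₀) ≤ (m:ℝ) := by linarith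
    rw [div_le_iff₀ (by positivity)] at h1
    nlinarith
  set σ : ℕ → En n := fun j => F a + ((j:ℝ)/m) • (F b - F a) with hσ
  have hσ0 : σ 0 = F a := by simp [hσ]
  have hσm : σ m = F b := by
    simp only [hσ, div_self (ne_of_gt hmR), one_smul]; abel
  have hσstep : ∀ j : ℕ, ‖σ (j+1) - σ j‖ = d / m := by
    intro j
    have : σ (j+1) - σ j = ((1:ℝ)/m) • (F b - F a) := by
      simp only [hσ]
      push_cast
      rw [add_sub_add_comm, sub_self, zero_add, ← sub_smul]
      ring_nf
    rw [this, norm_smul, Real.norm_eq_abs, _root_.abs_of_pos (by positivity : (0:ℝ) < 1/(m:ℝ))]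
    rw [← hd]; ring
  have chain : ∀ j : ℕ, j ≤ m → ∃ y : En n, F y = σ j ∧ ‖y - a‖ ≤ (j:ℝ) * (d / (m * μ)) := by
    intro j
    induction j with
    | zero => intro _; exact ⟨a, by rw [hσ0], by simp⟩
    | succ j ih =>
      intro hj
      obtain ⟨y, hyF, hyd⟩ := ih (Nat.le_of_succ_le hj)
      obtain ⟨y', hy'b, hy'F⟩ := hb y (σ (j+1)) (by rw [hyF, hσstep j]; exact hstep)
      have h1 := ha y y' y hy'b (by simp; positivity)
      rw [hy'F, hyF, hσstep j] at h1
      have h2 : ‖y' - y‖ ≤ d / (m * μ) := by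
        rw [le_div_iff₀ (by positivity)]
        calc ‖y' - y‖ * (m * μ) = μ * ‖y' - y‖ * m := by ring
          _ ≤ (d / m) * m := by nlinarith
          _ = d := by field_simp
      refine ⟨y', hy'F, ?_⟩
      calc ‖y' - a‖ ≤ ‖y' - y‖ + ‖y - a‖ := norm_sub_le_norm_sub_add_norm_sub _ _ _
        _ ≤ d / (m * μ) + (j:ℝ) * (d / (m * μ)) := add_le_add h2 hyd
        _ = ((j:ℝ)+1) * (d / (m * μ)) := by ring
        _ = (((j+1):ℕ):ℝ) * (d / (m * μ)) := by push_cast; ring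
  obtain ⟨y, hyF, hyd⟩ := chain m le_rfl
  rw [hσm] at hyF
  have hyb : y = b := hinj y b hyF
  rw [hyb] at hyd
  have : ‖b - a‖ ≤ d / μ := by
    calc ‖b - a‖ ≤ (m:ℝ) * (d / (m * μ)) := hyd
      _ = d / μ := by field_simp
  calc μ * ‖a - b‖ = μ * ‖b - a‖ := by rw [norm_sub_rev]
    _ ≤ μ * (d / μ) := mul_le_mul_of_nonneg_left this (le_of_lt hμ)
    _ = d := by field_simp
    _ = ‖F a - F b‖ := by rw [hd, norm_sub_rev]

end Inj

section PartB
variable {n : ℕ}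

lemma partB (F : En n → En n) (F' : En n → (En n →L[ℝ] En n)) (μ K L : ℝ)
    (hμ : 0 < μ) (hK : 0 < K) (hL0 : 0 ≤ L)
    (hd : ∀ x, HasFDerivAt F (F' x) x)
    (hlip : ∀ x y : En n, ‖F' x - F' y‖ ≤ K * ‖x - y‖)
    (hanti : ∀ (x : En n) (v : En n), μ * ‖v‖ ≤ ‖F' x v‖)
    (hFlip : ∀ x y : En n, ‖F x - F y‖ ≤ L * ‖x - y‖) :
    ∀ a b : En n, (μ/2) * ‖a - b‖ ≤ ‖F a - F b‖ := by
  set r₀ : ℝ := μ / (2 * K) with hr₀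
  have hr₀pos : 0 < r₀ := by positivity
  have hKr₀ : K * r₀ = μ / 2 := by
    rw [hr₀, mul_div_assoc', mul_comm (2:ℝ) K, mul_div_mul_left _ _ hK.ne']
  -- мean value type estimate
  have hlinapprox : ∀ x y z : En n, ‖y - x‖ ≤ r₀ → ‖z - x‖ ≤ r₀ →
      ‖F y - F z - F' x (y - z)‖ ≤ (μ/2) * ‖y - z‖ := by
    intro x y z hy hz
    have hconv : Convex ℝ (Metric.closedBall x r₀) := convex_closedBall x r₀
    have hder : ∀ w ∈ Metric.closedBall x r₀,
        HasFDerivWithinAt (fun w => F w - F' x w) (F' w - F' x) (Metric.closedBall x r₀) w := by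
      intro w _
      exact ((hd w).sub ((F' x).hasFDerivAt)).hasFDerivWithinAt
    have hbound : ∀ w ∈ Metric.closedBall x r₀, ‖F' w - F' x‖ ≤ μ/2 := by
      intro w hw
      rw [Metric.mem_closedBall, dist_eq_norm] at hw
      calc ‖F' w - F' x‖ ≤ K * ‖w - x‖ := hlip w x
        _ ≤ K * r₀ := mul_le_mul_of_nonneg_left hw (le_of_lt hK)
        _ = μ/2 := hKr₀
    have hy' : y ∈ Metric.closedBall x r₀ := by rw [Metric.mem_closedBall, dist_eq_norm]; exact hy
    have hz' : z ∈ Metric.closedBall x r₀ := by rw [Metric.mem_closedBall, dist_eq_norm]; exact hz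
    have := hconv.norm_image_sub_le_of_norm_hasFDerivWithin_le hder hbound hz' hy'
    calc ‖F y - F z - F' x (y - z)‖
        = ‖(fun w => F w - F' x w) y - (fun w => F w - F' x w) z‖ := by
          simp only [map_sub]; congr 1; abel
      _ ≤ (μ/2) * ‖y - z‖ := this
  have ha : ∀ x y z : En n, ‖y - x‖ ≤ r₀ → ‖z - x‖ ≤ r₀ →
      (μ/2) * ‖y - z‖ ≤ ‖F y - F z‖ := by
    intro x y z hy hz
    have h1 := hlinapprox x y z hy hz
    have h2 := hanti x (y - z)
    have h3 : ‖F' x (y - z)‖ ≤ ‖F y - F z‖ + ‖F y - F z - F' x (y - z)‖ := by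
      calc ‖F' x (y - z)‖ = ‖(F y - F z) - (F y - F z - F' x (y - z))‖ := by
              congr 1; abel
        _ ≤ ‖F y - F z‖ + ‖F y - F z - F' x (y - z)‖ :=
              norm_sub_le (F y - F z) (F y - F z - F' x (y - z))
    linarith
  have hb : ∀ (x : En n) (q : En n), ‖q - F x‖ ≤ (μ/2) * r₀ → ∃ y, ‖y - x‖ ≤ r₀ ∧ F y = q := by
    intro x q hq
    set A := F' x with hA
    have hinj : Function.Injective A := by
      intro v w h
      have h2 := hanti x (v - w)
      rw [map_sub, h, sub_self, norm_zero] at h2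
      have : ‖v - w‖ ≤ 0 := by nlinarith [norm_nonneg (v - w)]
      have : v - w = 0 := norm_eq_zero.mp (le_antisymm this (norm_nonneg _))
      exact sub_eq_zero.mp this
    have hsurj : Function.Surjective A :=
      (LinearMap.injective_iff_surjective (f := (A : En n →ₗ[ℝ] En n))).mp hinj
    have hbnd : ∀ q : En n, ‖(hsurj q).choose‖ ≤ ((⟨μ⁻¹, by positivity⟩ : NNReal) : ℝ) * ‖q‖ := by
      intro q
      have h1 := hanti x ((hsurj q).choose)
      rw [(hsurj q).choose_spec] at h1
      have h2 : ‖(hsurj q).choose‖ ≤ μ⁻¹ * ‖q‖ := by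
        rw [← div_eq_inv_mul, le_div_iff₀ hμ]; linarith
      exact h2
    set f'symm : A.NonlinearRightInverse :=
      ⟨fun q => (hsurj q).choose, ⟨μ⁻¹, by positivity⟩, hbnd, fun q => (hsurj q).choose_spec⟩
      with hf'symm
    have hfsn : (f'symm.nnnorm : ℝ) = μ⁻¹ := rfl
    have happrox : ApproximatesLinearOn F A (Metric.closedBall x r₀) (μ/2).toNNReal := by
      intro y hy z hz
      rw [Metric.mem_closedBall, dist_eq_norm] at hy hz
      have := hlinapprox x y z hy hz
      rwa [Real.coe_toNNReal _ (by positivity)]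
    have hsurjon := happrox.surjOn_closedBall_of_nonlinearRightInverse f'symm
      (le_of_lt hr₀pos) (subset_refl _)
    have hrad : (μ/2) * r₀ ≤ (((f'symm.nnnorm : ℝ))⁻¹ - ((μ/2).toNNReal : ℝ)) * r₀ := by
      rw [hfsn, inv_inv, Real.coe_toNNReal _ (by positivity : (0:ℝ) ≤ μ/2)]
      nlinarith
    have hqmem : q ∈ Metric.closedBall (F x) ((((f'symm.nnnorm : ℝ))⁻¹ - ((μ/2).toNNReal : ℝ)) * r₀) := by
      rw [Metric.mem_closedBall, dist_eq_norm]
      exact le_trans hq hrad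
    obtain ⟨y, hy, hyq⟩ := hsurjon hqmem
    rw [Metric.mem_closedBall, dist_eq_norm] at hy
    exact ⟨y, hy, hyq⟩
  intro a b
  exact partC (by positivity) hr₀pos hL0 hFlip ha hb a b

end PartB


section PartA
variable {n : ℕ}

lemma partA_main (hn : 0 < n) (φ : En n → En n → ℝ) (B : ℕ → ℕ → ℝ) (hφ : PhiTwo φ B)
    (lam : ℝ) (hsnd : SNDCondition φ lam) (ξ : En n) (hξ : ξ ≠ 0) (x y : En n) :
    lam / Dconst n (B 1 1) / 2 * ‖x - y‖ ≤ ‖gradXi φ x ξ - gradXi φ y ξ‖ := by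
  letI : NormedAddCommGroup (En n →L[ℝ] En n →L[ℝ] ℝ) := inferInstance
  letI : NormedSpace ℝ (En n →L[ℝ] En n →L[ℝ] ℝ) := inferInstance
  obtain ⟨hhom, hsm, hbnd⟩ := hφ
  obtain ⟨hlam, hdet⟩ := hsnd
  -- the open set and smoothness
  have hU : IsOpen {q : En n × En n | q.2 ≠ 0} := by
    have : {q : En n × En n | q.2 ≠ 0} = Prod.snd ⁻¹' ({0}ᶜ) := rfl
    rw [this]
    exact (isClosed_singleton.isOpen_compl).preimage continuous_snd
  have hmem : ∀ z : En n, {q : En n × En n | q.2 ≠ 0} ∈ nhds (z, ξ) :=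
    fun z => hU.mem_nhds (by exact hξ)
  have hcd : ∀ z : En n, ContDiffAt ℝ 3 (Function.uncurry φ) (z, ξ) :=
    fun z => ((hsm.contDiffAt (hmem z)).of_le (WithTop.coe_le_coe.mpr le_top))
  set u : En n → (En n →L[ℝ] ℝ) := fun z => fderiv ℝ (fun η => φ z η) ξ with hu_def
  have hu : ContDiff ℝ 2 u := by
    rw [contDiff_iff_contDiffAt]
    intro z
    exact ContDiffAt.fderiv (f := fun z η => φ z η) (g := fun _ => ξ) (hcd z)
      contDiffAt_const (by norm_num)
  have hud : Differentiable ℝ u := hu.differentiable (by norm_num)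
  set Du : En n → (En n →L[ℝ] (En n →L[ℝ] ℝ)) := fderiv ℝ u with hDu_def
  have hDu : ∀ z, HasFDerivAt u (Du z) z := fun z => (hud z).hasFDerivAt
  have hDu1 : ContDiff ℝ 1 Du := hu.fderiv_right (by norm_num)
  have hDud : Differentiable ℝ Du := hDu1.differentiable (by norm_num)
  -- identify the inner iterated derivative with u
  have hgu : (fun z => iteratedFDeriv ℝ 1 (fun η => φ z η) ξ)
      = ⇑(continuousMultilinearCurryFin1 ℝ (En n) ℝ).symm ∘ u := by
    funext z
    apply ContinuousMultilinearMap.ext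
    intro m
    rw [iteratedFDeriv_one_apply]
    simp [hu_def]
  have hmix1 : ∀ (M : ℕ) (z : En n), mixedDerivNorm φ 1 M z ξ = ‖iteratedFDeriv ℝ M u z‖ := by
    intro M z
    unfold mixedDerivNorm
    rw [hgu]
    exact (continuousMultilinearCurryFin1 ℝ (En n) ℝ).symm.norm_iteratedFDeriv_comp_left u z M
  -- norm identities
  have e1 : ∀ z : En n, ‖Du z‖ = ‖iteratedFDeriv ℝ 1 u z‖ := by
    intro z
    have h := norm_iteratedFDeriv_fderiv (𝕜 := ℝ) (f := u) (x := z) (n := 0)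
    rw [norm_iteratedFDeriv_zero] at h
    exact h
  have e2 : ∀ z : En n, ‖fderiv ℝ Du z‖ = ‖iteratedFDeriv ℝ 2 u z‖ := by
    intro z
    have h := norm_iteratedFDeriv_fderiv (𝕜 := ℝ) (f := u) (x := z) (n := 1)
    have h0 := norm_iteratedFDeriv_fderiv (𝕜 := ℝ) (f := fderiv ℝ u) (x := z) (n := 0)
    rw [norm_iteratedFDeriv_zero] at h0
    rw [hDu_def]
    rw [h0]
    simpa using h
  -- seminorm bounds
  have hrpow : ‖ξ‖ ^ (1 - ((1:ℕ):ℝ)) = 1 := by norm_num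
  have hB11 : ∀ z : En n, ‖Du z‖ ≤ B 1 1 := by
    intro z
    have h := hbnd 1 1 (by norm_num) z ξ hξ
    rw [hrpow, mul_one] at h
    rw [e1 z, ← hmix1 1 z]
    exact h
  have hB12 : ∀ z : En n, ‖fderiv ℝ Du z‖ ≤ B 1 2 := by
    intro z
    have h := hbnd 1 2 (by norm_num) z ξ hξ
    rw [hrpow, mul_one] at h
    rw [e2 z, ← hmix1 2 z]
    exact h
  have hB11nn : 0 ≤ B 1 1 := le_trans (norm_nonneg (Du 0)) (hB11 0)
  have hB12nn : 0 ≤ B 1 2 := le_trans (norm_nonneg (fderiv ℝ Du 0)) (hB12 0)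
  -- Lipschitz bounds via the mean value inequality
  have hlipDu : ∀ p q : En n, ‖Du p - Du q‖ ≤ B 1 2 * ‖p - q‖ := by
    intro p q
    have h := convex_univ.norm_image_sub_le_of_norm_hasFDerivWithin_le
      (f := Du) (f' := fun w => fderiv ℝ Du w)
      (fun w _ => (hDud w).hasFDerivAt.hasFDerivWithinAt)
      (fun w _ => hB12 w) (Set.mem_univ q) (Set.mem_univ p)
    exact h
  have hlipu : ∀ p q : En n, ‖u p - u q‖ ≤ B 1 1 * ‖p - q‖ := by
    intro p q
    have h := convex_univ.norm_image_sub_le_of_norm_hasFDerivWithin_le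
      (f := u) (f' := fun w => Du w)
      (fun w _ => (hDu w).hasFDerivWithinAt)
      (fun w _ => hB11 w) (Set.mem_univ q) (Set.mem_univ p)
    exact h
  -- the Riesz identification
  set J : StrongDual ℝ (En n) →L[ℝ] En n :=
    (InnerProductSpace.toDual ℝ (En n)).symm.toLinearIsometry.toContinuousLinearMap with hJdef
  have hJ : ∀ f : StrongDual ℝ (En n), J f = (InnerProductSpace.toDual ℝ (En n)).symm f :=
    fun _ => rfl
  have hJnorm : ∀ f : StrongDual ℝ (En n), ‖J f‖ = ‖f‖ := by
    intro f
    rw [hJ]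
    exact LinearIsometryEquiv.norm_map _ f
  have hJcomp : ∀ T : En n →L[ℝ] StrongDual ℝ (En n), ‖J.comp T‖ = ‖T‖ := by
    intro T
    apply le_antisymm
    · apply ContinuousLinearMap.opNorm_le_bound _ (norm_nonneg T)
      intro v
      rw [ContinuousLinearMap.comp_apply, hJnorm]
      exact T.le_opNorm v
    · apply ContinuousLinearMap.opNorm_le_bound _ (norm_nonneg _)
      intro v
      rw [← hJnorm (T v)]
      exact (J.comp T).le_opNorm v
  set F : En n → En n := fun z => gradXi φ z ξ with hFdef
  have hF : ∀ z, F z = J (u z) := fun z => rfl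
  set F' : En n → (En n →L[ℝ] En n) := fun z => J.comp (Du z) with hF'def
  have hFd : ∀ z, HasFDerivAt F (F' z) z := by
    intro z
    exact J.hasFDerivAt.comp z (hDu z)
  have hlipF' : ∀ p q : En n, ‖F' p - F' q‖ ≤ (B 1 2 + 1) * ‖p - q‖ := by
    intro p q
    have hc : F' p - F' q = J.comp (Du p - Du q) := by
      ext v
      simp [hF'def]
    rw [hc, hJcomp]
    have := hlipDu p q
    nlinarith [norm_nonneg (p - q)]
  have hFlip : ∀ p q : En n, ‖F p - F q‖ ≤ (B 1 1 + 1) * ‖p - q‖ := by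
    intro p q
    have hc : F p - F q = J (u p - u q) := by rw [hF p, hF q, map_sub]
    rw [hc, hJnorm]
    have := hlipu p q
    nlinarith [norm_nonneg (p - q)]
  -- the anti-Lipschitz bound for F'
  have hanti : ∀ (z v : En n), lam / Dconst n (B 1 1) * ‖v‖ ≤ ‖F' z v‖ := by
    intro z v
    set M := sndMatrix φ z ξ with hM
    have hshape : ∀ j k : Fin n, M j k
        = Du z (EuclideanSpace.single j 1) (EuclideanSpace.single k 1) := by
      intro j k
      have hMdef : M j k = fderiv ℝ
          (fun w => fderiv ℝ (fun η => φ w η) ξ (EuclideanSpace.single k 1)) z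
          (EuclideanSpace.single j 1) := rfl
      rw [hMdef]
      have hcomp := ((ContinuousLinearMap.apply ℝ ℝ (EuclideanSpace.single k 1)).hasFDerivAt.comp
        z (hDu z)).fderiv
      show fderiv ℝ ((ContinuousLinearMap.apply ℝ ℝ (EuclideanSpace.single k 1)) ∘ u) z
        (EuclideanSpace.single j 1) = _
      rw [hcomp]
      rfl
    have hdetM : lam ≤ M.det := hdet z ξ hξ
    have hMb : ∀ j k : Fin n, |M j k| ≤ B 1 1 := by
      intro j k
      rw [hshape j k, ← Real.norm_eq_abs]
      calc ‖Du z (EuclideanSpace.single j 1) (EuclideanSpace.single k 1)‖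
          ≤ ‖Du z (EuclideanSpace.single j 1)‖ * ‖EuclideanSpace.single k (1:ℝ)‖ :=
            ContinuousLinearMap.le_opNorm _ _
        _ ≤ (‖Du z‖ * ‖EuclideanSpace.single j (1:ℝ)‖) * ‖EuclideanSpace.single k (1:ℝ)‖ :=
            mul_le_mul_of_nonneg_right (ContinuousLinearMap.le_opNorm (Du z) _) (norm_nonneg _)
        _ = ‖Du z‖ := by
            rw [EuclideanSpace.norm_single, EuclideanSpace.norm_single]
            simp
        _ ≤ B 1 1 := hB11 z
    have hw : ∀ k, (F' z v) k = ∑ j, M j k * v j := by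
      intro k
      have h0 : (F' z v) k = (Du z v) (EuclideanSpace.single k 1) := by
        have h1 : (F' z v) k = ⟪F' z v, EuclideanSpace.single k (1:ℝ)⟫ := by
          rw [EuclideanSpace.inner_single_right]
          simp
        rw [h1]
        show ⟪J (Du z v), EuclideanSpace.single k (1:ℝ)⟫ = _
        rw [hJ]
        exact InnerProductSpace.toDual_symm_apply
      rw [h0]
      have hv : v = ∑ j, v j • EuclideanSpace.single j (1:ℝ) := by
        have := (EuclideanSpace.basisFun (Fin n) ℝ).toBasis.sum_repr v
        simp only [OrthonormalBasis.coe_toBasis_repr_apply, EuclideanSpace.basisFun_repr,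
          OrthonormalBasis.coe_toBasis, EuclideanSpace.basisFun_apply] at this
        exact this.symm
      conv_lhs => rw [hv]
      rw [map_sum, ContinuousLinearMap.sum_apply]
      apply Finset.sum_congr rfl
      intro j _
      rw [_root_.map_smul, ContinuousLinearMap.smul_apply, hshape j k]
      simp [mul_comm]
    exact matrix_anti hn M lam (B 1 1) hlam hdetM hMb v (F' z v) hw
  have hμpos : 0 < lam / Dconst n (B 1 1) := div_pos hlam (Dconst_pos hn (B 1 1))
  exact partB F F' (lam / Dconst n (B 1 1)) (B 1 2 + 1) (B 1 1 + 1) hμpos (by linarith)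
    (by linarith) hFd hlipF' hanti hFlip x y

end PartA

/-- Under the SND condition,
`|∇_ξφ(x,ξ) − ∇_ξφ(y,ξ)| ≥ c|x−y|` for all `x, y` and `ξ ≠ 0`. -/
theorem statement18 (n : ℕ)
    (φ : En n → En n → ℝ) (B : ℕ → ℕ → ℝ) (hφ : PhiTwo φ B)
    (lam : ℝ) (hsnd : SNDCondition φ lam) :
    ∃ c : ℝ, 0 < c ∧ ∀ (x y ξ : En n), ξ ≠ 0 →
      c * ‖x - y‖ ≤ ‖gradXi φ x ξ - gradXi φ y ξ‖ := by
  rcases Nat.eq_zero_or_pos n with h0 | hn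
  · subst h0
    refine ⟨1, one_pos, ?_⟩
    intro x y ξ hξ
    haveI : Subsingleton (En 0) := ⟨fun a b => by ext i; exact i.elim0⟩
    exact absurd (Subsingleton.elim ξ 0) hξ
  · refine ⟨lam / Dconst n (B 1 1) / 2, ?_, ?_⟩
    · have h1 := Dconst_pos hn (B 1 1)
      have h2 := hsnd.1
      positivity
    · intro x y ξ hξ
      exact partA_main hn φ B hφ lam hsnd ξ hξ x y


end
end
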